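/- arXiv:0802.2418 — 8 statements merged into one kernel-verified Lean document; each statement's English description precedes it below -/
import Mathlib

section
/- The optimal value of LP1 is subadditive over partitions of the job set: for every subset U ⊆ J and every target L > 0, t_{LP1(U,L)} + t_{LP1(J∖U,L)} ≥ t_{LP1(J,L)}. -/
open MeasureTheory ENNReal

/-- An SUU instance: failure probabilities `q i j ∈ [0,1]` for machine `i` and job `j`,
with every job having some machine with `q i j < 1`. -/
structure SUU (J M : Type) where
  q : M → J → ℝ
  q_nonneg : ∀ i j, 0 ≤ q i j
  q_le_one : ∀ i j, q i j ≤ 1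
  exists_lt_one : ∀ j, ∃ i, q i j < 1

/-- A schedule maps the history of surviving-job sets (most recent first)
to an assignment of a set of machines to each job. -/
abbrev Schedule (J M : Type) := List (Finset J) → J → Finset M

namespace SUU

variable {J M : Type} [Fintype J] [Fintype M]

/-- The log failure `ℓ i j = -log₂ (q i j)`, valued in `ℝ≥0∞` (with `ℓ = ∞` when `q = 0`). -/
noncomputable def ell (I : SUU J M) (i : M) (j : J) : ℝ≥0∞ :=
  if I.q i j = 0 then ⊤ else ENNReal.ofReal (-Real.logb 2 (I.q i j))


/-- The optimal value `t_{LP1(J',L)}` of the integer program LP1: minimize the maximum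
machine load `t` subject to every job in `J'` receiving log mass at least `L`. -/
noncomputable def tLP1 (I : SUU J M) (J' : Finset J) (L : ℝ) : ℕ :=
  sInf {t : ℕ | ∃ x : M → J → ℕ,
    (∀ j ∈ J', ENNReal.ofReal L ≤ ∑ i : M, I.ell i j * (x i j : ℝ≥0∞)) ∧
    (∀ i : M, ∑ j : J, x i j ≤ t)}

end SUU


lemma exists_nat_mul_ge {a b : ℝ≥0∞} (ha : a ≠ 0) (hb : b ≠ ⊤) :
    ∃ n : ℕ, b ≤ a * n := by
  rcases eq_or_ne a ⊤ with h | h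
  · exact ⟨1, by simp [h, le_top]⟩
  · obtain ⟨n, hn⟩ := ENNReal.exists_nat_gt (show b / a ≠ ⊤ from
      (ENNReal.div_lt_top hb ha).ne)
    refine ⟨n, ?_⟩
    have := (ENNReal.div_le_iff_le_mul (Or.inl ha) (Or.inl h)).1 hn.le
    rwa [mul_comm] at this

lemma SUU.ell_pos {J M : Type} (I : SUU J M) {i : M} {j : J} (h : I.q i j < 1) :
    I.ell i j ≠ 0 := by
  unfold SUU.ell
  split
  · simp
  · rename_i hq
    have h0 : 0 < I.q i j := lt_of_le_of_ne (I.q_nonneg i j) (Ne.symm hq)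
    have : Real.logb 2 (I.q i j) < 0 :=
      Real.logb_neg one_lt_two h0 h
    simp only [ne_eq, ENNReal.ofReal_eq_zero, not_le]
    linarith

lemma SUU.feasible {J M : Type} [Fintype J] [Fintype M] [DecidableEq J] [DecidableEq M]
    (I : SUU J M) (S : Finset J) (L : ℝ) :
    {t : ℕ | ∃ x : M → J → ℕ,
      (∀ j ∈ S, ENNReal.ofReal L ≤ ∑ i : M, I.ell i j * (x i j : ℝ≥0∞)) ∧
      (∀ i : M, ∑ j : J, x i j ≤ t)}.Nonempty := by
  have hchoice : ∀ j : J, ∃ p : M × ℕ, ENNReal.ofReal L ≤ I.ell p.1 j * p.2 := by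
    intro j
    obtain ⟨i, hi⟩ := I.exists_lt_one j
    obtain ⟨n, hn⟩ := exists_nat_mul_ge (I.ell_pos hi) ENNReal.ofReal_ne_top
    exact ⟨(i, n), hn⟩
  choose p hp using hchoice
  refine ⟨∑ j : J, (p j).2, fun i j => if i = (p j).1 then (p j).2 else 0, ?_, ?_⟩
  · intro j _
    calc ENNReal.ofReal L ≤ I.ell (p j).1 j * ((p j).2 : ℝ≥0∞) := hp j
      _ = I.ell (p j).1 j * ((if (p j).1 = (p j).1 then (p j).2 else 0 : ℕ) : ℝ≥0∞) := by simp
      _ ≤ ∑ i : M, I.ell i j * ((if i = (p j).1 then (p j).2 else 0 : ℕ) : ℝ≥0∞) :=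
          Finset.single_le_sum (f := fun i => I.ell i j * ((if i = (p j).1 then (p j).2 else 0 : ℕ) : ℝ≥0∞)) (fun _ _ => zero_le) (Finset.mem_univ _)
  · intro i
    apply Finset.sum_le_sum
    intro j _
    simp only []
    split <;> simp

/-- The optimal value of LP1 is subadditive over partitions of the job set:
for every subset `U ⊆ J` and target `L > 0`,
`t_{LP1(U,L)} + t_{LP1(J∖U,L)} ≥ t_{LP1(J,L)}`. -/
theorem tLP1_subadditive {J M : Type} [Fintype J] [Fintype M] [DecidableEq J]
    (I : SUU J M) (U : Finset J) (L : ℝ) (hL : 0 < L) :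
    I.tLP1 Finset.univ L ≤ I.tLP1 U L + I.tLP1 (Finset.univ \ U) L := by
  classical
  obtain ⟨x, hx1, hx2⟩ := Nat.sInf_mem (I.feasible U L)
  obtain ⟨y, hy1, hy2⟩ := Nat.sInf_mem (I.feasible (Finset.univ \ U) L)
  apply Nat.sInf_le
  refine ⟨fun i j => if j ∈ U then x i j else y i j, ?_, ?_⟩
  · intro j _
    by_cases h : j ∈ U
    · simpa [h] using hx1 j h
    · simpa [h] using hy1 j (by simp [h])
  · intro i
    calc ∑ j : J, (if j ∈ U then x i j else y i j)
        ≤ ∑ j : J, (x i j + y i j) := by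
          apply Finset.sum_le_sum
          intro j _
          split <;> omega
      _ = (∑ j : J, x i j) + ∑ j : J, y i j := Finset.sum_add_distrib
      _ ≤ _ := Nat.add_le_add (hx2 i) (hy2 i)
end

section
/- Let L > 0 be real and let (D_k)_{k∈ℤ} be nonnegative reals, all but finitely many equal to zero, such that D_k = 0 for every integer k > ⌊log₂ L⌋ and Σ_{k∈ℤ} D_k·2^k ≥ L/2. Then Σ_{k∈ℤ} ⌊6·D_k⌋·2^k ≥ L. -/
lemma geom_half_lt (n : ℕ) : ∑ j ∈ Finset.range n, ((2:ℝ)⁻¹)^j < 2 := by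
  have h : ((2:ℝ)⁻¹) ≠ 1 := by norm_num
  rw [geom_sum_eq h]
  have hp : (0:ℝ) < (2:ℝ)⁻¹ ^ n := by positivity
  rw [div_lt_iff_of_neg (by norm_num : ((2:ℝ)⁻¹ - 1) < 0)]
  nlinarith

lemma sum_two_zpow_lt (s : Finset ℤ) (m : ℤ) (hs : ∀ k ∈ s, k ≤ m) :
    ∑ k ∈ s, (2:ℝ)^k < 2^(m+1) := by
  rcases s.eq_empty_or_nonempty with h | h
  · subst h; simp; positivity
  · set n : ℕ := (m - s.min' h).toNat + 1 with hn
    have hsub : s ⊆ (Finset.range n).image (fun j : ℕ => m - (j:ℤ)) := by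
      intro k hk
      simp only [Finset.mem_image, Finset.mem_range]
      refine ⟨(m - k).toNat, ?_, ?_⟩
      · have h1 : s.min' h ≤ k := s.min'_le k hk
        have h2 : k ≤ m := hs k hk
        omega
      · have h2 : k ≤ m := hs k hk
        omega
    calc ∑ k ∈ s, (2:ℝ)^k
        ≤ ∑ k ∈ (Finset.range n).image (fun j : ℕ => m - (j:ℤ)), (2:ℝ)^k := by
          apply Finset.sum_le_sum_of_subset_of_nonneg hsub
          intro i _ _; positivity
      _ = ∑ j ∈ Finset.range n, (2:ℝ)^(m - (j:ℤ)) := by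
          rw [Finset.sum_image]
          intro a _ b _ hab; have hab' : m - (a:ℤ) = m - (b:ℤ) := hab; omega
      _ = 2^m * ∑ j ∈ Finset.range n, ((2:ℝ)⁻¹)^j := by
          rw [Finset.mul_sum]
          apply Finset.sum_congr rfl
          intro j _
          rw [zpow_sub₀ (two_ne_zero), zpow_natCast]
          rw [inv_pow]
          ring
      _ < 2^m * 2 := by
          have := geom_half_lt n
          have h2 : (0:ℝ) < 2^m := by positivity
          nlinarith
      _ = 2^(m+1) := by rw [zpow_add₀ (two_ne_zero : (2:ℝ) ≠ 0)]; ring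

/-- Let `L > 0` and let `(D k)_{k ∈ ℤ}` be nonnegative reals with finite
support such that `D k = 0` for every integer `k > ⌊log₂ L⌋` and `∑ k, D k · 2^k ≥ L/2`.
Then `∑ k, ⌊6 · D k⌋ · 2^k ≥ L`. -/
theorem floor_six_rounding (L : ℝ) (hL : 0 < L) (D : ℤ → ℝ)
    (hD0 : ∀ k, 0 ≤ D k) (hfin : (Function.support D).Finite)
    (hvanish : ∀ k : ℤ, ⌊Real.logb 2 L⌋ < k → D k = 0)
    (hsum : L / 2 ≤ ∑ᶠ k : ℤ, D k * (2 : ℝ) ^ k) :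
    L ≤ ∑ᶠ k : ℤ, (⌊6 * D k⌋ : ℝ) * (2 : ℝ) ^ k := by
  set m : ℤ := ⌊Real.logb 2 L⌋ with hm
  set s : Finset ℤ := hfin.toFinset with hsdef
  have hmem : ∀ k : ℤ, k ∈ s ↔ D k ≠ 0 := by
    intro k; simp [hsdef, Function.mem_support]
  -- rewrite the finsums as finset sums
  have h1 : ∑ᶠ k : ℤ, D k * (2 : ℝ) ^ k = ∑ k ∈ s, D k * 2 ^ k := by
    apply finsum_eq_finset_sum_of_support_subset
    intro k hk
    have : D k ≠ 0 := by
      intro h0; apply hk; simp [Function.mem_support] at *; simp [h0]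
    simpa [hmem] using this
  have h2 : ∑ᶠ k : ℤ, (⌊6 * D k⌋ : ℝ) * (2 : ℝ) ^ k
      = ∑ k ∈ s, (⌊6 * D k⌋ : ℝ) * 2 ^ k := by
    apply finsum_eq_finset_sum_of_support_subset
    intro k hk
    have : D k ≠ 0 := by
      intro h0
      apply hk
      simp [Function.mem_support, h0]
    simpa [hmem] using this
  rw [h2]
  rw [h1] at hsum
  -- support bound
  have hsle : ∀ k ∈ s, k ≤ m := by
    intro k hk
    by_contra hc
    exact (hmem k).mp hk (hvanish k (by omega))
  -- 2^m ≤ L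
  have h2m : (2:ℝ)^m ≤ L := by
    have : ((2:ℝ))^(m:ℝ) ≤ (2:ℝ)^(Real.logb 2 L) := by
      apply Real.rpow_le_rpow_left_iff (by norm_num : (1:ℝ) < 2) |>.mpr
      exact Int.floor_le _
    rwa [Real.rpow_intCast, Real.rpow_logb (by norm_num) (by norm_num) hL] at this
  have hB : ∑ k ∈ s, (2:ℝ)^k < 2 * L := by
    calc ∑ k ∈ s, (2:ℝ)^k < 2^(m+1) := sum_two_zpow_lt s m hsle
      _ = 2 * 2^m := by rw [zpow_add₀ (two_ne_zero : (2:ℝ) ≠ 0)]; ring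
      _ ≤ 2 * L := by linarith
  have hlow : ∑ k ∈ s, ((6 * D k - 1) * (2:ℝ)^k) ≤ ∑ k ∈ s, (⌊6 * D k⌋ : ℝ) * 2 ^ k := by
    apply Finset.sum_le_sum
    intro k _
    have hf : 6 * D k - 1 ≤ (⌊6 * D k⌋ : ℝ) := by
      have := Int.sub_one_lt_floor (6 * D k)
      linarith
    have hp : (0:ℝ) < (2:ℝ)^k := by positivity
    nlinarith
  have hexp : ∑ k ∈ s, ((6 * D k - 1) * (2:ℝ)^k)
      = 6 * (∑ k ∈ s, D k * 2^k) - ∑ k ∈ s, (2:ℝ)^k := by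
    rw [Finset.mul_sum, ← Finset.sum_sub_distrib]
    apply Finset.sum_congr rfl
    intro k _; ring
  rw [hexp] at hlow
  linarith
end

section
/- Rounding of LP1: let ℓ'_{ij} = min(ℓ_{ij}, L). If there exist nonnegative reals x*_{ij} and t* ≥ 0 satisfying Σ_{i∈M} ℓ'_{ij} x*_{ij} ≥ L for every j ∈ J' and Σ_{j∈J'} x*_{ij} ≤ t* for every i ∈ M, then there exist nonnegative integers x̂_{ij} satisfying Σ_{i∈M} ℓ'_{ij} x̂_{ij} ≥ L for every j ∈ J' and Σ_{j∈J'} x̂_{ij} ≤ ⌈6t*⌉ for every i ∈ M. In particular a feasible integral solution to LP1(J',L) of value O(t_{LP1(J',L)}) exists. -/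
open MeasureTheory ENNReal

section Rounding
open Finset
open scoped Classical
variable {J M : Type} [Fintype J] [Fintype M]

noncomputable def frE (x : M → J → ℝ) : Finset (M × J) :=
  univ.filter fun e => Int.fract (x e.1 e.2) ≠ 0
noncomputable def frJ (x : M → J → ℝ) (j : J) : Finset M :=
  univ.filter fun i => Int.fract (x i j) ≠ 0
noncomputable def frM (J' : Finset J) (x : M → J → ℝ) (i : M) : Finset J :=
  J'.filter fun j => Int.fract (x i j) ≠ 0

noncomputable def Wj (w x : M → J → ℝ) (j : J) : ℝ := ∑ i : M, w i j * x i j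
noncomputable def Ld (J' : Finset J) (x : M → J → ℝ) (i : M) : ℝ := ∑ j ∈ J', x i j

def JINV (w : M → J → ℝ) (L : ℝ) (x : M → J → ℝ) (j : J) : Prop :=
  (3 ≤ (frJ x j).card ∧ 3*L ≤ Wj w x j) ∨
  ((frJ x j).card ≤ 2 ∧ L + ∑ i ∈ frJ x j, w i j * Int.fract (x i j) ≤ Wj w x j)

def MINV (J' : Finset J) (ts : ℝ) (x : M → J → ℝ) (i : M) : Prop :=
  (2 ≤ (frM J' x i).card ∧ Ld J' x i ≤ 3*ts) ∨
  ((frM J' x i).card ≤ 1 ∧ Ld J' x i + ∑ j ∈ frM J' x i, (1 - Int.fract (x i j)) ≤ 3*ts + 1)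

lemma mem_frE {x : M → J → ℝ} {e : M × J} : e ∈ frE x ↔ Int.fract (x e.1 e.2) ≠ 0 := by
  simp [frE]

lemma mem_frJ {x : M → J → ℝ} {i : M} {j : J} : i ∈ frJ x j ↔ Int.fract (x i j) ≠ 0 := by
  simp [frJ]

lemma mem_frM {J' : Finset J} {x : M → J → ℝ} {i : M} {j : J} :
    j ∈ frM J' x i ↔ j ∈ J' ∧ Int.fract (x i j) ≠ 0 := by simp [frM]

lemma exists_ker {R C : Type} [Fintype R] [Fintype C] (A : Matrix R C ℝ)
    (h : Fintype.card R < Fintype.card C) : ∃ v : C → ℝ, v ≠ 0 ∧ A.mulVec v = 0 := by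
  have hk : LinearMap.ker A.mulVecLin ≠ ⊥ := by
    intro hbot
    have h1 := LinearMap.finrank_range_add_finrank_ker A.mulVecLin
    rw [hbot, finrank_bot] at h1
    have h2 : Module.finrank ℝ ↥(LinearMap.range A.mulVecLin) ≤ Fintype.card R := by
      simpa [Module.finrank_pi] using (LinearMap.range A.mulVecLin).finrank_le
    simp [Module.finrank_pi] at h1
    omega
  obtain ⟨v, hv, hv0⟩ := (Submodule.ne_bot_iff _).mp hk
  exact ⟨v, hv0, by simpa [Matrix.mulVecLin_apply] using hv⟩

/-- Counting: fibres of `frE` over protected jobs. -/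
lemma count_jobs (x : M → J → ℝ) (JP : Finset J) :
    ∑ j ∈ JP, (frJ x j).card ≤ (frE x).card := by
  classical
  have : ∑ j ∈ JP, (frJ x j).card
      = ((frE x).filter (fun e => e.2 ∈ JP)).card := by
    rw [Finset.card_eq_sum_card_fiberwise (f := fun e : M × J => e.2) (s := (frE x).filter (fun e => e.2 ∈ JP)) (t := JP)
      (fun e he => (Finset.mem_filter.mp he).2)]
    apply Finset.sum_congr rfl
    intro j hj
    apply Finset.card_bij (fun i _ => (i, j))
    · intro i hi
      simp only [Finset.mem_filter, mem_frE, Finset.mem_univ, true_and]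
      exact ⟨⟨mem_frJ.mp hi, hj⟩, trivial⟩
    · intro a ha b hb hab
      simpa using congrArg Prod.fst hab
    · intro e he
      simp only [Finset.mem_filter, mem_frE, Finset.mem_univ, true_and] at he
      obtain ⟨⟨h1, h2⟩, h3⟩ := he
      subst h3
      exact ⟨e.1, mem_frJ.mpr h1, rfl⟩
  rw [this]
  exact Finset.card_le_card (Finset.filter_subset _ _)

lemma count_machines (J' : Finset J) (x : M → J → ℝ)
    (hz : ∀ i j, j ∉ J' → x i j = 0) (MP : Finset M) :
    ∑ i ∈ MP, (frM J' x i).card ≤ (frE x).card := by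
  classical
  have : ∑ i ∈ MP, (frM J' x i).card
      = ((frE x).filter (fun e => e.1 ∈ MP)).card := by
    rw [Finset.card_eq_sum_card_fiberwise (f := fun e : M × J => e.1) (s := (frE x).filter (fun e => e.1 ∈ MP)) (t := MP)
      (fun e he => (Finset.mem_filter.mp he).2)]
    apply Finset.sum_congr rfl
    intro i hi
    apply Finset.card_bij (fun j _ => (i, j))
    · intro j hjm
      simp only [Finset.mem_filter, mem_frE, Finset.mem_univ, true_and]
      exact ⟨⟨(mem_frM.mp hjm).2, hi⟩, trivial⟩
    · intro a ha b hb hab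
      simpa using congrArg Prod.snd hab
    · intro e he
      simp only [Finset.mem_filter, mem_frE, Finset.mem_univ, true_and] at he
      obtain ⟨⟨h1, h2⟩, h3⟩ := he
      subst h3
      refine ⟨e.2, mem_frM.mpr ⟨?_, h1⟩, rfl⟩
      by_contra hne
      exact h1 (by rw [hz e.1 e.2 hne, Int.fract_zero])
  rw [this]
  exact Finset.card_le_card (Finset.filter_subset _ _)

end Rounding

section Rounding2
open Finset
open scoped Classical
variable {J M : Type} [Fintype J] [Fintype M]

lemma cell_fract {r s : ℝ} (h1 : (⌊r⌋:ℝ) ≤ s) (h2 : s ≤ (⌊r⌋:ℝ)+1)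
    (hs : Int.fract s ≠ 0) : Int.fract s = Int.fract r + (s - r) := by
  have hne1 : s ≠ (⌊r⌋:ℝ) := by
    intro h; exact hs (by rw [h]; exact Int.fract_intCast _)
  have hne2 : s ≠ (⌊r⌋:ℝ)+1 := by
    intro h
    apply hs
    rw [h]
    have : ((⌊r⌋:ℝ)+1) = ((⌊r⌋+1 : ℤ) : ℝ) := by push_cast; ring
    rw [this]; exact Int.fract_intCast _
  have hfl : ⌊s⌋ = ⌊r⌋ := by
    rw [Int.floor_eq_iff]
    · exact ⟨lt_of_le_of_ne h1 (Ne.symm hne1) |>.le, lt_of_le_of_ne h2 hne2⟩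
  have e1 : Int.fract s = s - ⌊s⌋ := (Int.self_sub_floor s).symm
  have e2 : Int.fract r = r - ⌊r⌋ := (Int.self_sub_floor r).symm
  rw [e1, e2, hfl]; ring

lemma roundStep (w : M → J → ℝ) (J' : Finset J) (x : M → J → ℝ)
    (hE : (frE x).Nonempty) (hz : ∀ i j, j ∉ J' → x i j = 0) :
    ∃ x' : M → J → ℝ,
      (∀ i j, (i,j) ∉ frE x → x' i j = x i j) ∧
      (∀ i j, (i,j) ∈ frE x → (⌊x i j⌋ : ℝ) ≤ x' i j ∧ x' i j ≤ (⌊x i j⌋ : ℝ) + 1) ∧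
      (∃ e ∈ frE x, Int.fract (x' e.1 e.2) = 0) ∧
      (∀ j, 3 ≤ (frJ x j).card → Wj w x' j = Wj w x j) ∧
      (∀ i, 2 ≤ (frM J' x i).card → Ld J' x' i = Ld J' x i) := by
  classical
  set JP : Finset J := univ.filter (fun j => 3 ≤ (frJ x j).card) with hJP
  set MP : Finset M := univ.filter (fun i => 2 ≤ (frM J' x i).card) with hMP
  -- counting
  have h3J : 3 * JP.card ≤ (frE x).card := by
    calc 3 * JP.card = JP.card • 3 := by rw [smul_eq_mul, mul_comm]
    _ ≤ ∑ j ∈ JP, (frJ x j).card :=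
        Finset.card_nsmul_le_sum _ _ _ (fun j hj => (Finset.mem_filter.mp hj).2)
    _ ≤ (frE x).card := count_jobs x JP
  have h2M : 2 * MP.card ≤ (frE x).card := by
    calc 2 * MP.card = MP.card • 2 := by rw [smul_eq_mul, mul_comm]
    _ ≤ ∑ i ∈ MP, (frM J' x i).card :=
        Finset.card_nsmul_le_sum _ _ _ (fun i hi => (Finset.mem_filter.mp hi).2)
    _ ≤ (frE x).card := count_machines J' x hz MP
  have hcard : Fintype.card (↥JP ⊕ ↥MP) < Fintype.card ↥(frE x) := by
    have hpos : 0 < (frE x).card := Finset.card_pos.mpr hE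
    simp only [Fintype.card_sum, Fintype.card_coe]
    omega
  -- kernel vector
  set A : Matrix (↥JP ⊕ ↥MP) ↥(frE x) ℝ := fun r e =>
    match r with
    | Sum.inl j => if e.val.2 = j.val then w e.val.1 j.val else 0
    | Sum.inr i => if e.val.1 = i.val then 1 else 0 with hA
  obtain ⟨v, hv0, hker⟩ := exists_ker A hcard
  set V : M × J → ℝ := fun e => if h : e ∈ frE x then v ⟨e, h⟩ else 0 with hV
  have hVmem : ∀ e : ↥(frE x), V e.val = v e := by
    intro e
    rw [hV]
    simp only [e.prop, dif_pos]
  have hVnot : ∀ e, e ∉ frE x → V e = 0 := by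
    intro e he; rw [hV]; simp only [he, dif_neg, not_false_iff]
  -- generic sum conversion
  have hsum : ∀ g : M × J → ℝ, ∑ e : ↥(frE x), g e.val * v e = ∑ e : M × J, g e * V e := by
    intro g
    calc ∑ e : ↥(frE x), g e.val * v e = ∑ e : ↥(frE x), g e.val * V e.val :=
          Finset.sum_congr rfl (fun e _ => by rw [hVmem])
      _ = ∑ e ∈ frE x, g e * V e := Finset.sum_coe_sort (frE x) (fun e => g e * V e)
      _ = ∑ e : M × J, g e * V e :=
          Finset.sum_subset (Finset.subset_univ (frE x))
            (fun e _ he => by rw [hVnot e he, mul_zero])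
  -- row facts
  have hrowJ : ∀ j, 3 ≤ (frJ x j).card → ∑ i : M, w i j * V (i, j) = 0 := by
    intro j hj
    have hjJP : j ∈ JP := by rw [hJP]; simp [hj]
    have h0 : (A.mulVec v) (Sum.inl ⟨j, hjJP⟩) = 0 := by rw [hker]; rfl
    rw [Matrix.mulVec, dotProduct] at h0
    have h1 : ∑ e : ↥(frE x), (fun p : M × J => if p.2 = j then w p.1 j else 0) e.val * v e
        = ∑ e : M × J, (fun p : M × J => if p.2 = j then w p.1 j else 0) e * V e :=
      hsum (fun p : M × J => if p.2 = j then w p.1 j else 0)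
    simp only [hA] at h0
    rw [h0] at h1
    rw [Fintype.sum_prod_type] at h1
    calc ∑ i : M, w i j * V (i, j)
        = ∑ i : M, ∑ j' : J, (fun p : M × J => if p.2 = j then w p.1 j else 0) (i, j') * V (i, j') := by
          refine Finset.sum_congr rfl (fun i _ => ?_)
          simp [ite_mul]
      _ = 0 := h1.symm
  have hrowM : ∀ i, 2 ≤ (frM J' x i).card → ∑ j : J, V (i, j) = 0 := by
    intro i hi
    have hiMP : i ∈ MP := by rw [hMP]; simp [hi]
    have h0 : (A.mulVec v) (Sum.inr ⟨i, hiMP⟩) = 0 := by rw [hker]; rfl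
    rw [Matrix.mulVec, dotProduct] at h0
    have h1 : ∑ e : ↥(frE x), (fun p : M × J => if p.1 = i then 1 else 0) e.val * v e
        = ∑ e : M × J, (fun p : M × J => if p.1 = i then (1:ℝ) else 0) e * V e :=
      hsum (fun p : M × J => if p.1 = i then (1:ℝ) else 0)
    simp only [hA] at h0
    rw [h0] at h1
    rw [Fintype.sum_prod_type] at h1
    calc ∑ j : J, V (i, j)
        = ∑ i' : M, ∑ j : J, (fun p : M × J => if p.1 = i then (1:ℝ) else 0) (i', j) * V (i', j) := by
          rw [Finset.sum_comm]
          refine Finset.sum_congr rfl (fun j _ => ?_)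
          simp [ite_mul]
      _ = 0 := h1.symm
  -- the step length
  set S : Finset (M × J) := (frE x).filter (fun e => V e ≠ 0) with hS
  have hSne : S.Nonempty := by
    obtain ⟨e, he⟩ := Function.ne_iff.mp hv0
    exact ⟨e.val, Finset.mem_filter.mpr ⟨e.prop, by rw [hVmem]; simpa using he⟩⟩
  set del : M × J → ℝ := fun e =>
    if 0 < V e then ((⌊x e.1 e.2⌋ : ℝ) + 1 - x e.1 e.2) / V e
    else (x e.1 e.2 - (⌊x e.1 e.2⌋ : ℝ)) / (-V e) with hdel
  obtain ⟨m0, hm0S, hm0min⟩ := S.exists_min_image del hSne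
  set lam : ℝ := del m0 with hlam
  have hfr : ∀ e ∈ frE x, 0 < Int.fract (x e.1 e.2) ∧ Int.fract (x e.1 e.2) < 1 := by
    intro e he
    exact ⟨lt_of_le_of_ne (Int.fract_nonneg _) (Ne.symm (mem_frE.mp he)), Int.fract_lt_one _⟩
  have hnum1 : ∀ e ∈ frE x, 0 < (⌊x e.1 e.2⌋ : ℝ) + 1 - x e.1 e.2 := by
    intro e he
    have h := (hfr e he).2
    have : x e.1 e.2 - (⌊x e.1 e.2⌋ : ℝ) = Int.fract (x e.1 e.2) := Int.self_sub_floor _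
    linarith [this ▸ h]
  have hnum2 : ∀ e ∈ frE x, 0 < x e.1 e.2 - (⌊x e.1 e.2⌋ : ℝ) := by
    intro e he
    have h := (hfr e he).1
    have : x e.1 e.2 - (⌊x e.1 e.2⌋ : ℝ) = Int.fract (x e.1 e.2) := Int.self_sub_floor _
    linarith [this ▸ h]
  have hdelpos : ∀ e ∈ S, 0 < del e := by
    intro e he
    obtain ⟨heE, heV⟩ := Finset.mem_filter.mp he
    rw [hdel]
    by_cases h : 0 < V e
    · simp only [h, if_pos]
      exact div_pos (hnum1 e heE) h
    · simp only [h, if_neg, not_false_iff]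
      have hVneg : V e < 0 := lt_of_le_of_ne (not_lt.mp h) heV
      exact div_pos (hnum2 e heE) (by linarith)
  have hlampos : 0 < lam := hdelpos m0 hm0S
  -- the new point
  refine ⟨fun i j => x i j + lam * V (i, j), ?_, ?_, ?_, ?_, ?_⟩
  · intro i j hij
    dsimp only
    rw [hVnot _ hij, mul_zero, add_zero]
  · intro i j hij
    dsimp only
    by_cases h0 : V (i, j) = 0
    · rw [h0, mul_zero, add_zero]
      exact ⟨Int.floor_le _, (Int.lt_floor_add_one _).le⟩
    · have heS : (i, j) ∈ S := Finset.mem_filter.mpr ⟨hij, h0⟩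
      have hmin := hm0min _ heS
      rcases lt_or_gt_of_ne h0 with hneg | hpos
      · have hd : del (i, j) = (x i j - (⌊x i j⌋ : ℝ)) / (-V (i, j)) := by
          rw [hdel]; simp [not_lt.mpr hneg.le]
        have h1 : lam * (-V (i, j)) ≤ x i j - (⌊x i j⌋ : ℝ) := by
          rw [hd] at hmin
          exact (le_div_iff₀ (by linarith)).mp hmin
        rw [mul_neg] at h1
        have h2 : 0 < lam * (-V (i, j)) := mul_pos hlampos (neg_pos.mpr hneg)
        rw [mul_neg] at h2
        constructor
        · linarith
        · linarith [hnum1 (i, j) hij]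
      · have hd : del (i, j) = ((⌊x i j⌋ : ℝ) + 1 - x i j) / V (i, j) := by
          rw [hdel]; simp [hpos]
        have h1 : lam * V (i, j) ≤ (⌊x i j⌋ : ℝ) + 1 - x i j := by
          rw [hd] at hmin
          exact (le_div_iff₀ hpos).mp hmin
        have h2 : 0 < lam * V (i, j) := mul_pos hlampos hpos
        constructor
        · linarith [hnum2 (i, j) hij]
        · linarith
  · refine ⟨m0, (Finset.mem_filter.mp hm0S).1, ?_⟩
    have h0 : V m0 ≠ 0 := (Finset.mem_filter.mp hm0S).2
    have hVm0 : V (m0.1, m0.2) = V m0 := by rw [Prod.mk.eta]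
    dsimp only
    rw [hVm0]
    rcases lt_or_gt_of_ne h0 with hneg | hpos
    · have hd : lam = (x m0.1 m0.2 - (⌊x m0.1 m0.2⌋ : ℝ)) / (-V m0) := by
        rw [hlam, hdel]; simp [not_lt.mpr hneg.le]
      have h2 : lam * (-V m0) = x m0.1 m0.2 - (⌊x m0.1 m0.2⌋ : ℝ) := by
        rw [hd]; exact div_mul_cancel₀ _ (by linarith)
      rw [mul_neg] at h2
      have hx' : x m0.1 m0.2 + lam * V m0 = ((⌊x m0.1 m0.2⌋ : ℤ) : ℝ) := by
        push_cast; linarith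
      rw [hx']
      exact Int.fract_intCast _
    · have hd : lam = ((⌊x m0.1 m0.2⌋ : ℝ) + 1 - x m0.1 m0.2) / V m0 := by
        rw [hlam, hdel]; simp [hpos]
      have h2 : lam * V m0 = (⌊x m0.1 m0.2⌋ : ℝ) + 1 - x m0.1 m0.2 := by
        rw [hd]; exact div_mul_cancel₀ _ (by linarith)
      have hx' : x m0.1 m0.2 + lam * V m0 = ((⌊x m0.1 m0.2⌋ + 1 : ℤ) : ℝ) := by
        push_cast; linarith
      rw [hx']
      exact Int.fract_intCast _
  · intro j hj
    rw [Wj, Wj]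
    have heq : ∑ i : M, w i j * (x i j + lam * V (i, j))
        = ∑ i : M, w i j * x i j + lam * ∑ i : M, w i j * V (i, j) := by
      rw [Finset.mul_sum, ← Finset.sum_add_distrib]
      refine Finset.sum_congr rfl (fun i _ => by ring)
    rw [heq, hrowJ j hj, mul_zero, add_zero]
  · intro i hi
    rw [Ld, Ld]
    have hfull : ∑ j ∈ J', V (i, j) = ∑ j : J, V (i, j) := by
      refine Finset.sum_subset (Finset.subset_univ J') (fun j _ hj => ?_)
      refine hVnot _ (fun hmem => ?_)
      exact (mem_frE.mp hmem) (by rw [hz i j hj, Int.fract_zero])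
    have heq : ∑ j ∈ J', (x i j + lam * V (i, j))
        = ∑ j ∈ J', x i j + lam * ∑ j ∈ J', V (i, j) := by
      rw [Finset.mul_sum, ← Finset.sum_add_distrib]
    rw [heq, hfull, hrowM i hi, mul_zero, add_zero]

lemma roundAll (w : M → J → ℝ) (J' : Finset J) (L ts : ℝ)
    (hw0 : ∀ i j, 0 ≤ w i j) (hwL : ∀ i j, w i j ≤ L) (hL : 0 < L) :
    ∀ n (x : M → J → ℝ), (frE x).card = n →
    (∀ i j, 0 ≤ x i j) → (∀ i j, j ∉ J' → x i j = 0) →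
    (∀ j ∈ J', JINV w L x j) → (∀ i, MINV J' ts x i) →
    ∃ y : M → J → ℝ, (∀ i j, Int.fract (y i j) = 0) ∧ (∀ i j, 0 ≤ y i j) ∧
      (∀ j ∈ J', JINV w L y j) ∧ (∀ i, MINV J' ts y i) := by
  intro n
  induction n using Nat.strong_induction_on with
  | _ n ih =>
    intro x hcard hx0 hz hJ hM
    by_cases hE : (frE x).Nonempty
    · obtain ⟨x', hunch, hcell, ⟨e0, he0E, he0int⟩, hWeq, hLdeq⟩ := roundStep w J' x hE hz
      have hsub : frE x' ⊆ frE x := by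
        intro e he
        rw [mem_frE] at he ⊢
        by_contra h
        have h0 : Int.fract (x e.1 e.2) = 0 := h
        have hnot : (e.1, e.2) ∉ frE x := fun hm => (mem_frE.mp hm) h0
        rw [hunch e.1 e.2 hnot] at he
        exact he h0
      have hss : frE x' ⊂ frE x := (Finset.ssubset_iff_of_subset hsub).mpr
        ⟨e0, he0E, fun hc => (mem_frE.mp hc) he0int⟩
      have hcard' : (frE x').card < n := hcard ▸ Finset.card_lt_card hss
      have hfrJsub : ∀ j, frJ x' j ⊆ frJ x j := by
        intro j i hi
        rw [mem_frJ] at hi ⊢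
        by_contra h
        have h0 : Int.fract (x i j) = 0 := h
        have hnot : (i, j) ∉ frE x := fun hm => (mem_frE.mp hm) h0
        rw [hunch i j hnot] at hi
        exact hi h0
      have hfrMsub : ∀ i, frM J' x' i ⊆ frM J' x i := by
        intro i j hj
        rw [mem_frM] at hj ⊢
        refine ⟨hj.1, ?_⟩
        by_contra h
        have h0 : Int.fract (x i j) = 0 := h
        have hnot : (i, j) ∉ frE x := fun hm => (mem_frE.mp hm) h0
        rw [hunch i j hnot] at hj
        exact hj.2 h0
      have hx'0 : ∀ i j, 0 ≤ x' i j := by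
        intro i j
        by_cases hm : (i, j) ∈ frE x
        · refine le_trans ?_ (hcell i j hm).1
          exact_mod_cast Int.floor_nonneg.mpr (hx0 i j)
        · rw [hunch i j hm]; exact hx0 i j
      have hz' : ∀ i j, j ∉ J' → x' i j = 0 := by
        intro i j hj
        have h0 : x i j = 0 := hz i j hj
        have : (i, j) ∉ frE x := fun hm => (mem_frE.mp hm) (by rw [h0, Int.fract_zero])
        rw [hunch i j this, h0]
      -- job invariant
      have hJ' : ∀ j ∈ J', JINV w L x' j := by
        intro j hjJ'
        have hbA : ∀ i ∈ frJ x j, (i, j) ∈ frE x := fun i hi => mem_frE.mpr (mem_frJ.mp hi)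
        have hsmall : ∀ (B : Finset M), B.card ≤ 2 →
            ∑ i ∈ B, w i j * Int.fract (x' i j) ≤ 2 * L := by
          intro B hB
          calc ∑ i ∈ B, w i j * Int.fract (x' i j) ≤ B.card • L := by
                refine Finset.sum_le_card_nsmul _ _ _ (fun i _ => ?_)
                calc w i j * Int.fract (x' i j) ≤ w i j * 1 := by
                      refine mul_le_mul_of_nonneg_left ?_ (hw0 i j)
                      exact (Int.fract_lt_one _).le
                  _ ≤ L := by rw [mul_one]; exact hwL i j
            _ ≤ 2 * L := by
                rw [nsmul_eq_mul]
                have : (B.card : ℝ) ≤ 2 := by exact_mod_cast hB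
                nlinarith
        rcases hJ j hjJ' with ⟨h3, hW⟩ | ⟨h2, hW⟩
        · have hWeq' : Wj w x' j = Wj w x j := hWeq j h3
          by_cases h3' : 3 ≤ (frJ x' j).card
          · exact Or.inl ⟨h3', by rw [hWeq']; exact hW⟩
          · refine Or.inr ⟨by omega, ?_⟩
            have := hsmall (frJ x' j) (by omega)
            rw [hWeq']
            linarith
        · refine Or.inr ⟨le_trans (Finset.card_le_card (hfrJsub j)) h2, ?_⟩
          have ha : Wj w x' j = Wj w x j + ∑ i ∈ frJ x j, w i j * (x' i j - x i j) := by
            rw [Wj, Wj]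
            have h1 : ∑ i ∈ frJ x j, w i j * (x' i j - x i j)
                = ∑ i : M, w i j * (x' i j - x i j) := by
              refine Finset.sum_subset (Finset.subset_univ _) (fun i _ hi => ?_)
              have hnot : (i, j) ∉ frE x := fun hm => hi (mem_frJ.mpr (mem_frE.mp hm))
              rw [hunch i j hnot, sub_self, mul_zero]
            rw [h1, ← Finset.sum_add_distrib]
            exact Finset.sum_congr rfl (fun i _ => by ring)
          have hsurv : ∀ i ∈ frJ x' j,
              w i j * Int.fract (x' i j)
                = w i j * (Int.fract (x i j) + (x' i j - x i j)) := by
            intro i hi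
            have hiA := hfrJsub j hi
            have hc := hcell i j (hbA i hiA)
            rw [cell_fract hc.1 hc.2 (mem_frJ.mp hi)]
          have hsd := Finset.sum_sdiff (hfrJsub j)
            (f := fun i => w i j * (Int.fract (x i j) + (x' i j - x i j)))
          have hnn : 0 ≤ ∑ i ∈ frJ x j \ frJ x' j,
              w i j * (Int.fract (x i j) + (x' i j - x i j)) := by
            refine Finset.sum_nonneg (fun i hi => ?_)
            have hiA := (Finset.mem_sdiff.mp hi).1
            have hc := hcell i j (hbA i hiA)
            have hfl : Int.fract (x i j) + (x' i j - x i j) = x' i j - (⌊x i j⌋ : ℝ) := by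
              have := Int.self_sub_floor (x i j)
              linarith
            rw [hfl]
            exact mul_nonneg (hw0 i j) (by linarith [hc.1])
          have hsplit : ∑ i ∈ frJ x j, w i j * (Int.fract (x i j) + (x' i j - x i j))
              = ∑ i ∈ frJ x j, w i j * Int.fract (x i j)
                + ∑ i ∈ frJ x j, w i j * (x' i j - x i j) := by
            rw [← Finset.sum_add_distrib]
            exact Finset.sum_congr rfl (fun i _ => by ring)
          calc L + ∑ i ∈ frJ x' j, w i j * Int.fract (x' i j)
              = L + ∑ i ∈ frJ x' j, w i j * (Int.fract (x i j) + (x' i j - x i j)) := by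
                rw [Finset.sum_congr rfl hsurv]
            _ ≤ L + ∑ i ∈ frJ x j, w i j * (Int.fract (x i j) + (x' i j - x i j)) := by
                linarith [hsd, hnn]
            _ ≤ Wj w x j + ∑ i ∈ frJ x j, w i j * (x' i j - x i j) := by
                rw [hsplit]; linarith
            _ = Wj w x' j := ha.symm
      -- machine invariant
      have hM' : ∀ i, MINV J' ts x' i := by
        intro i
        have hbB : ∀ j ∈ frM J' x i, (i, j) ∈ frE x :=
          fun j hj => mem_frE.mpr (mem_frM.mp hj).2
        have hLd : Ld J' x' i = Ld J' x i + ∑ j ∈ frM J' x i, (x' i j - x i j) := by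
          rw [Ld, Ld]
          have h1 : ∑ j ∈ frM J' x i, (x' i j - x i j) = ∑ j ∈ J', (x' i j - x i j) := by
            refine Finset.sum_subset (Finset.filter_subset _ _) (fun j hjJ hj => ?_)
            have hnot : (i, j) ∉ frE x :=
              fun hm => hj (mem_frM.mpr ⟨hjJ, mem_frE.mp hm⟩)
            rw [hunch i j hnot, sub_self]
          rw [h1, ← Finset.sum_add_distrib]
          exact Finset.sum_congr rfl (fun j _ => by ring)
        have hsmall : ∀ (B : Finset J), B.card ≤ 1 →
            ∑ j ∈ B, (1 - Int.fract (x' i j)) ≤ 1 := by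
          intro B hB
          calc ∑ j ∈ B, (1 - Int.fract (x' i j)) ≤ B.card • (1:ℝ) := by
                refine Finset.sum_le_card_nsmul _ _ _ (fun j _ => ?_)
                linarith [Int.fract_nonneg (x' i j)]
            _ ≤ 1 := by
                rw [nsmul_eq_mul, mul_one]
                exact_mod_cast hB
        rcases hM i with ⟨h2, hLd0⟩ | ⟨h1c, hLd0⟩
        · have hLdeq' : Ld J' x' i = Ld J' x i := hLdeq i h2
          by_cases h2' : 2 ≤ (frM J' x' i).card
          · exact Or.inl ⟨h2', by rw [hLdeq']; exact hLd0⟩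
          · refine Or.inr ⟨by omega, ?_⟩
            have := hsmall (frM J' x' i) (by omega)
            rw [hLdeq']
            linarith
        · refine Or.inr ⟨le_trans (Finset.card_le_card (hfrMsub i)) h1c, ?_⟩
          have hsurv : ∀ j ∈ frM J' x' i,
              (1 - Int.fract (x' i j)) = (1 - Int.fract (x i j)) - (x' i j - x i j) := by
            intro j hj
            have hjB := hfrMsub i hj
            have hc := hcell i j (hbB j hjB)
            rw [cell_fract hc.1 hc.2 (mem_frM.mp hj).2]
            ring
          have hsd := Finset.sum_sdiff (hfrMsub i) (f := fun j => x' i j - x i j)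
          have hsd2 := Finset.sum_sdiff (hfrMsub i) (f := fun j => 1 - Int.fract (x i j))
          have hterm : ∑ j ∈ frM J' x i \ frM J' x' i, (x' i j - x i j)
              ≤ ∑ j ∈ frM J' x i \ frM J' x' i, (1 - Int.fract (x i j)) := by
            refine Finset.sum_le_sum (fun j hj => ?_)
            have hjB := (Finset.mem_sdiff.mp hj).1
            have hc := hcell i j (hbB j hjB)
            have := Int.self_sub_floor (x i j)
            linarith [hc.2]
          have hsurv_sum : ∑ j ∈ frM J' x' i, (1 - Int.fract (x' i j))
              = ∑ j ∈ frM J' x' i, ((1 - Int.fract (x i j)) - (x' i j - x i j)) :=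
            Finset.sum_congr rfl hsurv
          have hsplit : ∑ j ∈ frM J' x' i, ((1 - Int.fract (x i j)) - (x' i j - x i j))
              = ∑ j ∈ frM J' x' i, (1 - Int.fract (x i j))
                - ∑ j ∈ frM J' x' i, (x' i j - x i j) := by
            rw [← Finset.sum_sub_distrib]
          rw [hLd, hsurv_sum, hsplit]
          linarith
      exact ih (frE x').card hcard' x' rfl hx'0 hz' hJ' hM'
    · refine ⟨x, ?_, hx0, hJ, hM⟩
      intro i j
      by_contra h
      exact hE ⟨(i, j), mem_frE.mpr h⟩

end Rounding2


/-- **Rounding of LP1.** Let `ℓ' i j = min (ℓ i j) L`.  If nonnegative reals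
`x* i j` and `t* ≥ 0` satisfy `∑ i, ℓ' i j · x* i j ≥ L` for every `j ∈ J'` and
`∑ j ∈ J', x* i j ≤ t*` for every machine `i`, then there are nonnegative integers `x̂ i j`
with `∑ i, ℓ' i j · x̂ i j ≥ L` for every `j ∈ J'` and `∑ j ∈ J', x̂ i j ≤ ⌈6 t*⌉` for every
machine `i`. -/
theorem lp1_rounding {J M : Type} [Fintype J] [Fintype M] (I : SUU J M)
    (J' : Finset J) (L : ℝ) (hL : 0 < L)
    (xs : M → J → ℝ) (ts : ℝ) (hxs : ∀ i j, 0 ≤ xs i j) (hts : 0 ≤ ts)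
    (hwork : ∀ j ∈ J', L ≤ ∑ i : M, (I.ell i j ⊓ ENNReal.ofReal L).toReal * xs i j)
    (hload : ∀ i : M, ∑ j ∈ J', xs i j ≤ ts) :
    ∃ xh : M → J → ℕ,
      (∀ j ∈ J', L ≤ ∑ i : M, (I.ell i j ⊓ ENNReal.ofReal L).toReal * (xh i j : ℝ)) ∧
      (∀ i : M, ∑ j ∈ J', xh i j ≤ ⌈6 * ts⌉₊) := by
  classical
  by_cases hJne : J'.Nonempty
  · set w : M → J → ℝ := fun i j => (I.ell i j ⊓ ENNReal.ofReal L).toReal with hw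
    have hw0 : ∀ i j, 0 ≤ w i j := fun i j => ENNReal.toReal_nonneg
    have hwL : ∀ i j, w i j ≤ L := by
      intro i j
      rw [hw]
      calc (I.ell i j ⊓ ENNReal.ofReal L).toReal ≤ (ENNReal.ofReal L).toReal :=
            ENNReal.toReal_mono ENNReal.ofReal_ne_top inf_le_right
        _ = L := ENNReal.toReal_ofReal hL.le
    have htspos : 0 < ts := by
      obtain ⟨j0, hj0⟩ := hJne
      by_contra hts0
      push_neg at hts0
      have hzero : ∀ i, xs i j0 = 0 := by
        intro i
        have h1 : xs i j0 ≤ ∑ j ∈ J', xs i j :=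
          Finset.single_le_sum (fun j _ => hxs i j) hj0
        have h2 := hload i
        linarith [hxs i j0]
      have hwk := hwork j0 hj0
      rw [Finset.sum_congr rfl (fun i _ => by rw [hzero i, mul_zero])] at hwk
      simp at hwk
      linarith
    set x0 : M → J → ℝ := fun i j => if j ∈ J' then 3 * xs i j else 0 with hx0def
    have hx00 : ∀ i j, 0 ≤ x0 i j := by
      intro i j
      rw [hx0def]
      dsimp only
      split
      · linarith [hxs i j]
      · exact le_refl 0
    have hz0 : ∀ i j, j ∉ J' → x0 i j = 0 := by
      intro i j hj
      rw [hx0def]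
      simp [hj]
    have hsmallJ : ∀ (x' : M → J → ℝ) (j : J) (B : Finset M), B.card ≤ 2 →
        ∑ i ∈ B, w i j * Int.fract (x' i j) ≤ 2 * L := by
      intro x' j B hB
      calc ∑ i ∈ B, w i j * Int.fract (x' i j) ≤ B.card • L := by
            refine Finset.sum_le_card_nsmul _ _ _ (fun i _ => ?_)
            calc w i j * Int.fract (x' i j) ≤ w i j * 1 := by
                  refine mul_le_mul_of_nonneg_left ?_ (hw0 i j)
                  exact (Int.fract_lt_one _).le
              _ ≤ L := by rw [mul_one]; exact hwL i j
        _ ≤ 2 * L := by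
            rw [nsmul_eq_mul]
            have : (B.card : ℝ) ≤ 2 := by exact_mod_cast hB
            nlinarith
    have hJ0 : ∀ j ∈ J', JINV w L x0 j := by
      intro j hj
      have hW0 : Wj w x0 j = 3 * ∑ i : M, w i j * xs i j := by
        rw [Wj, Finset.mul_sum]
        refine Finset.sum_congr rfl (fun i _ => ?_)
        rw [hx0def]
        simp only [if_pos hj]
        ring
      have hW3 : 3 * L ≤ Wj w x0 j := by
        rw [hW0]
        have := hwork j hj
        linarith
      by_cases h3 : 3 ≤ (frJ x0 j).card
      · exact Or.inl ⟨h3, hW3⟩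
      · refine Or.inr ⟨by omega, ?_⟩
        have := hsmallJ x0 j (frJ x0 j) (by omega)
        linarith
    have hM0 : ∀ i, MINV J' ts x0 i := by
      intro i
      have hLd0 : Ld J' x0 i = 3 * ∑ j ∈ J', xs i j := by
        rw [Ld, Finset.mul_sum]
        refine Finset.sum_congr rfl (fun j hj => ?_)
        rw [hx0def]
        simp only [if_pos hj]
      have hLd3 : Ld J' x0 i ≤ 3 * ts := by
        rw [hLd0]
        have := hload i
        linarith
      by_cases h2 : 2 ≤ (frM J' x0 i).card
      · exact Or.inl ⟨h2, hLd3⟩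
      · refine Or.inr ⟨by omega, ?_⟩
        have hsm : ∑ j ∈ frM J' x0 i, (1 - Int.fract (x0 i j)) ≤ 1 := by
          calc ∑ j ∈ frM J' x0 i, (1 - Int.fract (x0 i j)) ≤ (frM J' x0 i).card • (1:ℝ) := by
                refine Finset.sum_le_card_nsmul _ _ _ (fun j _ => ?_)
                linarith [Int.fract_nonneg (x0 i j)]
            _ ≤ 1 := by
                rw [nsmul_eq_mul, mul_one]
                have : (frM J' x0 i).card ≤ 1 := by omega
                exact_mod_cast this
        linarith
    obtain ⟨y, hyint, hy0, hyJ, hyM⟩ :=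
      roundAll w J' L ts hw0 hwL hL (frE x0).card x0 rfl hx00 hz0 hJ0 hM0
    have hyy : ∀ i j, ((⌊y i j⌋.toNat : ℕ) : ℝ) = y i j := by
      intro i j
      have h1 : ((⌊y i j⌋ : ℤ) : ℝ) = y i j := by
        have h := Int.floor_add_fract (y i j)
        rw [hyint i j, add_zero] at h
        exact h
      have h2 : 0 ≤ ⌊y i j⌋ := Int.floor_nonneg.mpr (hy0 i j)
      have h3 : ((⌊y i j⌋.toNat : ℕ) : ℝ) = ((⌊y i j⌋ : ℤ) : ℝ) := by
        exact_mod_cast Int.toNat_of_nonneg h2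
      rw [h3, h1]
    refine ⟨fun i j => (⌊y i j⌋).toNat, ?_, ?_⟩
    · intro j hj
      have hLW : L ≤ Wj w y j := by
        rcases hyJ j hj with ⟨_, hW⟩ | ⟨_, hW⟩
        · linarith
        · have h0 : ∑ i ∈ frJ y j, w i j * Int.fract (y i j) = 0 :=
            Finset.sum_eq_zero (fun i _ => by rw [hyint i j, mul_zero])
          rw [h0, add_zero] at hW
          exact hW
      rw [Wj] at hLW
      calc L ≤ ∑ i : M, w i j * y i j := hLW
        _ = ∑ i : M, w i j * ((⌊y i j⌋.toNat : ℕ) : ℝ) :=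
          Finset.sum_congr rfl (fun i _ => by rw [hyy])
    · intro i
      have hfrMe : frM J' y i = ∅ := by
        rw [frM]
        refine Finset.filter_eq_empty_iff.mpr (fun j _ => ?_)
        rw [hyint i j]
        simp
      have hLd1 : Ld J' y i ≤ 3 * ts + 1 := by
        rcases hyM i with ⟨h2, _⟩ | ⟨_, hLd⟩
        · rw [hfrMe] at h2; simp at h2
        · rw [hfrMe] at hLd; simp at hLd; linarith
      have hcast : ((∑ j ∈ J', (⌊y i j⌋).toNat : ℕ) : ℝ) = Ld J' y i := by
        rw [Ld, Nat.cast_sum]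
        exact Finset.sum_congr rfl (fun j _ => by rw [hyy])
      set N : ℕ := ∑ j ∈ J', (⌊y i j⌋).toNat with hN
      by_cases h13 : 1 ≤ 3 * ts
      · have h6 : (N : ℝ) ≤ 6 * ts := by rw [hcast]; linarith
        have h7 : (6 * ts : ℝ) ≤ (⌈6 * ts⌉₊ : ℕ) := Nat.le_ceil _
        have : (N : ℝ) ≤ ((⌈6 * ts⌉₊ : ℕ) : ℝ) := le_trans h6 h7
        exact_mod_cast this
      · have hN2 : (N : ℝ) < 2 := by rw [hcast]; linarith
        have hN1 : N < 2 := by exact_mod_cast hN2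
        have hc1 : 1 ≤ ⌈6 * ts⌉₊ := Nat.one_le_iff_ne_zero.mpr
          (Nat.pos_iff_ne_zero.mp (Nat.ceil_pos.mpr (by linarith)))
        omega
  · refine ⟨fun _ _ => 0, ?_, ?_⟩
    · intro j hj
      exact absurd ⟨j, hj⟩ hJne
    · intro i
      simp
end

section
/- Rounding of LP2: let ℓ'_{ij} = min(ℓ_{ij}, 1). If there exist nonnegative reals x*_{ij}, d*_j and t* satisfying Σ_{i∈M} ℓ'_{ij} x*_{ij} ≥ 1 for all j, Σ_{j∈J} x*_{ij} ≤ t* for all i, x*_{ij} ≤ d*_j, d*_j ≥ 1, and Σ_{j∈C_k} d*_j ≤ t* for every chain C_k, then there exist nonnegative integers x̂_{ij} with x̂_{ij} ≤ ⌈6·d*_j⌉, Σ_{i∈M} ℓ'_{ij} x̂_{ij} ≥ 1 for all j, Σ_{j∈J} x̂_{ij} ≤ ⌈6t*⌉ for all i, and Σ_{j∈C_k} max_{i∈M} x̂_{ij} ≤ 7·Σ_{j∈C_k} d*_j ≤ 7t* for every chain C_k. In particular a feasible integral solution to LP2 of value O(t_{LP2}) exists. -/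
open MeasureTheory ENNReal

/-- Precedence constraints forming disjoint chains: each job `j` belongs to chain `c j`
and has position `pos j` in its chain; distinct jobs in the same chain have distinct
positions. -/
structure ChainStruct (J : Type) where
  z : ℕ
  c : J → Fin z
  pos : J → ℕ
  inj : ∀ j j', c j = c j' → pos j = pos j' → j = j'

section Gale
variable {A B : Type} [Fintype A] [Fintype B] [DecidableEq A] [DecidableEq B]

/-- RHS of Gale's feasibility condition. -/
def galeRHS (γ : B → ℕ) (c : A → B → ℕ) (W : Finset A) : ℕ :=
  ∑ b : B, min (γ b) (∑ a ∈ W, c a b)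

lemma galeRHS_submod (γ : B → ℕ) (c : A → B → ℕ) (W1 W2 : Finset A) :
    galeRHS γ c (W1 ∪ W2) + galeRHS γ c (W1 ∩ W2) ≤ galeRHS γ c W1 + galeRHS γ c W2 := by
  classical
  simp only [galeRHS, ← Finset.sum_add_distrib]
  apply Finset.sum_le_sum
  intro b _
  have hmod : (∑ a ∈ W1 ∪ W2, c a b) + (∑ a ∈ W1 ∩ W2, c a b)
      = (∑ a ∈ W1, c a b) + (∑ a ∈ W2, c a b) := Finset.sum_union_inter
  have h1 : (∑ a ∈ W1, c a b) ≤ ∑ a ∈ W1 ∪ W2, c a b :=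
    Finset.sum_le_sum_of_subset Finset.subset_union_left
  have h2 : (∑ a ∈ W2, c a b) ≤ ∑ a ∈ W1 ∪ W2, c a b :=
    Finset.sum_le_sum_of_subset Finset.subset_union_right
  omega

lemma gale_aux : ∀ (n : ℕ) (k : A → ℕ) (γ : B → ℕ) (c : A → B → ℕ),
    (∑ a : A, k a) ≤ n →
    (∀ W : Finset A, ∑ a ∈ W, k a ≤ galeRHS γ c W) →
    ∃ u : A → B → ℕ, (∀ a b, u a b ≤ c a b) ∧ (∀ a, ∑ b : B, u a b = k a) ∧
      (∀ b, ∑ a : A, u a b ≤ γ b) := by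
  intro n
  induction n with
  | zero =>
    intro k γ c hk _
    have hk0 : ∀ a, k a = 0 := by
      intro a
      have := Finset.single_le_sum (f := k) (fun a _ => Nat.zero_le _) (Finset.mem_univ a)
      omega
    exact ⟨fun _ _ => 0, fun a b => Nat.zero_le _, fun a => by simp [hk0 a], fun b => by simp⟩
  | succ n ih =>
    intro k γ c hk H
    by_cases h0 : ∑ a : A, k a = 0
    · have hk0 : ∀ a, k a = 0 := by
        intro a
        have := Finset.single_le_sum (f := k) (fun a _ => Nat.zero_le _) (Finset.mem_univ a)
        omega
      exact ⟨fun _ _ => 0, fun a b => Nat.zero_le _, fun a => by simp [hk0 a], fun b => by simp⟩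
    · obtain ⟨a₀, -, ha₀⟩ := Finset.exists_ne_zero_of_sum_ne_zero h0
      -- the union of all tight sets avoiding a₀
      set 𝒯 : Finset (Finset A) :=
        (Finset.univ.erase a₀).powerset.filter (fun W => ∑ a ∈ W, k a = galeRHS γ c W) with h𝒯
      set T : Finset A := 𝒯.sup id with hT
      have hTsub : T ⊆ Finset.univ.erase a₀ := by
        have : T ≤ Finset.univ.erase a₀ :=
          Finset.sup_le (fun W hW => Finset.mem_powerset.mp (Finset.mem_filter.mp hW).1)
        exact this
      have hTa₀ : a₀ ∉ T := fun h => (Finset.mem_erase.mp (hTsub h)).1 rfl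
      have hTtight : ∑ a ∈ T, k a = galeRHS γ c T := by
        rw [hT]
        refine Finset.sup_induction (p := fun W => ∑ a ∈ W, k a = galeRHS γ c W) ?_ ?_ ?_
        · simp [galeRHS]
        · intro W1 h1 W2 h2
          rw [Finset.sup_eq_union]
          have hsub := galeRHS_submod γ c W1 W2
          have hmod : (∑ a ∈ W1 ∪ W2, k a) + (∑ a ∈ W1 ∩ W2, k a)
              = (∑ a ∈ W1, k a) + (∑ a ∈ W2, k a) := Finset.sum_union_inter
          have hu := H (W1 ∪ W2)
          have hi := H (W1 ∩ W2)
          omega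
        · intro W hW
          exact (Finset.mem_filter.mp hW).2
      -- find a machine b₀ with slack beyond T and an edge from a₀
      have hins : galeRHS γ c T + k a₀ ≤ galeRHS γ c (insert a₀ T) := by
        have := H (insert a₀ T)
        rwa [Finset.sum_insert hTa₀, hTtight, add_comm] at this
      have hkey : ∃ b₀ : B, min (γ b₀) (∑ a ∈ T, c a b₀) <
          min (γ b₀) (c a₀ b₀ + ∑ a ∈ T, c a b₀) := by
        by_contra hcon
        push_neg at hcon
        have hle : galeRHS γ c (insert a₀ T) ≤ galeRHS γ c T := by
          apply Finset.sum_le_sum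
          intro b _
          rw [Finset.sum_insert hTa₀]
          exact hcon b
        omega
      obtain ⟨b₀, hb₀⟩ := hkey
      have hcab : 1 ≤ c a₀ b₀ := by
        rcases Nat.eq_zero_or_pos (c a₀ b₀) with h | h
        · rw [h] at hb₀; omega
        · exact h
      have hγb : ∑ a ∈ T, c a b₀ < γ b₀ := by omega
      -- decremented instance
      classical
      set k' : A → ℕ := Function.update k a₀ (k a₀ - 1) with hk'
      set γ' : B → ℕ := Function.update γ b₀ (γ b₀ - 1) with hγ'
      set c' : A → B → ℕ := fun a b => if a = a₀ ∧ b = b₀ then c a b - 1 else c a b with hc'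
      have hk'a₀ : k' a₀ = k a₀ - 1 := by simp [hk']
      have hk'ne : ∀ a, a ≠ a₀ → k' a = k a := by
        intro a ha; simp [hk', Function.update_of_ne ha]
      have hγ'b : γ' b₀ = γ b₀ - 1 := by simp [hγ']
      have hc'ne : ∀ a b, b ≠ b₀ → c' a b = c a b := by intro a b hb; simp [hc', hb]
      have hc'ab : c' a₀ b₀ = c a₀ b₀ - 1 := by simp [hc']
      have hc'ne' : ∀ a, a ≠ a₀ → c' a b₀ = c a b₀ := by intro a ha; simp [hc', ha]
      have hsum' : (∑ a : A, k' a) ≤ n := by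
        have e1 : ∑ a : A, k' a = (k a₀ - 1) + ∑ x ∈ Finset.univ \ {a₀}, k x := by
          rw [hk']; exact Finset.sum_update_of_mem (Finset.mem_univ a₀) k (k a₀ - 1)
        have e2 : k a₀ + ∑ x ∈ Finset.univ \ {a₀}, k x = ∑ x : A, k x := by
          rw [← Finset.erase_eq]; exact Finset.add_sum_erase _ k (Finset.mem_univ a₀)
        omega
      have hH' : ∀ W : Finset A, ∑ a ∈ W, k' a ≤ galeRHS γ' c' W := by
        intro W
        have hrest : ∀ b ∈ Finset.univ.erase b₀,
            min (γ' b) (∑ a ∈ W, c' a b) = min (γ b) (∑ a ∈ W, c a b) := by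
          intro b hb
          have hbne : b ≠ b₀ := (Finset.mem_erase.mp hb).1
          rw [Finset.sum_congr rfl (fun a _ => hc'ne a b hbne), hγ',
            Function.update_of_ne hbne]
        have hdecomp : galeRHS γ' c' W
            = min (γ' b₀) (∑ a ∈ W, c' a b₀) + ∑ b ∈ Finset.univ.erase b₀,
                min (γ b) (∑ a ∈ W, c a b) := by
          rw [galeRHS, ← Finset.add_sum_erase _ _ (Finset.mem_univ b₀),
            Finset.sum_congr rfl hrest]
        have hdecomp2 : galeRHS γ c W
            = min (γ b₀) (∑ a ∈ W, c a b₀) + ∑ b ∈ Finset.univ.erase b₀,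
                min (γ b) (∑ a ∈ W, c a b) :=
          (Finset.add_sum_erase _ _ (Finset.mem_univ b₀)).symm
        by_cases haW : a₀ ∈ W
        · -- LHS drops by 1, the b₀ term drops by at most 1
          have hkW : ∑ a ∈ W, k' a + 1 = ∑ a ∈ W, k a := by
            have e1 : ∑ a ∈ W, k' a = (k a₀ - 1) + ∑ x ∈ W \ {a₀}, k x := by
              rw [hk']; exact Finset.sum_update_of_mem haW k (k a₀ - 1)
            have e2 : k a₀ + ∑ x ∈ W \ {a₀}, k x = ∑ x ∈ W, k x := by
              rw [← Finset.erase_eq]; exact Finset.add_sum_erase _ k haW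
            omega
          have hcW : ∑ a ∈ W, c' a b₀ + 1 = ∑ a ∈ W, c a b₀ := by
            have e3 : c' a₀ b₀ + ∑ x ∈ W.erase a₀, c' x b₀ = ∑ x ∈ W, c' x b₀ :=
              Finset.add_sum_erase _ (fun a => c' a b₀) haW
            have e5 : ∑ x ∈ W.erase a₀, c' x b₀ = ∑ x ∈ W.erase a₀, c x b₀ :=
              Finset.sum_congr rfl (fun x hx => hc'ne' x (Finset.mem_erase.mp hx).1)
            have e6 : c a₀ b₀ + ∑ x ∈ W.erase a₀, c x b₀ = ∑ x ∈ W, c x b₀ :=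
              Finset.add_sum_erase _ (fun a => c a b₀) haW
            omega
          have hterm : min (γ b₀) (∑ a ∈ W, c a b₀)
              ≤ min (γ' b₀) (∑ a ∈ W, c' a b₀) + 1 := by
            rw [hγ'b]; omega
          have := H W
          rw [hdecomp2] at this
          rw [hdecomp]
          omega
        · -- LHS unchanged
          have hkW : ∑ a ∈ W, k' a = ∑ a ∈ W, k a :=
            Finset.sum_congr rfl (fun a ha => hk'ne a (fun h => haW (h ▸ ha)))
          have hcW : ∑ a ∈ W, c' a b₀ = ∑ a ∈ W, c a b₀ :=
            Finset.sum_congr rfl (fun a ha => hc'ne' a (fun h => haW (h ▸ ha)))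
          by_cases htight : ∑ a ∈ W, k a = galeRHS γ c W
          · -- tight: W ⊆ T so b₀ has slack and the b₀ term is unchanged
            have hWT : W ⊆ T := by
              have : W ∈ 𝒯 := by
                rw [h𝒯]
                refine Finset.mem_filter.mpr ⟨Finset.mem_powerset.mpr ?_, htight⟩
                intro a ha
                exact Finset.mem_erase.mpr ⟨fun h => haW (h ▸ ha), Finset.mem_univ a⟩
              exact Finset.le_sup (f := id) this
            have hcWT : ∑ a ∈ W, c a b₀ ≤ ∑ a ∈ T, c a b₀ :=
              Finset.sum_le_sum_of_subset hWT
            have hWb : min (γ' b₀) (∑ a ∈ W, c' a b₀) = min (γ b₀) (∑ a ∈ W, c a b₀) := by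
              rw [hcW, hγ'b]; omega
            rw [hdecomp, hWb, ← hdecomp2, hkW]
            exact H W
          · -- slack: RHS drops by at most 1
            have hlt : ∑ a ∈ W, k a < galeRHS γ c W := lt_of_le_of_ne (H W) htight
            have hterm : min (γ b₀) (∑ a ∈ W, c a b₀)
                ≤ min (γ' b₀) (∑ a ∈ W, c' a b₀) + 1 := by
              rw [hcW, hγ'b]; omega
            rw [hdecomp, hkW]
            rw [hdecomp2] at hlt
            omega
      obtain ⟨u', hu'c, hu'k, hu'γ⟩ := ih k' γ' c' hsum' hH'
      set row : B → ℕ := Function.update (u' a₀) b₀ (u' a₀ b₀ + 1) with hrow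
      set u : A → B → ℕ := Function.update u' a₀ row with hu
      have hua : ∀ a, a ≠ a₀ → u a = u' a := fun a ha => Function.update_of_ne ha _ _
      have hua₀ : u a₀ = row := Function.update_self _ _ _
      have hrowb : ∀ b, b ≠ b₀ → row b = u' a₀ b := fun b hb => Function.update_of_ne hb _ _
      have hrowb₀ : row b₀ = u' a₀ b₀ + 1 := Function.update_self _ _ _
      refine ⟨u, ?_, ?_, ?_⟩
      · intro a b
        by_cases ha : a = a₀
        · subst ha
          rw [hua₀]
          by_cases hb : b = b₀
          · subst hb
            have := hu'c a b
            rw [hc'ab] at this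
            rw [hrowb₀]
            omega
          · rw [hrowb b hb]
            have := hu'c a b
            rwa [hc'ne a b hb] at this
        · rw [hua a ha]
          have := hu'c a b
          by_cases hb : b = b₀
          · subst hb
            rwa [hc'ne' a ha] at this
          · rwa [hc'ne a b hb] at this
      · intro a
        by_cases ha : a = a₀
        · subst ha
          rw [hua₀]
          have e1 : ∑ b : B, row b = (u' a b₀ + 1) + ∑ x ∈ Finset.univ \ {b₀}, u' a x := by
            rw [hrow]; exact Finset.sum_update_of_mem (Finset.mem_univ b₀) (u' a) _
          have e2 : u' a b₀ + ∑ x ∈ Finset.univ \ {b₀}, u' a x = ∑ x : B, u' a x := by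
            rw [← Finset.erase_eq]; exact Finset.add_sum_erase _ (u' a) (Finset.mem_univ b₀)
          have e3 := hu'k a
          rw [hk'a₀] at e3
          omega
        · rw [hua a ha]
          rw [hu'k a, hk'ne a ha]
      · intro b
        have esplit : ∑ a : A, u a b = u a₀ b + ∑ x ∈ Finset.univ.erase a₀, u x b :=
          (Finset.add_sum_erase _ (fun a => u a b) (Finset.mem_univ a₀)).symm
        have erest : ∑ x ∈ Finset.univ.erase a₀, u x b
            = ∑ x ∈ Finset.univ.erase a₀, u' x b :=
          Finset.sum_congr rfl (fun x hx => by
            rw [hua x (Finset.mem_erase.mp hx).1])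
        have esplit' : u' a₀ b + ∑ x ∈ Finset.univ.erase a₀, u' x b = ∑ x : A, u' x b :=
          Finset.add_sum_erase _ (fun a => u' a b) (Finset.mem_univ a₀)
        have hγ'' := hu'γ b
        by_cases hb : b = b₀
        · subst hb
          rw [esplit, erest, hua₀, hrowb₀]
          rw [hγ'b] at hγ''
          omega
        · rw [esplit, erest, hua₀, hrowb b hb]
          rw [hγ', Function.update_of_ne hb] at hγ''
          omega

end Gale

lemma sum_ite_fin_le {R : ℕ} {α : Type*} [AddCommMonoid α] [PartialOrder α] [IsOrderedAddMonoid α] (c : ℕ) (v : α) (hv : 0 ≤ v)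
    (f : Fin R → α) (hf : ∀ r : Fin R, f r ≤ if (r : ℕ) = c then v else 0) :
    ∑ r : Fin R, f r ≤ v := by
  classical
  calc ∑ r : Fin R, f r ≤ ∑ r : Fin R, (if (r : ℕ) = c then v else 0) :=
        Finset.sum_le_sum (fun r _ => hf r)
    _ ≤ v := by
        by_cases h : c < R
        · rw [Finset.sum_eq_single_of_mem (⟨c, h⟩ : Fin R) (Finset.mem_univ _)
            (fun b _ hb => if_neg (fun hc => hb (Fin.ext hc)))]
          · simp
        · have hz : ∀ r : Fin R, (if (r : ℕ) = c then v else 0) = 0 := by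
            intro r
            rw [if_neg]
            omega
          rw [Finset.sum_eq_zero (fun r _ => hz r)]
          exact hv

lemma geom_half_sum (n : ℕ) : ∑ r ∈ Finset.range n, ((1:ℝ)/2)^(r+1) = 1 - (1/2)^n := by
  induction n with
  | zero => simp
  | succ n ih =>
    rw [Finset.sum_range_succ, ih, pow_succ]
    ring


set_option maxHeartbeats 2000000 in
/-- **Rounding of LP2.** Let `ℓ' i j = min (ℓ i j) 1`.  Given a feasible
fractional solution `x*, d*, t*` of the relaxed LP2, there are nonnegative integers
`x̂ i j ≤ ⌈6 d* j⌉` with unit log mass for every job, machine loads at most `⌈6 t*⌉`, and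
for every chain `C_k`, `∑_{j ∈ C_k} max_i x̂ i j ≤ 7 ∑_{j ∈ C_k} d* j ≤ 7 t*`. -/
theorem lp2_rounding {J M : Type} [Fintype J] [Fintype M] (I : SUU J M)
    (CS : ChainStruct J) (xs : M → J → ℝ) (ds : J → ℝ) (ts : ℝ)
    (hxs : ∀ i j, 0 ≤ xs i j)
    (hwork : ∀ j : J, 1 ≤ ∑ i : M, (I.ell i j ⊓ 1).toReal * xs i j)
    (hload : ∀ i : M, ∑ j : J, xs i j ≤ ts)
    (hxd : ∀ i j, xs i j ≤ ds j)
    (hd1 : ∀ j, 1 ≤ ds j)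
    (hchain : ∀ k : Fin CS.z, ∑ j ∈ Finset.univ.filter (fun j => CS.c j = k), ds j ≤ ts) :
    ∃ xh : M → J → ℕ,
      (∀ i j, xh i j ≤ ⌈6 * ds j⌉₊) ∧
      (∀ j : J, 1 ≤ ∑ i : M, (I.ell i j ⊓ 1).toReal * (xh i j : ℝ)) ∧
      (∀ i : M, ∑ j : J, xh i j ≤ ⌈6 * ts⌉₊) ∧
      (∀ k : Fin CS.z,
        (∑ j ∈ Finset.univ.filter (fun j => CS.c j = k),
            ((Finset.univ.sup fun i => xh i j : ℕ) : ℝ)) ≤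
          7 * ∑ j ∈ Finset.univ.filter (fun j => CS.c j = k), ds j ∧
        7 * ∑ j ∈ Finset.univ.filter (fun j => CS.c j = k), ds j ≤ 7 * ts) := by
  classical
  set w : M → J → ℝ := fun i j => (I.ell i j ⊓ 1).toReal with hwdef
  have hw0 : ∀ i j, 0 ≤ w i j := fun i j => by
    rw [hwdef]; exact ENNReal.toReal_nonneg
  have hw1 : ∀ i j, w i j ≤ 1 := by
    intro i j
    have h1 : (I.ell i j ⊓ 1) ≤ 1 := inf_le_right
    have := ENNReal.toReal_mono (by simp) h1
    rw [hwdef]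
    simpa using this
  clear_value w
  -- basic nonnegativity
  have hx6 : ∀ i j, (0:ℝ) ≤ 6 * xs i j := fun i j => by
    have := hxs i j; linarith
  -- base and fractional parts
  set base : M → J → ℕ := fun i j => ⌊6 * xs i j⌋₊ with hbase
  have base_le : ∀ i j, (base i j : ℝ) ≤ 6 * xs i j := fun i j => by
    rw [hbase]; exact Nat.floor_le (hx6 i j)
  have base_lt : ∀ i j, 6 * xs i j < (base i j : ℝ) + 1 := fun i j => by
    rw [hbase]; exact Nat.lt_floor_add_one _
  clear_value base
  set frac : M → J → ℝ := fun i j => 6 * xs i j - (base i j : ℝ) with hfrac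
  have frac0 : ∀ i j, 0 ≤ frac i j := fun i j => by
    have := base_le i j; simp only [hfrac]; linarith
  have frac1 : ∀ i j, frac i j < 1 := fun i j => by
    have := base_lt i j; simp only [hfrac]; linarith
  clear_value frac
  -- dyadic levels
  have hexi : ∀ i j, 0 < w i j → ∃ n : ℕ, ((1:ℝ)/2) ^ (n + 1) < w i j := by
    intro i j h
    obtain ⟨n, hn⟩ := exists_pow_lt_of_lt_one h (by norm_num : (1:ℝ)/2 < 1)
    exact ⟨n, lt_of_le_of_lt
      (pow_le_pow_of_le_one (by norm_num) (by norm_num) (Nat.le_succ n)) hn⟩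
  set lev : M → J → ℕ := fun i j =>
    if h : 0 < w i j then Nat.find (hexi i j h) else 0 with hlev
  have lev_spec : ∀ i j, 0 < w i j → ((1:ℝ)/2) ^ (lev i j + 1) < w i j := by
    intro i j h
    simp only [hlev, dif_pos h]
    exact Nat.find_spec (hexi i j h)
  have lev_ub : ∀ i j, 0 < w i j → w i j ≤ ((1:ℝ)/2) ^ (lev i j) := by
    intro i j h
    have hl : lev i j = Nat.find (hexi i j h) := by simp only [hlev, dif_pos h]
    rcases Nat.eq_zero_or_pos (lev i j) with h0 | h0
    · rw [h0, pow_zero]; exact hw1 i j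
    · have hm : lev i j - 1 < Nat.find (hexi i j h) := by omega
      have hnot := Nat.find_min (hexi i j h) hm
      push_neg at hnot
      have heq : lev i j - 1 + 1 = lev i j := by omega
      rwa [heq] at hnot
  clear_value lev
  set R : ℕ := (Finset.univ.sup fun p : M × J => lev p.1 p.2) + 1 with hR
  have lev_lt : ∀ i j, lev i j < R := by
    intro i j
    have : lev i j ≤ Finset.univ.sup fun p : M × J => lev p.1 p.2 :=
      Finset.le_sup (f := fun p : M × J => lev p.1 p.2) (Finset.mem_univ (i, j))
    omega
  clear_value R
  -- level classes
  set P : J → ℕ → Finset M :=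
    fun j r => Finset.univ.filter (fun i => 0 < w i j ∧ lev i j = r) with hP
  set F : J → ℕ → Finset M :=
    fun j r => (P j r).filter (fun i => (base i j : ℝ) < 6 * xs i j) with hF
  have hPmem : ∀ j r i, i ∈ P j r ↔ (0 < w i j ∧ lev i j = r) := by
    intro j r i; rw [hP]; simp
  have hFmem : ∀ j r i, i ∈ F j r ↔ (i ∈ P j r ∧ (base i j : ℝ) < 6 * xs i j) := by
    intro j r i; rw [hF]; simp [Finset.mem_filter]
  have hFP : ∀ j r, F j r ⊆ P j r := fun j r => by rw [hF]; exact Finset.filter_subset _ _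
  clear_value P F
  set kd : J → ℕ → ℕ := fun j r => ⌊∑ i ∈ P j r, frac i j⌋₊ with hkd
  have kd_le : ∀ j r, ((kd j r : ℕ) : ℝ) ≤ ∑ i ∈ P j r, frac i j := by
    intro j r; rw [hkd]; exact Nat.floor_le (Finset.sum_nonneg (fun i _ => frac0 i j))
  have kd_gt : ∀ j r, (∑ i ∈ P j r, frac i j) < (kd j r : ℝ) + 1 := by
    intro j r; rw [hkd]; exact Nat.lt_floor_add_one _
  clear_value kd
  have hPF_sum : ∀ j r, ∑ i ∈ P j r, frac i j = ∑ i ∈ F j r, frac i j := by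
    intro j r
    refine (Finset.sum_subset (hFP j r) ?_).symm
    intro i hiP hiF
    have : ¬ ((base i j : ℝ) < 6 * xs i j) := by
      intro hc
      exact hiF ((hFmem j r i).mpr ⟨hiP, hc⟩)
    have h1 := base_le i j
    simp only [hfrac]
    linarith [not_lt.mp this]
  -- machine capacities
  set γm : M → ℕ := fun i => ⌈6 * ts⌉₊ - ∑ j : J, base i j with hγm
  have G1 : ∀ i, (∑ j : J, base i j) ≤ ⌈6 * ts⌉₊ := by
    intro i
    have hc : ((∑ j : J, base i j : ℕ) : ℝ) ≤ (⌈6 * ts⌉₊ : ℝ) := by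
      push_cast
      calc ∑ j : J, (base i j : ℝ) ≤ ∑ j : J, 6 * xs i j :=
            Finset.sum_le_sum (fun j _ => base_le i j)
        _ = 6 * ∑ j : J, xs i j := by rw [Finset.mul_sum]
        _ ≤ 6 * ts := by have := hload i; linarith
        _ ≤ (⌈6 * ts⌉₊ : ℝ) := Nat.le_ceil _
    exact_mod_cast hc
  have γm_cast : ∀ i, (γm i : ℝ) = (⌈6 * ts⌉₊ : ℝ) - ∑ j : J, (base i j : ℝ) := by
    intro i
    simp only [hγm]
    rw [Nat.cast_sub (G1 i)]
    push_cast
    ring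
  have γm_add : ∀ i, ∑ j : J, base i j + γm i = ⌈6 * ts⌉₊ := by
    intro i
    have := G1 i
    simp only [hγm]
    omega
  clear_value γm
  -- edge capacities
  set cc : J × Fin R → M → ℕ := fun a i => if i ∈ F a.1 (a.2 : ℕ) then 1 else 0 with hcc
  have hcc_eq : ∀ (a : J × Fin R) i, cc a i = if i ∈ F a.1 (a.2 : ℕ) then 1 else 0 := by
    intro a i; rw [hcc]
  clear_value cc
  -- frac sums per job are bounded by capacity
  have frac_col : ∀ i, ∑ j : J, frac i j ≤ (γm i : ℝ) := by
    intro i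
    rw [γm_cast i]
    have : ∑ j : J, frac i j = ∑ j : J, 6 * xs i j - ∑ j : J, (base i j : ℝ) := by
      simp only [hfrac]
      rw [Finset.sum_sub_distrib]
    rw [this]
    have h6 : ∑ j : J, 6 * xs i j ≤ (⌈6 * ts⌉₊ : ℝ) := by
      calc ∑ j : J, 6 * xs i j = 6 * ∑ j : J, xs i j := by rw [Finset.mul_sum]
        _ ≤ 6 * ts := by have := hload i; linarith
        _ ≤ _ := Nat.le_ceil _
    linarith
  -- Hall/Gale condition
  have Hall : ∀ W : Finset (J × Fin R),
      ∑ a ∈ W, kd a.1 (a.2 : ℕ) ≤ galeRHS γm cc W := by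
    intro W
    have hreal : ((∑ a ∈ W, kd a.1 (a.2 : ℕ) : ℕ) : ℝ) ≤ ((galeRHS γm cc W : ℕ) : ℝ) := by
      push_cast
      have step1 : ∑ a ∈ W, ((kd a.1 (a.2 : ℕ) : ℕ) : ℝ)
          ≤ ∑ a ∈ W, ∑ i : M, (if i ∈ F a.1 (a.2 : ℕ) then frac i a.1 else 0) := by
        apply Finset.sum_le_sum
        intro a _
        have h1 : ((kd a.1 (a.2 : ℕ) : ℕ) : ℝ) ≤ ∑ i ∈ P a.1 (a.2 : ℕ), frac i a.1 :=
          kd_le a.1 (a.2 : ℕ)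
        have h2 : ∑ i ∈ P a.1 (a.2 : ℕ), frac i a.1
            = ∑ i : M, (if i ∈ F a.1 (a.2 : ℕ) then frac i a.1 else 0) := by
          rw [hPF_sum, Finset.sum_ite_mem, Finset.univ_inter]
        linarith
      have step2 : ∑ a ∈ W, ∑ i : M, (if i ∈ F a.1 (a.2 : ℕ) then frac i a.1 else 0)
          = ∑ i : M, ∑ a ∈ W, (if i ∈ F a.1 (a.2 : ℕ) then frac i a.1 else 0) :=
        Finset.sum_comm
      have step3 : ∑ i : M, ∑ a ∈ W, (if i ∈ F a.1 (a.2 : ℕ) then frac i a.1 else 0)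
          ≤ ∑ i : M, min ((γm i : ℕ) : ℝ) ((∑ a ∈ W, cc a i : ℕ) : ℝ) := by
        apply Finset.sum_le_sum
        intro i _
        apply le_min
        · -- bounded by capacity
          calc ∑ a ∈ W, (if i ∈ F a.1 (a.2 : ℕ) then frac i a.1 else 0)
              ≤ ∑ a : J × Fin R, (if i ∈ F a.1 (a.2 : ℕ) then frac i a.1 else 0) := by
                apply Finset.sum_le_sum_of_subset_of_nonneg (Finset.subset_univ W)
                intro a _ _
                split
                · exact frac0 i a.1
                · exact le_refl 0
            _ = ∑ j : J, ∑ r : Fin R, (if i ∈ F j (r : ℕ) then frac i j else 0) := by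
                rw [Fintype.sum_prod_type]
            _ ≤ ∑ j : J, frac i j := by
                apply Finset.sum_le_sum
                intro j _
                apply sum_ite_fin_le (lev i j) (frac i j) (frac0 i j)
                intro r
                by_cases hiF : i ∈ F j (r : ℕ)
                · have hiP : i ∈ P j (r : ℕ) := hFP j (r : ℕ) hiF
                  have hlv : lev i j = (r : ℕ) := ((hPmem j (r : ℕ) i).mp hiP).2
                  rw [if_pos hiF, if_pos hlv.symm]
                · rw [if_neg hiF]
                  split
                  · exact frac0 i j
                  · exact le_refl 0
            _ ≤ (γm i : ℝ) := frac_col i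
        · -- bounded by number of edges
          push_cast
          apply Finset.sum_le_sum
          intro a _
          rw [hcc_eq]
          split
          · push_cast
            exact le_of_lt (frac1 i a.1)
          · push_cast
            exact le_refl 0
      calc ∑ a ∈ W, ((kd a.1 (a.2 : ℕ) : ℕ) : ℝ)
          ≤ ∑ i : M, min ((γm i : ℕ) : ℝ) ((∑ a ∈ W, cc a i : ℕ) : ℝ) := by
            rw [step2] at step1
            linarith
        _ = ((galeRHS γm cc W : ℕ) : ℝ) := by
            rw [galeRHS]
            push_cast
            rfl
    exact_mod_cast hreal
  -- apply Gale's theorem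
  obtain ⟨u, huc, huk, huγ⟩ := gale_aux (∑ a : J × Fin R, kd a.1 (a.2 : ℕ))
    (fun a => kd a.1 (a.2 : ℕ)) γm cc le_rfl Hall
  -- the extras
  set e : M → J → ℕ := fun i j => ∑ r : Fin R, u (j, r) i with he
  have he' : ∀ i j, e i j = ∑ r : Fin R, u (j, r) i := fun i j => by rw [he]
  clear_value e
  have he1 : ∀ i j, e i j ≤ 1 := by
    intro i j
    rw [he' i j]
    apply sum_ite_fin_le (lev i j) 1 (Nat.zero_le 1)
    intro r
    have h1 := huc (j, r) i
    rw [hcc_eq] at h1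
    by_cases hiF : i ∈ F j (r : ℕ)
    · have hiP : i ∈ P j (r : ℕ) := hFP j (r : ℕ) hiF
      have hlv : lev i j = (r : ℕ) := ((hPmem j (r : ℕ) i).mp hiP).2
      rw [if_pos hiF] at h1
      rw [if_pos hlv.symm]
      exact h1
    · rw [if_neg hiF] at h1
      have hz : u (j, r) i = 0 := by omega
      rw [hz]
      exact Nat.zero_le _
  -- extras live on fractional entries
  have heF : ∀ i j, e i j ≠ 0 → (base i j : ℝ) < 6 * xs i j := by
    intro i j hne
    have : ∃ r : Fin R, u (j, r) i ≠ 0 := by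
      by_contra hc
      push_neg at hc
      apply hne
      rw [he' i j]
      exact Finset.sum_eq_zero (fun r _ => hc r)
    obtain ⟨r, hr⟩ := this
    have h1 := huc (j, r) i
    rw [hcc_eq] at h1
    by_cases hiF : i ∈ F j (r : ℕ)
    · exact ((hFmem j (r : ℕ) i).mp hiF).2
    · rw [if_neg hiF] at h1
      omega
  -- the integral solution
  set xh : M → J → ℕ := fun i j => base i j + e i j with hxh
  have hxh' : ∀ i j, xh i j = base i j + e i j := fun i j => by rw [hxh]
  clear_value xh
  -- property (1): per-entry bound
  have prop1 : ∀ i j, xh i j ≤ ⌈6 * ds j⌉₊ := by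
    intro i j
    have hde : 6 * ds j ≤ (⌈6 * ds j⌉₊ : ℝ) := Nat.le_ceil _
    have hxd6 : 6 * xs i j ≤ 6 * ds j := by have := hxd i j; linarith
    rw [hxh' i j]
    by_cases hez : e i j = 0
    · rw [hez]
      have : (base i j : ℝ) ≤ (⌈6 * ds j⌉₊ : ℝ) := by
        have := base_le i j; linarith
      exact_mod_cast (by simpa using this : ((base i j : ℕ) : ℝ) ≤ ((⌈6 * ds j⌉₊ : ℕ) : ℝ))
    · have h1 := he1 i j
      have h2 : e i j = 1 := by omega
      rw [h2]
      have hlt : (base i j : ℝ) < (⌈6 * ds j⌉₊ : ℝ) := by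
        have := heF i j hez; linarith
      have : base i j < ⌈6 * ds j⌉₊ := by exact_mod_cast hlt
      omega
  -- property (3): machine loads
  have prop3 : ∀ i, ∑ j : J, xh i j ≤ ⌈6 * ts⌉₊ := by
    intro i
    have h1 : ∑ j : J, xh i j = ∑ j : J, base i j + ∑ j : J, e i j := by
      simp only [hxh']
      rw [Finset.sum_add_distrib]
    have h2 : ∑ j : J, e i j = ∑ a : J × Fin R, u a i := by
      rw [Fintype.sum_prod_type]
      apply Finset.sum_congr rfl
      intro j _
      exact he' i j
    have h3 := huγ i
    have h4 := γm_add i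
    omega
  -- property (2): unit work per job
  have prop2 : ∀ j, 1 ≤ ∑ i : M, w i j * (xh i j : ℝ) := by
    intro j
    -- the classes partition the relevant machines
    have hdisj : ∀ r1 ∈ Finset.range R, ∀ r2 ∈ Finset.range R, r1 ≠ r2 →
        Disjoint (P j r1) (P j r2) := by
      intro r1 _ r2 _ hne
      rw [Finset.disjoint_left]
      intro i h1 h2
      have e1 := ((hPmem j r1 i).mp h1).2
      have e2 := ((hPmem j r2 i).mp h2).2
      omega
    set B' : Finset M := (Finset.range R).biUnion (fun r => P j r) with hB'
    have hBuniv : ∀ i, i ∉ B' → w i j = 0 := by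
      intro i hiB
      by_contra hne
      have hpos : 0 < w i j := lt_of_le_of_ne (hw0 i j) (Ne.symm hne)
      apply hiB
      rw [hB']
      apply Finset.mem_biUnion.mpr
      exact ⟨lev i j, Finset.mem_range.mpr (lev_lt i j),
        (hPmem j (lev i j) i).mpr ⟨hpos, rfl⟩⟩
    -- per-class lower bounds
    have keyr : ∀ r ∈ Finset.range R,
        3 * (∑ i ∈ P j r, w i j * xs i j) - ((1:ℝ)/2) ^ (r + 1)
          ≤ ∑ i ∈ P j r, w i j * (xh i j : ℝ) := by
      intro r hr
      have hrR : r < R := Finset.mem_range.mp hr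
      -- extras in this class
      have hcnt : (kd j r : ℝ) ≤ ∑ i ∈ P j r, (e i j : ℝ) := by
        have h0 : ∑ i ∈ P j r, u (j, (⟨r, hrR⟩ : Fin R)) i = kd j r := by
          have h1 : ∑ i : M, u (j, (⟨r, hrR⟩ : Fin R)) i = kd j r := huk _
          rw [← h1]
          apply Finset.sum_subset (Finset.subset_univ _)
          intro i _ hiP
          have h2 := huc (j, (⟨r, hrR⟩ : Fin R)) i
          rw [hcc_eq] at h2
          have hiF : i ∉ F j r := fun hc => hiP (hFP j r hc)
          rw [if_neg hiF] at h2
          omega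
        have h1 : ∀ i ∈ P j r, u (j, (⟨r, hrR⟩ : Fin R)) i ≤ e i j := by
          intro i _
          rw [he' i j]
          exact Finset.single_le_sum (f := fun r' => u (j, r') i)
            (fun r' _ => Nat.zero_le _) (Finset.mem_univ _)
        have h2 : (kd j r : ℕ) ≤ ∑ i ∈ P j r, e i j := by
          rw [← h0]
          exact Finset.sum_le_sum h1
        calc (kd j r : ℝ) ≤ ((∑ i ∈ P j r, e i j : ℕ) : ℝ) := by exact_mod_cast h2
          _ = ∑ i ∈ P j r, (e i j : ℝ) := by push_cast; rfl
      -- total in this class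
      have hsumxh : 6 * (∑ i ∈ P j r, xs i j) - 1 ≤ ∑ i ∈ P j r, (xh i j : ℝ) := by
        have h1 : ∑ i ∈ P j r, (xh i j : ℝ)
            = ∑ i ∈ P j r, (base i j : ℝ) + ∑ i ∈ P j r, (e i j : ℝ) := by
          rw [← Finset.sum_add_distrib]
          apply Finset.sum_congr rfl
          intro i _
          rw [hxh' i j]
          push_cast
          ring
        have h2 : ∑ i ∈ P j r, frac i j
            = 6 * (∑ i ∈ P j r, xs i j) - ∑ i ∈ P j r, (base i j : ℝ) := by
          rw [Finset.mul_sum, ← Finset.sum_sub_distrib]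
          apply Finset.sum_congr rfl
          intro i _
          simp only [hfrac]
        have h3 := kd_gt j r
        have h4 := kd_le j r
        rw [h1]
        rw [h2] at h3
        linarith
      -- lower bound each term by the level
      have hlow : ((1:ℝ)/2) ^ (r + 1) * (∑ i ∈ P j r, (xh i j : ℝ))
          ≤ ∑ i ∈ P j r, w i j * (xh i j : ℝ) := by
        rw [Finset.mul_sum]
        apply Finset.sum_le_sum
        intro i hi
        obtain ⟨hpos, hlv⟩ := (hPmem j r i).mp hi
        have := lev_spec i j hpos
        rw [hlv] at this
        have hxn : (0:ℝ) ≤ (xh i j : ℝ) := Nat.cast_nonneg _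
        nlinarith
      have hup : ∀ i ∈ P j r, w i j * xs i j ≤ ((1:ℝ)/2) ^ r * xs i j := by
        intro i hi
        obtain ⟨hpos, hlv⟩ := (hPmem j r i).mp hi
        have := lev_ub i j hpos
        rw [hlv] at this
        have := hxs i j
        nlinarith
      have hupS : ∑ i ∈ P j r, w i j * xs i j ≤ ((1:ℝ)/2) ^ r * ∑ i ∈ P j r, xs i j := by
        rw [Finset.mul_sum]
        exact Finset.sum_le_sum hup
      have hpw : (0:ℝ) < ((1:ℝ)/2) ^ (r + 1) := by positivity
      have hps : ((1:ℝ)/2) ^ (r + 1) * (6 * (∑ i ∈ P j r, xs i j) - 1)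
          = 3 * (((1:ℝ)/2) ^ r * ∑ i ∈ P j r, xs i j) - ((1:ℝ)/2) ^ (r + 1) := by
        rw [pow_succ]
        ring
      nlinarith [hsumxh, hlow, hupS, hpw, hps]
    -- sum up over classes
    have hsum1 : ∑ r ∈ Finset.range R,
        (3 * (∑ i ∈ P j r, w i j * xs i j) - ((1:ℝ)/2) ^ (r + 1))
        ≤ ∑ r ∈ Finset.range R, ∑ i ∈ P j r, w i j * (xh i j : ℝ) :=
      Finset.sum_le_sum keyr
    have hsplit1 : ∑ r ∈ Finset.range R, ∑ i ∈ P j r, w i j * (xh i j : ℝ)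
        = ∑ i ∈ B', w i j * (xh i j : ℝ) := (Finset.sum_biUnion hdisj).symm
    have hsplit2 : ∑ r ∈ Finset.range R, ∑ i ∈ P j r, w i j * xs i j
        = ∑ i ∈ B', w i j * xs i j := (Finset.sum_biUnion hdisj).symm
    have hfull1 : ∑ i ∈ B', w i j * (xh i j : ℝ) ≤ ∑ i : M, w i j * (xh i j : ℝ) := by
      apply Finset.sum_le_sum_of_subset_of_nonneg (Finset.subset_univ _)
      intro i _ _
      exact mul_nonneg (hw0 i j) (Nat.cast_nonneg _)
    have hfull2 : ∑ i ∈ B', w i j * xs i j = ∑ i : M, w i j * xs i j := by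
      apply Finset.sum_subset (Finset.subset_univ _)
      intro i _ hiB
      rw [hBuniv i hiB]
      ring
    have hgeo : ∑ r ∈ Finset.range R, ((1:ℝ)/2) ^ (r + 1) ≤ 1 := by
      rw [geom_half_sum]
      have : (0:ℝ) < (1/2) ^ R := by positivity
      linarith
    have hw' : 1 ≤ ∑ i : M, w i j * xs i j := by
      simp only [hwdef]
      exact hwork j
    have hexp : ∑ r ∈ Finset.range R,
        (3 * (∑ i ∈ P j r, w i j * xs i j) - ((1:ℝ)/2) ^ (r + 1))
        = 3 * (∑ r ∈ Finset.range R, ∑ i ∈ P j r, w i j * xs i j)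
          - ∑ r ∈ Finset.range R, ((1:ℝ)/2) ^ (r + 1) := by
      rw [Finset.sum_sub_distrib, Finset.mul_sum]
    rw [hexp, hsplit1, hsplit2, hfull2] at hsum1
    linarith
  -- assemble
  refine ⟨xh, prop1, ?_, prop3, ?_⟩
  · intro j
    have := prop2 j
    simp only [hwdef] at this
    exact this
  · intro k
    constructor
    · have hperj : ∀ j, ((Finset.univ.sup fun i => xh i j : ℕ) : ℝ) ≤ 7 * ds j := by
        intro j
        have h1 : (Finset.univ.sup fun i => xh i j) ≤ ⌈6 * ds j⌉₊ :=
          Finset.sup_le (fun i _ => prop1 i j)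
        have h2 : ((Finset.univ.sup fun i => xh i j : ℕ) : ℝ) ≤ (⌈6 * ds j⌉₊ : ℝ) := by
          exact_mod_cast h1
        have h3 : (⌈6 * ds j⌉₊ : ℝ) < 6 * ds j + 1 := Nat.ceil_lt_add_one (by
          have := hd1 j; linarith)
        have h4 := hd1 j
        linarith
      calc ∑ j ∈ Finset.univ.filter (fun j => CS.c j = k),
            ((Finset.univ.sup fun i => xh i j : ℕ) : ℝ)
          ≤ ∑ j ∈ Finset.univ.filter (fun j => CS.c j = k), 7 * ds j :=
            Finset.sum_le_sum (fun j _ => hperj j)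
        _ = 7 * ∑ j ∈ Finset.univ.filter (fun j => CS.c j = k), ds j := by
            rw [Finset.mul_sum]
    · have := hchain k
      linarith
end

section
/- Random-delay congestion bound: let Σ_1,…,Σ_z be finite chain schedules over m machines and n jobs, where Σ_k assigns, at each of its timesteps, at most one job of chain k to each machine. Let the load H be the maximum over machines i of the total number of (chain, timestep) pairs in which some job is assigned to i, and suppose H ≤ (n+m)^a for a constant a. Independently for each chain k choose a delay δ_k uniformly at random from {0,1,…,H} and shift Σ_k in time by δ_k. Then there is a constant C = C(a) such that, with probability at least 1 − 1/(n+m), at every superstep t every machine is assigned jobs by at most C·log(n+m)/log log(n+m) distinct chains. -/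
open Finset in
lemma rdc_esymm_mul_factorial_le {ι : Type*} [DecidableEq ι] (s : Finset ι) (c : ι → ℕ) :
    ∀ R : ℕ, R.factorial * ∑ S ∈ s.powersetCard R, ∏ k ∈ S, c k ≤ (∑ k ∈ s, c k) ^ R
  | 0 => by simp
  | (R + 1) => by
    have key : ∑ x ∈ (s.powersetCard (R+1)).sigma (fun S => (S : Finset ι)),
          (c x.2 * ∏ k' ∈ x.1.erase x.2, c k')
        = ∑ x ∈ (s.powersetCard R).sigma (fun S' => s \ S'),
          (c x.2 * ∏ k' ∈ x.1, c k') := by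
      refine Finset.sum_nbij' (fun x => ⟨x.1.erase x.2, x.2⟩) (fun x => ⟨insert x.2 x.1, x.2⟩)
        ?_ ?_ ?_ ?_ ?_
      · rintro ⟨S, k⟩ hx
        simp only [Finset.mem_sigma, Finset.mem_powersetCard] at hx ⊢
        obtain ⟨⟨hSs, hcard⟩, hk⟩ := hx
        refine ⟨⟨(Finset.erase_subset _ _).trans hSs, ?_⟩, Finset.mem_sdiff.mpr ⟨hSs hk, Finset.notMem_erase _ _⟩⟩
        rw [Finset.card_erase_of_mem hk, hcard]
        omega
      · rintro ⟨S', k⟩ hx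
        simp only [Finset.mem_sigma, Finset.mem_powersetCard, Finset.mem_sdiff] at hx ⊢
        obtain ⟨⟨hSs, hcard⟩, hks, hknot⟩ := hx
        refine ⟨⟨Finset.insert_subset hks hSs, ?_⟩, Finset.mem_insert_self _ _⟩
        rw [Finset.card_insert_of_notMem hknot, hcard]
      · rintro ⟨S, k⟩ hx
        simp only [Finset.mem_sigma] at hx
        simp [Finset.insert_erase hx.2]
      · rintro ⟨S', k⟩ hx
        simp only [Finset.mem_sigma, Finset.mem_sdiff] at hx
        simp [Finset.erase_insert hx.2.2]
      · rintro ⟨S, k⟩ _; rfl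
    have step : (R+1) * ∑ S ∈ s.powersetCard (R+1), ∏ k ∈ S, c k ≤
        (∑ k ∈ s, c k) * ∑ S ∈ s.powersetCard R, ∏ k ∈ S, c k := by
      calc (R+1) * ∑ S ∈ s.powersetCard (R+1), ∏ k ∈ S, c k
          = ∑ S ∈ s.powersetCard (R+1), ∑ k ∈ S, (c k * ∏ k' ∈ S.erase k, c k') := by
            rw [Finset.mul_sum]
            refine Finset.sum_congr rfl fun S hS => ?_
            obtain ⟨hSs, hcard⟩ := Finset.mem_powersetCard.mp hS
            rw [Finset.sum_congr rfl (fun k hk => Finset.mul_prod_erase S c hk),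
              Finset.sum_const, hcard, smul_eq_mul]
        _ = ∑ x ∈ (s.powersetCard (R+1)).sigma (fun S => (S : Finset ι)),
              (c x.2 * ∏ k' ∈ x.1.erase x.2, c k') := by
            rw [Finset.sum_sigma]
        _ = ∑ x ∈ (s.powersetCard R).sigma (fun S' => s \ S'),
              (c x.2 * ∏ k' ∈ x.1, c k') := key
        _ = ∑ S' ∈ s.powersetCard R, ∑ k ∈ s \ S', (c k * ∏ k' ∈ S', c k') := by
            rw [Finset.sum_sigma]
        _ ≤ ∑ S' ∈ s.powersetCard R, ∑ k ∈ s, (c k * ∏ k' ∈ S', c k') := by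
            refine Finset.sum_le_sum fun S' _ => ?_
            exact Finset.sum_le_sum_of_subset (Finset.sdiff_subset)
        _ = (∑ k ∈ s, c k) * ∑ S' ∈ s.powersetCard R, ∏ k ∈ S', c k := by
            rw [Finset.mul_sum]
            refine Finset.sum_congr rfl fun S' _ => ?_
            rw [Finset.sum_mul]
    calc (R+1).factorial * ∑ S ∈ s.powersetCard (R+1), ∏ k ∈ S, c k
        = R.factorial * ((R+1) * ∑ S ∈ s.powersetCard (R+1), ∏ k ∈ S, c k) := by
          rw [Nat.factorial_succ]; ring
      _ ≤ R.factorial * ((∑ k ∈ s, c k) * ∑ S ∈ s.powersetCard R, ∏ k ∈ S, c k) :=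
          Nat.mul_le_mul_left _ step
      _ = (∑ k ∈ s, c k) * (R.factorial * ∑ S ∈ s.powersetCard R, ∏ k ∈ S, c k) := by ring
      _ ≤ (∑ k ∈ s, c k) * (∑ k ∈ s, c k) ^ R :=
          Nat.mul_le_mul_left _ (rdc_esymm_mul_factorial_le s c R)
      _ = (∑ k ∈ s, c k) ^ (R+1) := by ring


open Finset in
lemma rdc_count {z m : ℕ} (occ : Fin z → ℕ → Finset (Fin m)) (T : ℕ)
    (hT : ∀ k t, T ≤ t → occ k t = ∅) (H : ℕ)
    (hload : ∀ i : Fin m, (∑ k : Fin z, #((Finset.range T).filter fun t => i ∈ occ k t)) ≤ H)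
    (R : ℕ) (hR1 : 1 ≤ R) (s : Finset (Fin z → Fin (H+1)))
    (hs : ∀ δ ∈ s, ∃ t : ℕ, ∃ i : Fin m,
      R ≤ #(Finset.univ.filter fun k : Fin z => (δ k : ℕ) ≤ t ∧ i ∈ occ k (t - (δ k : ℕ)))) :
    #s * R.factorial ≤ m * (H * (H+1)) * (H+1)^z := by
  classical
  set Tset : Fin m → Finset ℕ := fun i =>
    Finset.univ.biUnion fun k : Fin z =>
      ((Finset.range T).filter fun t' => i ∈ occ k t').biUnion fun t' =>
        (Finset.range (H+1)).image fun d => t' + d with hTset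
  have hTcard : ∀ i, #(Tset i) ≤ H * (H+1) := by
    intro i
    calc #(Tset i) ≤ ∑ k : Fin z, #(((Finset.range T).filter fun t' => i ∈ occ k t').biUnion
          fun t' => (Finset.range (H+1)).image fun d => t' + d) := card_biUnion_le
      _ ≤ ∑ k : Fin z, ∑ t' ∈ (Finset.range T).filter (fun t' => i ∈ occ k t'),
            #((Finset.range (H+1)).image fun d => t' + d) :=
          sum_le_sum fun k _ => card_biUnion_le
      _ ≤ ∑ k : Fin z, ∑ t' ∈ (Finset.range T).filter (fun t' => i ∈ occ k t'), (H+1) :=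
          sum_le_sum fun k _ => sum_le_sum fun t' _ =>
            (card_image_le.trans (by rw [card_range]))
      _ = (∑ k : Fin z, #((Finset.range T).filter fun t' => i ∈ occ k t')) * (H+1) := by
          rw [Finset.sum_mul]
          exact Finset.sum_congr rfl fun k _ => by rw [sum_const, smul_eq_mul]
      _ ≤ H * (H+1) := Nat.mul_le_mul_right _ (hload i)
  set B : Fin m → ℕ → Finset (Fin z → Fin (H+1)) := fun i t =>
    Finset.univ.filter fun δ =>
      R ≤ #(Finset.univ.filter fun k : Fin z => (δ k : ℕ) ≤ t ∧ i ∈ occ k (t - (δ k : ℕ)))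
    with hB
  -- per-(i,t) bound
  have hBcard : ∀ i t, #(B i t) * R.factorial ≤ (H+1)^z := by
    intro i t
    by_cases hzR : R ≤ z
    · set c : Fin z → ℕ := fun k =>
        #(Finset.univ.filter fun d : Fin (H+1) => (d : ℕ) ≤ t ∧ i ∈ occ k (t - (d : ℕ))) with hc
      have hcsum : ∑ k, c k ≤ H := by
        refine le_trans (Finset.sum_le_sum fun k _ => ?_) (hload i)
        refine Finset.card_le_card_of_injOn (fun d => t - (d : ℕ)) ?_ ?_
        · intro d hd
          simp only [Finset.mem_coe, Finset.mem_filter, Finset.mem_univ, true_and] at hd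
          simp only [Finset.mem_coe, Finset.mem_filter, Finset.mem_range]
          refine ⟨?_, hd.2⟩
          by_contra h
          rw [hT k _ (le_of_not_gt h)] at hd
          exact absurd hd.2 (Finset.notMem_empty i)
        · intro d hd d' hd' heq
          simp only [Finset.mem_coe, Finset.mem_filter, Finset.mem_univ, true_and] at hd hd'
          have heq' : t - (d : ℕ) = t - (d' : ℕ) := heq
          have : (d : ℕ) = (d' : ℕ) := by omega
          exact Fin.ext this
      set A : Finset (Fin z) → Finset (Fin z → Fin (H+1)) := fun S =>
        Finset.univ.filter fun δ => ∀ k ∈ S, (δ k : ℕ) ≤ t ∧ i ∈ occ k (t - (δ k : ℕ)) with hA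
      have hcover : B i t ⊆ (Finset.powersetCard R Finset.univ).biUnion A := by
        intro δ hδ
        simp only [hB, Finset.mem_filter, Finset.mem_univ, true_and] at hδ
        obtain ⟨S, hSsub, hScard⟩ := Finset.exists_subset_card_eq hδ
        refine Finset.mem_biUnion.mpr ⟨S, Finset.mem_powersetCard.mpr ⟨Finset.subset_univ S, hScard⟩, ?_⟩
        simp only [hA, Finset.mem_filter, Finset.mem_univ, true_and]
        intro k hk
        have := hSsub hk
        simp only [Finset.mem_filter, Finset.mem_univ, true_and] at this
        exact this
      have hAcard : ∀ S ∈ Finset.powersetCard R (Finset.univ : Finset (Fin z)),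
          #(A S) = (∏ k ∈ S, c k) * (H+1)^(z - R) := by
        intro S hS
        obtain ⟨-, hScard⟩ := Finset.mem_powersetCard.mp hS
        have hpi : A S = Fintype.piFinset (fun k =>
            if k ∈ S then (Finset.univ.filter fun d : Fin (H+1) =>
              (d : ℕ) ≤ t ∧ i ∈ occ k (t - (d : ℕ))) else Finset.univ) := by
          ext δ
          simp only [hA, Finset.mem_filter, Finset.mem_univ, true_and, Fintype.mem_piFinset]
          constructor
          · intro h k
            by_cases hk : k ∈ S
            · rw [if_pos hk]
              simp only [Finset.mem_filter, Finset.mem_univ, true_and]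
              exact h k hk
            · rw [if_neg hk]; exact Finset.mem_univ _
          · intro h k hk
            have := h k
            rw [if_pos hk] at this
            simp only [Finset.mem_filter, Finset.mem_univ, true_and] at this
            exact this
        rw [hpi, Fintype.card_piFinset]
        rw [← Finset.prod_mul_prod_compl S]
        congr 1
        · exact Finset.prod_congr rfl fun k hk => by rw [if_pos hk]
        · rw [Finset.prod_congr rfl fun k hk => by
            rw [if_neg (Finset.mem_compl.mp hk)]]
          rw [Finset.prod_const, Finset.card_univ, Finset.card_compl, hScard,
            Fintype.card_fin, Fintype.card_fin]
      calc #(B i t) * R.factorial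
          ≤ (∑ S ∈ Finset.powersetCard R (Finset.univ : Finset (Fin z)), #(A S)) * R.factorial :=
            Nat.mul_le_mul_right _ ((Finset.card_le_card hcover).trans Finset.card_biUnion_le)
        _ = (R.factorial * ∑ S ∈ (Finset.univ : Finset (Fin z)).powersetCard R, ∏ k ∈ S, c k)
              * (H+1)^(z - R) := by
            rw [Finset.sum_congr rfl hAcard, ← Finset.sum_mul]
            ring
        _ ≤ (∑ k, c k)^R * (H+1)^(z - R) :=
            Nat.mul_le_mul_right _ (rdc_esymm_mul_factorial_le Finset.univ c R)
        _ ≤ H^R * (H+1)^(z - R) :=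
            Nat.mul_le_mul_right _ (Nat.pow_le_pow_left hcsum R)
        _ ≤ (H+1)^R * (H+1)^(z - R) :=
            Nat.mul_le_mul_right _ (Nat.pow_le_pow_left (Nat.le_succ H) R)
        _ = (H+1)^z := by rw [← pow_add]; congr 1; omega
    · -- R > z : B is empty
      have : B i t = ∅ := by
        rw [Finset.eq_empty_iff_forall_notMem]
        intro δ hδ
        simp only [hB, Finset.mem_filter, Finset.mem_univ, true_and] at hδ
        have : #(Finset.univ.filter fun k : Fin z =>
            (δ k : ℕ) ≤ t ∧ i ∈ occ k (t - (δ k : ℕ))) ≤ z := by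
          refine le_trans (Finset.card_filter_le _ _) ?_
          simp
        omega
      simp [this]
  -- cover of s
  have hcover : s ⊆ Finset.univ.biUnion fun i : Fin m => (Tset i).biUnion fun t => B i t := by
    intro δ hδ
    obtain ⟨t, i, hti⟩ := hs δ hδ
    have hne : (Finset.univ.filter fun k : Fin z =>
        (δ k : ℕ) ≤ t ∧ i ∈ occ k (t - (δ k : ℕ))).Nonempty := by
      rw [← Finset.card_pos]; omega
    obtain ⟨k, hk⟩ := hne
    simp only [Finset.mem_filter, Finset.mem_univ, true_and] at hk
    have ht'T : t - (δ k : ℕ) < T := by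
      by_contra h
      rw [hT k _ (le_of_not_gt h)] at hk
      exact absurd hk.2 (Finset.notMem_empty i)
    refine Finset.mem_biUnion.mpr ⟨i, Finset.mem_univ i, Finset.mem_biUnion.mpr ⟨t, ?_, ?_⟩⟩
    · simp only [hTset, Finset.mem_biUnion, Finset.mem_univ, true_and]
      refine ⟨k, ⟨t - (δ k : ℕ), ?_, ?_⟩⟩
      · simp only [Finset.mem_filter, Finset.mem_range]
        exact ⟨ht'T, hk.2⟩
      · simp only [Finset.mem_image, Finset.mem_range]
        exact ⟨(δ k : ℕ), (δ k).isLt, by omega⟩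
    · simp only [hB, Finset.mem_filter, Finset.mem_univ, true_and]
      exact hti
  calc #s * R.factorial
      ≤ (∑ i : Fin m, ∑ t ∈ Tset i, #(B i t)) * R.factorial := by
        refine Nat.mul_le_mul_right _ ((Finset.card_le_card hcover).trans
          (Finset.card_biUnion_le.trans (Finset.sum_le_sum fun i _ => Finset.card_biUnion_le)))
    _ = ∑ i : Fin m, ∑ t ∈ Tset i, #(B i t) * R.factorial := by
        rw [Finset.sum_mul]
        exact Finset.sum_congr rfl fun i _ => by rw [Finset.sum_mul]
    _ ≤ ∑ i : Fin m, ∑ t ∈ Tset i, (H+1)^z :=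
        Finset.sum_le_sum fun i _ => Finset.sum_le_sum fun t _ => hBcard i t
    _ = ∑ i : Fin m, #(Tset i) * (H+1)^z := by
        exact Finset.sum_congr rfl fun i _ => by rw [Finset.sum_const, smul_eq_mul]
    _ ≤ ∑ i : Fin m, (H * (H+1)) * (H+1)^z :=
        Finset.sum_le_sum fun i _ => Nat.mul_le_mul_right _ (hTcard i)
    _ = m * (H * (H+1)) * (H+1)^z := by
        rw [Finset.sum_const, Finset.card_univ, Fintype.card_fin, smul_eq_mul]; ring


lemma rdc_pow_le_factorial (a N : ℕ) (hN : 3 ≤ N) :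
    N ^ (2*a+3) ≤ (⌊(16*(a:ℝ)+24) * Real.log N / Real.log (Real.log N)⌋₊ + 1).factorial := by
  have hN3 : (3:ℝ) ≤ (N:ℝ) := by exact_mod_cast hN
  set L : ℝ := Real.log N with hLdef
  have hL : 1 < L := by
    have h3 : (1:ℝ) < Real.log 3 := by
      rw [Real.lt_log_iff_exp_lt (by norm_num)]
      exact Real.exp_one_lt_d9.trans (by norm_num)
    exact h3.trans_le (Real.log_le_log (by norm_num) hN3)
  have hL0 : 0 < L := by linarith
  set LL : ℝ := Real.log L with hLLdef
  have hLL : 0 < LL := Real.log_pos hL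
  have hs0 : 0 < Real.sqrt L := Real.sqrt_pos.mpr hL0
  have hs1 : 1 ≤ Real.sqrt L := by
    rw [show (1:ℝ) = Real.sqrt 1 by simp]
    exact Real.sqrt_le_sqrt hL.le
  have hLLle : LL ≤ 2 * Real.sqrt L := by
    have h1 : Real.log (Real.sqrt L) ≤ Real.sqrt L - 1 := Real.log_le_sub_one_of_pos hs0
    have h2 : Real.log (Real.sqrt L) = LL / 2 := Real.log_sqrt hL0.le
    linarith
  set C : ℝ := 16*(a:ℝ)+24 with hCdef
  have hC : 24 ≤ C := by
    have : (0:ℝ) ≤ (a:ℝ) := Nat.cast_nonneg a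
    linarith
  set θ : ℝ := C * L / LL with hθdef
  have hLsq : Real.sqrt L * Real.sqrt L = L := Real.mul_self_sqrt hL0.le
  have hθsq : C * Real.sqrt L / 2 ≤ θ := by
    have h1 : C * L / (2 * Real.sqrt L) ≤ C * L / LL :=
      div_le_div_of_nonneg_left (by positivity) hLL hLLle
    have h2 : C * L / (2 * Real.sqrt L) = C * Real.sqrt L / 2 := by
      field_simp; linear_combination (-1)*hLsq
    linarith
  have hθ12 : 12 ≤ θ := by nlinarith
  set R : ℕ := ⌊θ⌋₊ + 1 with hRdef
  have hθR : θ < R := by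
    have := Nat.lt_floor_add_one θ
    push_cast
    exact_mod_cast this
  set f : ℕ := R / 2 with hfdef
  have hRf : (R:ℝ) ≤ 2 * (f:ℝ) + 1 := by
    have : R ≤ 2 * f + 1 := by omega
    exact_mod_cast this
  have hfθ : (θ - 1) / 2 < (f:ℝ) := by linarith
  have hfθ4 : θ / 4 ≤ (f:ℝ) := by linarith
  set g : ℝ := (f:ℝ) + 1 with hgdef
  have hgθ : θ / 2 ≤ g := by linarith
  have hlogg : LL / 2 ≤ Real.log g := by
    have hsg : Real.sqrt L ≤ g := by nlinarith
    have := Real.log_le_log hs0 hsg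
    rw [Real.log_sqrt hL0.le] at this
    linarith
  have hflogg : ((2*a+3 : ℕ) : ℝ) * L ≤ (f:ℝ) * Real.log g := by
    have h1 : θ / 4 * (LL / 2) ≤ (f:ℝ) * Real.log g :=
      mul_le_mul hfθ4 hlogg (by positivity) (Nat.cast_nonneg f)
    have h2 : θ / 4 * (LL / 2) = C * L / 8 := by
      rw [hθdef]; field_simp; ring
    have h3 : ((2*a+3 : ℕ) : ℝ) * L = C * L / 8 := by
      push_cast; rw [hCdef]; ring
    linarith
  have hreal : ((N:ℝ)) ^ (2*a+3) ≤ g ^ f := by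
    rw [← Real.log_le_log_iff (by positivity) (by positivity)]
    rw [Real.log_pow, Real.log_pow]
    exact hflogg
  have hnat : N ^ (2*a+3) ≤ (f+1) ^ f := by
    have : ((N:ℝ)) ^ (2*a+3) ≤ (((f+1 : ℕ)):ℝ) ^ f := by push_cast; exact hreal
    exact_mod_cast this
  calc N ^ (2*a+3) ≤ (f+1) ^ f := hnat
    _ ≤ f.factorial * (f+1) ^ f := Nat.le_mul_of_pos_left _ f.factorial_pos
    _ ≤ (f + f).factorial := Nat.factorial_mul_pow_le_factorial
    _ ≤ R.factorial := Nat.factorial_le (by omega)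


lemma rdc_finish {β : Type*} [Fintype β] (p : β → Prop) [DecidablePred p]
    (N tot : ℕ) (x : ℝ) (hx : ((N : ℕ) : ℝ) = x) (hN3 : 3 ≤ N)
    (htot : Fintype.card β = tot)
    (hcount : N * Finset.card (Finset.univ.filter fun b => ¬ p b) ≤ tot) :
    (1 - 1/x) * (tot : ℝ) ≤ (Finset.card (Finset.univ.filter p) : ℝ) := by
  have hsplit : Finset.card (Finset.univ.filter p) + Finset.card (Finset.univ.filter fun b => ¬ p b) = tot := by
    rw [← htot, ← Finset.card_univ]
    exact Finset.card_filter_add_card_filter_not p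
  have hxpos : (0:ℝ) < x := by
    rw [← hx]; exact_mod_cast lt_of_lt_of_le (by norm_num : 0 < 3) hN3
  have hcount' : x * (Finset.card (Finset.univ.filter fun b => ¬ p b) : ℝ) ≤ (tot:ℝ) := by
    rw [← hx]; exact_mod_cast hcount
  have hg : (Finset.card (Finset.univ.filter p) : ℝ) + (Finset.card (Finset.univ.filter fun b => ¬ p b) : ℝ)
      = (tot : ℝ) := by exact_mod_cast hsplit
  have hb : (Finset.card (Finset.univ.filter fun b => ¬ p b) : ℝ) ≤ (tot:ℝ)/x :=
    (le_div_iff₀ hxpos).mpr (by linarith)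
  have h2 : (1 - 1/x) * (tot:ℝ) = (tot:ℝ) - (tot:ℝ)/x := by ring
  linarith




open Classical in
/-- **random-delay congestion bound.** Given finite chain schedules
`occ k t ⊆ M` (the machines used by chain `k` at its local timestep `t`, at most one job
of chain `k` per machine), with load `H = max_i ∑_k #{t | i ∈ occ k t}` satisfying
`H ≤ (n+m)^a`, if each chain is shifted by an independent uniformly random delay
`δ k ∈ {0,…,H}`, then with probability at least `1 − 1/(n+m)` every machine at every
superstep is assigned jobs by at most `C(a) · log(n+m) / log log(n+m)` distinct chains.
The probability is expressed by counting delay vectors. -/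
theorem random_delay_congestion :
    ∀ a : ℕ, ∃ C : ℝ, 0 < C ∧
      ∀ (z n m : ℕ) (occ : Fin z → ℕ → Finset (Fin m)) (T : ℕ),
        (∀ k t, T ≤ t → occ k t = ∅) →
        ∀ H : ℕ,
          H = (Finset.univ.sup fun i : Fin m =>
            ∑ k : Fin z, ((Finset.range T).filter fun t => i ∈ occ k t).card) →
          H ≤ (n + m) ^ a → 3 ≤ n + m →
          (1 - 1 / (n + m : ℝ)) * ((H + 1) ^ z : ℕ) ≤
            ((Finset.univ.filter fun δ : Fin z → Fin (H + 1) =>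
              ∀ (t : ℕ) (i : Fin m),
                (((Finset.univ.filter fun k : Fin z =>
                    (δ k : ℕ) ≤ t ∧ i ∈ occ k (t - (δ k : ℕ))).card : ℕ) : ℝ) ≤
                  C * Real.log (n + m) / Real.log (Real.log (n + m))).card : ℝ) := by
  intro a
  refine ⟨16*(a:ℝ)+24, by positivity, ?_⟩
  intro z n m occ T hT H hH hHa hN
  refine rdc_finish _ (n+m) ((H+1)^z) _ (by push_cast; ring) hN (by simp) ?_
  -- counting bound
  have hN3 : (3:ℝ) ≤ (n:ℝ) + (m:ℝ) := by exact_mod_cast hN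
  have hL : 1 < Real.log ((n:ℝ) + (m:ℝ)) := by
    have h3 : (1:ℝ) < Real.log 3 := by
      rw [Real.lt_log_iff_exp_lt (by norm_num)]
      exact Real.exp_one_lt_d9.trans (by norm_num)
    exact h3.trans_le (Real.log_le_log (by norm_num) hN3)
  have hLL : 0 < Real.log (Real.log ((n:ℝ) + (m:ℝ))) := Real.log_pos hL
  set θ : ℝ := (16*(a:ℝ)+24) * Real.log ((n:ℝ) + (m:ℝ)) /
    Real.log (Real.log ((n:ℝ) + (m:ℝ))) with hθdef
  have hθ0 : 0 ≤ θ := by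
    have h0 : (0:ℝ) ≤ Real.log ((n:ℝ) + (m:ℝ)) := by linarith
    have h0' : (0:ℝ) ≤ (16*(a:ℝ)+24) := by positivity
    exact div_nonneg (mul_nonneg h0' h0) hLL.le
  set R : ℕ := ⌊θ⌋₊ + 1 with hRdef
  have hload : ∀ i : Fin m,
      (∑ k : Fin z, ((Finset.range T).filter fun t => i ∈ occ k t).card) ≤ H := by
    intro i
    have := Finset.le_sup (f := fun i : Fin m =>
      ∑ k : Fin z, ((Finset.range T).filter fun t => i ∈ occ k t).card)
      (Finset.mem_univ i)
    rw [← hH] at this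
    exact this
  have hRfact : (n+m)^(2*a+3) ≤ R.factorial := by
    have h := rdc_pow_le_factorial a (n+m) hN
    rw [hRdef, hθdef]
    rwa [Nat.cast_add] at h
  have hNb : (n+m) * m * H * (H+1) ≤ (n+m)^(2*a+3) := by
    have hm : m ≤ n + m := Nat.le_add_left m n
    have hNa : 1 ≤ (n+m)^a := Nat.one_le_pow _ _ (by omega)
    have h1 : H + 1 ≤ (n+m)^(a+1) := by
      have h2 : H + 1 ≤ 2 * (n+m)^a := by omega
      have h3 : 2 * (n+m)^a ≤ (n+m) * (n+m)^a :=
        Nat.mul_le_mul_right _ (by omega)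
      calc H + 1 ≤ 2 * (n+m)^a := h2
        _ ≤ (n+m) * (n+m)^a := h3
        _ = (n+m)^(a+1) := by ring
    calc (n+m) * m * H * (H+1) ≤ (n+m) * (n+m) * (n+m)^a * (n+m)^(a+1) := by
          exact Nat.mul_le_mul (Nat.mul_le_mul (Nat.mul_le_mul le_rfl hm) hHa) h1
      _ = (n+m)^(2*a+3) := by ring
  have hgen : ∀ (s : Finset (Fin z → Fin (H+1))),
      (∀ δ ∈ s, ¬ ∀ (t : ℕ) (i : Fin m),
        (((Finset.univ.filter fun k : Fin z =>
            (δ k : ℕ) ≤ t ∧ i ∈ occ k (t - (δ k : ℕ))).card : ℕ) : ℝ) ≤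
          (16*(a:ℝ)+24) * Real.log ((n:ℝ) + (m:ℝ)) /
            Real.log (Real.log ((n:ℝ) + (m:ℝ)))) →
      (n+m) * s.card ≤ (H+1)^z := by
    intro s hsneg
    have hsub : ∀ δ ∈ s, ∃ t : ℕ, ∃ i : Fin m,
        R ≤ (Finset.univ.filter fun k : Fin z =>
          (δ k : ℕ) ≤ t ∧ i ∈ occ k (t - (δ k : ℕ))).card := by
      intro δ hδ
      have h2 := hsneg δ hδ
      push_neg at h2
      obtain ⟨t, i, hti⟩ := h2
      refine ⟨t, i, ?_⟩
      have := (Nat.floor_lt hθ0).mpr hti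
      omega
    have hscount := rdc_count occ T hT H hload R (by omega) s hsub
    have hkey : ((n+m) * s.card) * R.factorial ≤ ((H+1)^z) * R.factorial := by
      calc ((n+m) * s.card) * R.factorial
          = (n+m) * (s.card * R.factorial) := by ring
        _ ≤ (n+m) * (m * (H * (H+1)) * (H+1)^z) := Nat.mul_le_mul_left _ hscount
        _ = ((n+m) * m * H * (H+1)) * (H+1)^z := by ring
        _ ≤ (n+m)^(2*a+3) * (H+1)^z := Nat.mul_le_mul_right _ hNb
        _ ≤ R.factorial * (H+1)^z := Nat.mul_le_mul_right _ hRfact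
        _ = ((H+1)^z) * R.factorial := by ring
    exact Nat.le_of_mul_le_mul_right hkey R.factorial_pos
  exact hgen _ (fun δ hδ => (Finset.mem_filter.mp hδ).2)
end

section
/- Let η ≥ 2 and let W > 0 satisfy log₂ η ≤ W. Let y_1,…,y_N be independent random variables with P(y_j = k) = (1/2)^k for every integer k ≥ 1, and let d_1,…,d_N be reals with 1 ≤ d_j ≤ W/log₂ η for each j and Σ_j 2·d_j ≤ W. Then there is a universal constant C such that for every c ≥ log₂ e, P( Σ_j y_j·d_j > C·c·W ) ≤ η^{−c}. -/
open MeasureTheory ENNReal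

lemma geom_exp_integral {Ω : Type} [MeasurableSpace Ω] (μ : Measure Ω) [IsProbabilityMeasure μ]
    (Y : Ω → ℕ) (hY : Measurable Y)
    (hpmf : ∀ k : ℕ, 1 ≤ k → μ {ω | Y ω = k} = ENNReal.ofReal ((1 / 2 : ℝ) ^ k))
    (s : ℝ) (hs0 : 0 ≤ s) (hs2 : Real.exp s < 2) :
    Integrable (fun ω => Real.exp (s * (Y ω : ℝ))) μ ∧
      ∫ ω, Real.exp (s * (Y ω : ℝ)) ∂μ = Real.exp s / (2 - Real.exp s) := by
  have hx1 : (1:ℝ) ≤ Real.exp s := Real.one_le_exp hs0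
  set x := Real.exp s with hxdef
  set q : ℝ := x / 2 with hqdef
  have hq0 : 0 ≤ q := by positivity
  have hq1 : q < 1 := by rw [hqdef]; linarith
  set ν : Measure ℕ := μ.map Y with hν
  have : IsProbabilityMeasure ν := Measure.isProbabilityMeasure_map hY.aemeasurable
  have hmap : ∀ k : ℕ, ν {k} = μ {ω | Y ω = k} := by
    intro k
    rw [hν, Measure.map_apply hY (MeasurableSet.singleton k)]
    rfl
  have hsucc : ∀ k : ℕ, ν {k + 1} = ENNReal.ofReal ((1 / 2 : ℝ) ^ (k + 1)) := by
    intro k; rw [hmap]; exact hpmf (k+1) (Nat.succ_le_succ (Nat.zero_le k))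
  have hsumsucc : ∑' k : ℕ, ν {k + 1} = 1 := by
    have h2 : ENNReal.ofReal ((1:ℝ)/2) = (2:ℝ≥0∞)⁻¹ := by
      rw [show (1/2:ℝ) = (2:ℝ)⁻¹ by norm_num, ENNReal.ofReal_inv_of_pos two_pos,
        ENNReal.ofReal_ofNat]
    have hterm : ∀ k : ℕ, ν {k+1} = ((2:ℝ≥0∞)⁻¹) ^ (k+1) := by
      intro k
      rw [hsucc k, ENNReal.ofReal_pow (by norm_num), h2]
    rw [tsum_congr hterm, ENNReal.tsum_geometric_add_one, ENNReal.one_sub_inv_two, inv_inv,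
      ENNReal.inv_mul_cancel] <;> norm_num
  have htot : ∑' k : ℕ, ν {k} = 1 := by
    have h := Measure.tsum_indicator_apply_singleton ν Set.univ MeasurableSet.univ
    simpa using h
  have h0 : ν {0} = 0 := by
    have hz := tsum_eq_zero_add' (f := fun k : ℕ => ν {k}) ENNReal.summable
    rw [htot, hsumsucc] at hz
    have h' : ν {0} + 1 = 0 + 1 := by rw [zero_add]; exact hz.symm
    exact WithTop.add_right_cancel ENNReal.one_ne_top h'
  -- measurability
  have hm : Measurable fun ω => Real.exp (s * (Y ω : ℝ)) :=
    Real.measurable_exp.comp (measurable_const.mul (measurable_from_top.comp hY))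
  have hg : Measurable fun n : ℕ => ENNReal.ofReal (Real.exp (s * (n : ℝ))) :=
    measurable_from_top
  -- key lintegral computation
  have hlint : ∫⁻ ω, ENNReal.ofReal (Real.exp (s * (Y ω : ℝ))) ∂μ
      = ENNReal.ofReal (x / (2 - x)) := by
    have h1 : ∫⁻ ω, ENNReal.ofReal (Real.exp (s * (Y ω : ℝ))) ∂μ
        = ∫⁻ n, ENNReal.ofReal (Real.exp (s * (n : ℝ))) ∂ν := by
      rw [hν, lintegral_map hg hY]
    rw [h1, lintegral_countable' (fun n : ℕ => ENNReal.ofReal (Real.exp (s * (n : ℝ))))]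
    rw [tsum_eq_zero_add' (f := fun n : ℕ =>
      ENNReal.ofReal (Real.exp (s * (n : ℝ))) * ν {n}) ENNReal.summable]
    rw [h0, mul_zero, zero_add]
    have hterm : ∀ n : ℕ, ENNReal.ofReal (Real.exp (s * ((n+1 : ℕ) : ℝ))) * ν {n+1}
        = (ENNReal.ofReal q) ^ (n+1) := by
      intro n
      rw [hsucc n, ← ENNReal.ofReal_mul (Real.exp_nonneg _), ← ENNReal.ofReal_pow hq0]
      congr 1
      rw [hqdef, div_pow, hxdef]
      rw [show s * ((n+1 : ℕ) : ℝ) = ((n+1 : ℕ) : ℝ) * s by ring, Real.exp_nat_mul]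
      rw [div_eq_mul_inv, mul_comm ((Real.exp s)^(n+1)), ← inv_pow]
      push_cast
      ring_nf
    rw [tsum_congr hterm, ENNReal.tsum_geometric_add_one]
    have hsub : 1 - ENNReal.ofReal q = ENNReal.ofReal (1 - q) := by
      rw [ENNReal.ofReal_sub 1 hq0, ENNReal.ofReal_one]
    rw [hsub, ← ENNReal.ofReal_inv_of_pos (by linarith), ← ENNReal.ofReal_mul hq0]
    congr 1
    rw [hqdef]
    have h2x : 2 - x > 0 := by linarith
    field_simp
  have hnn : 0 ≤ x / (2 - x) := by
    apply div_nonneg (by positivity) (by linarith)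
  constructor
  · refine ⟨hm.aestronglyMeasurable, ?_⟩
    rw [hasFiniteIntegral_iff_ofReal (Filter.Eventually.of_forall fun ω => Real.exp_nonneg _)]
    rw [hlint]
    exact ENNReal.ofReal_lt_top
  · rw [integral_eq_lintegral_of_nonneg_ae
      (Filter.Eventually.of_forall fun ω => Real.exp_nonneg _) hm.aestronglyMeasurable, hlint,
      ENNReal.toReal_ofReal hnn]

/-- Let `η ≥ 2` and `W ≥ log₂ η`.  Let `y 1, …, y N` be independent
geometric random variables with `P(y j = k) = (1/2)^k` for `k ≥ 1`, and let weights
`d j` satisfy `1 ≤ d j ≤ W / log₂ η` and `∑ j, 2 d j ≤ W`.  Then there is a universal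
constant `C` such that for every `c ≥ log₂ e`, `P(∑ j, y j · d j > C c W) ≤ η^{-c}`. -/
theorem weighted_geometric_tail :
    ∃ C : ℝ, 0 < C ∧
      ∀ (Ω : Type) (_ : MeasurableSpace Ω) (μ : Measure Ω), IsProbabilityMeasure μ →
        ∀ (N : ℕ) (y : Fin N → Ω → ℕ),
          (∀ j, Measurable (y j)) →
          ProbabilityTheory.iIndepFun y μ →
          (∀ j, ∀ k : ℕ, 1 ≤ k → μ {ω | y j ω = k} = ENNReal.ofReal ((1 / 2 : ℝ) ^ k)) →
          ∀ (η W : ℝ), 2 ≤ η → Real.logb 2 η ≤ W →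
            ∀ d : Fin N → ℝ, (∀ j, 1 ≤ d j) → (∀ j, d j ≤ W / Real.logb 2 η) →
              (∑ j, 2 * d j) ≤ W →
              ∀ c : ℝ, Real.logb 2 (Real.exp 1) ≤ c →
                μ {ω | C * c * W < ∑ j, (y j ω : ℝ) * d j} ≤
                  ENNReal.ofReal (η ^ (-c)) := by
  refine ⟨4, by norm_num, ?_⟩
  intro Ω _ μ hprob N y hmeas hindep hpmf η W hη hWlb d hd1 hd2 hdsum c hc
  have hlog2 : 0 < Real.log 2 := Real.log_pos one_lt_two
  have hηpos : (0:ℝ) < η := by linarith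
  have hlogη : 0 < Real.log η := Real.log_pos (by linarith)
  have hlb1 : 1 ≤ Real.logb 2 η := by
    rw [Real.logb, le_div_iff₀ hlog2, one_mul]
    exact Real.log_le_log (by norm_num) hη
  have hW : (0:ℝ) < W := by linarith
  have hc1 : 1 ≤ c := by
    have h1 : Real.logb 2 (Real.exp 1) = 1 / Real.log 2 := by
      rw [Real.logb, Real.log_exp]
    have h2 : Real.log 2 < 1 := by
      have := Real.log_two_lt_d9; linarith
    have : (1:ℝ) ≤ 1 / Real.log 2 := by
      rw [le_div_iff₀ hlog2, one_mul]; linarith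
    linarith [hc, h1 ▸ hc]
  set t : ℝ := Real.log η / (2 * W) with htdef
  have ht : 0 < t := by positivity
  set X : Fin N → Ω → ℝ := fun j ω => (y j ω : ℝ) * d j with hXdef
  have hXmeas : ∀ j, Measurable (X j) := fun j =>
    (measurable_from_top.comp (hmeas j)).mul_const (d j)
  have hXindep : ProbabilityTheory.iIndepFun X μ :=
    hindep.comp (fun j (n : ℕ) => (n : ℝ) * d j) (fun j => measurable_from_top)
  -- per-coordinate bounds
  have hsle : ∀ j, t * d j ≤ Real.log 2 / 2 := by
    intro j
    have hkey : t * (W / Real.logb 2 η) = Real.log 2 / 2 := by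
      rw [htdef, Real.logb]
      field_simp
    calc t * d j ≤ t * (W / Real.logb 2 η) :=
          mul_le_mul_of_nonneg_left (hd2 j) ht.le
      _ = Real.log 2 / 2 := hkey
  have hs0 : ∀ j, 0 ≤ t * d j := fun j => mul_nonneg ht.le (by linarith [hd1 j])
  have hexp_sq : ∀ j, Real.exp (t * d j) ^ 2 ≤ 2 := by
    intro j
    have : Real.exp (t * d j) ^ 2 = Real.exp (2 * (t * d j)) := by
      rw [show (2:ℝ) * (t * d j) = ((2:ℕ):ℝ) * (t * d j) by norm_num, Real.exp_nat_mul]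
    rw [this]
    calc Real.exp (2 * (t * d j)) ≤ Real.exp (Real.log 2) := by
          apply Real.exp_le_exp.2; linarith [hsle j]
      _ = 2 := Real.exp_log (by norm_num)
  have hexp_lt2 : ∀ j, Real.exp (t * d j) < 2 := by
    intro j
    nlinarith [hexp_sq j, Real.exp_pos (t * d j)]
  have hInt : ∀ j, Integrable (fun ω => Real.exp (t * X j ω)) μ := by
    intro j
    have heq : (fun ω => Real.exp (t * X j ω))
        = fun ω => Real.exp ((t * d j) * (y j ω : ℝ)) := by
      funext ω; congr 1; rw [hXdef]; ring
    rw [heq]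
    exact (geom_exp_integral μ (y j) (hmeas j) (hpmf j) (t * d j) (hs0 j) (hexp_lt2 j)).1
  have hmgf : ∀ j, ProbabilityTheory.mgf (X j) μ t ≤ Real.exp (3 * (t * d j)) := by
    intro j
    have heq : (fun ω => Real.exp (t * X j ω))
        = fun ω => Real.exp ((t * d j) * (y j ω : ℝ)) := by
      funext ω; congr 1; rw [hXdef]; ring
    have hval : ProbabilityTheory.mgf (X j) μ t
        = Real.exp (t * d j) / (2 - Real.exp (t * d j)) := by
      rw [ProbabilityTheory.mgf]
      rw [show (fun ω => Real.exp (t * X j ω)) = _ from heq]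
      exact (geom_exp_integral μ (y j) (hmeas j) (hpmf j) (t * d j) (hs0 j) (hexp_lt2 j)).2
    rw [hval]
    set x := Real.exp (t * d j) with hxdef
    have hx1 : (1:ℝ) ≤ x := Real.one_le_exp (hs0 j)
    have hx2 : x < 2 := hexp_lt2 j
    have hxsq : x ^ 2 ≤ 2 := hexp_sq j
    have hexp3 : Real.exp (3 * (t * d j)) = x ^ 3 := by
      rw [show (3:ℝ) * (t * d j) = ((3:ℕ):ℝ) * (t * d j) by norm_num, Real.exp_nat_mul]
    rw [hexp3, div_le_iff₀ (by linarith)]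
    have key : x * ((x - 1) * (x ^ 2 - x - 1)) ≤ 0 :=
      mul_nonpos_of_nonneg_of_nonpos (by linarith)
        (mul_nonpos_of_nonneg_of_nonpos (by linarith) (by nlinarith))
    nlinarith [key]
  -- Chernoff
  set S : Ω → ℝ := ∑ j : Fin N, X j with hSdef
  have hIntS : Integrable (fun ω => Real.exp (t * S ω)) μ :=
    hXindep.integrable_exp_mul_sum hXmeas (fun j _ => hInt j)
  have hcher := ProbabilityTheory.measure_ge_le_exp_mul_mgf (μ := μ) (X := S)
    (4 * c * W) ht.le hIntS
  have hmgfS : ProbabilityTheory.mgf S μ t = ∏ j, ProbabilityTheory.mgf (X j) μ t :=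
    hXindep.mgf_sum hXmeas Finset.univ
  have hprod : ∏ j, ProbabilityTheory.mgf (X j) μ t ≤ Real.exp (Real.log η * (3/4)) := by
    calc ∏ j, ProbabilityTheory.mgf (X j) μ t
        ≤ ∏ j, Real.exp (3 * (t * d j)) :=
          Finset.prod_le_prod (fun j _ => ProbabilityTheory.mgf_nonneg) (fun j _ => hmgf j)
      _ = Real.exp (∑ j, 3 * (t * d j)) := (Real.exp_sum _ _).symm
      _ ≤ Real.exp (Real.log η * (3/4)) := by
          apply Real.exp_le_exp.2
          have hsum : ∑ j, 3 * (t * d j) = (3 / 2) * t * (∑ j, 2 * d j) := by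
            rw [Finset.mul_sum]; apply Finset.sum_congr rfl; intro j _; ring
          have h2 : (3/2) * t * (∑ j, 2 * d j) ≤ (3/2) * t * W := by
            apply mul_le_mul_of_nonneg_left hdsum (by positivity)
          have htW : t * W = Real.log η / 2 := by
            rw [htdef]; field_simp
          rw [hsum]
          calc (3/2) * t * (∑ j, 2 * d j) ≤ (3/2) * t * W := h2
            _ = (3/2) * (t * W) := by ring
            _ = Real.log η * (3/4) := by rw [htW]; ring
  have hmain : Real.exp (-t * (4 * c * W)) * ProbabilityTheory.mgf S μ t
      ≤ Real.exp (Real.log η * (-c)) := by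
    have htW : t * W = Real.log η / 2 := by rw [htdef]; field_simp
    calc Real.exp (-t * (4 * c * W)) * ProbabilityTheory.mgf S μ t
        ≤ Real.exp (-t * (4 * c * W)) * Real.exp (Real.log η * (3/4)) := by
          apply mul_le_mul_of_nonneg_left (hmgfS ▸ hprod) (Real.exp_nonneg _)
      _ = Real.exp (-t * (4 * c * W) + Real.log η * (3/4)) := (Real.exp_add _ _).symm
      _ ≤ Real.exp (Real.log η * (-c)) := by
          apply Real.exp_le_exp.2
          have : -t * (4 * c * W) = -(4 * c) * (t * W) := by ring
          rw [this, htW]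
          nlinarith [hlogη, hc1]
  -- assemble
  have hsub : {ω | 4 * c * W < ∑ j, (y j ω : ℝ) * d j} ⊆ {ω | 4 * c * W ≤ S ω} := by
    intro ω hω
    have : S ω = ∑ j, (y j ω : ℝ) * d j := by
      rw [hSdef, Finset.sum_apply]
    rw [Set.mem_setOf_eq, this]
    exact le_of_lt hω
  calc μ {ω | 4 * c * W < ∑ j, (y j ω : ℝ) * d j}
      ≤ μ {ω | 4 * c * W ≤ S ω} := measure_mono hsub
    _ = ENNReal.ofReal ((μ {ω | 4 * c * W ≤ S ω}).toReal) :=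
        (ENNReal.ofReal_toReal (measure_ne_top μ _)).symm
    _ ≤ ENNReal.ofReal (η ^ (-c)) := by
        apply ENNReal.ofReal_le_ofReal
        rw [Real.rpow_def_of_pos hηpos]
        exact le_trans hcher hmain
end

section
/- Equivalence of SUU and SUU*: fix a schedule Σ and a time t, and let the history after t−1 steps be the sequence ⟨S_1,…,S_t⟩ of sets of uncompleted jobs at the start of each step. Then for every sequence of job subsets ⟨S_1,…,S_t⟩ with J = S_1 ⊇ S_2 ⊇ ⋯ ⊇ S_t, the probability that the history equals ⟨S_1,…,S_t⟩ is the same under the SUU execution and under the SUU* execution of Σ. -/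
open MeasureTheory ENNReal

namespace SUU

variable {J M : Type} [Fintype J] [Fintype M]

/- The SUU* execution of a schedule `S` with hidden random values `r j`, under precedence
relation `prec`: returns (surviving jobs, history of surviving sets (newest first),
accumulated log mass of each job) after `t` steps. -/
open Classical in
noncomputable def exec (I : SUU J M) (prec : J → J → Prop) (S : Schedule J M)
    (r : J → ℝ) : ℕ → Finset J × List (Finset J) × (J → ℝ≥0∞)
  | 0 => (Finset.univ, [Finset.univ], fun _ => 0)
  | (t + 1) =>
      let p := exec I prec S r t
      let cur := p.1
      let h := p.2.1
      let w := p.2.2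
      let w' : J → ℝ≥0∞ := fun j =>
        w j + if j ∈ cur ∧ (∀ j', prec j' j → j' ∉ cur)
              then ∑ i ∈ S h j, I.ell i j else 0
      let cur' : Finset J := cur.filter fun j => w' j < ENNReal.ofReal (-Real.logb 2 (r j))
      (cur', cur' :: h, w')

/-- The makespan of schedule `S` on hidden values `r`: the first time all jobs complete. -/
noncomputable def makespan (I : SUU J M) (prec : J → J → Prop) (S : Schedule J M)
    (r : J → ℝ) : ℝ≥0∞ :=
  ⨅ (t : ℕ) (_ : (I.exec prec S r t).1 = ∅), (t : ℝ≥0∞)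

end SUU

/-- The product of uniform measures on `(0,1)`: the distribution of the hidden values `r`. -/
noncomputable def unifCube (J : Type) [Fintype J] : Measure (J → ℝ) :=
  Measure.pi fun _ => volume.restrict (Set.Ioo (0 : ℝ) 1)

namespace SUU

variable {J M : Type} [Fintype J] [Fintype M]

/-- The expected makespan `E[T_Σ]` of schedule `S`. -/
noncomputable def expMakespan (I : SUU J M) (prec : J → J → Prop) (S : Schedule J M) : ℝ≥0∞ :=
  ∫⁻ r, I.makespan prec S r ∂(unifCube J)

/-- The optimal expected makespan `E[T_OPT]`. -/
noncomputable def optMakespan (I : SUU J M) (prec : J → J → Prop) : ℝ≥0∞ :=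
  ⨅ S : Schedule J M, I.expMakespan prec S

end SUU

namespace SUU

variable {J M : Type} [Fintype J] [Fintype M]

/- The probability, under the original (per-step coin-flipping) SUU execution of schedule
`S`, that the history of surviving-job sets (newest first) equals the given list: at each
step, a surviving job assigned machines `M_{j,t}` independently fails to complete with
probability `∏_{i ∈ M_{j,t}} q i j`. -/
open Classical in
noncomputable def suuProb (I : SUU J M) (S : Schedule J M) :
    List (Finset J) → ℝ≥0∞
  | [] => 1
  | [S1] => if S1 = (Finset.univ : Finset J) then 1 else 0
  | S' :: cur :: h =>
      (∏ j : J,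
        if j ∈ cur then
          (if j ∈ S' then ∏ i ∈ S (cur :: h) j, ENNReal.ofReal (I.q i j)
           else 1 - ∏ i ∈ S (cur :: h) j, ENNReal.ofReal (I.q i j))
        else if j ∈ S' then 0 else 1) *
      suuProb I S (cur :: h)

end SUU

/- ===== auxiliary development for suu_star_history_equiv ===== -/

noncomputable def suuTheta (x : ℝ) : ℝ≥0∞ := ENNReal.ofReal (-Real.logb 2 x)

noncomputable def suuEN (W : ℝ≥0∞) : ℝ := if W = ⊤ then 0 else (2:ℝ) ^ (-W.toReal)

noncomputable def suuExp (W : ℝ≥0∞) : ℝ≥0∞ := ENNReal.ofReal (suuEN W)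

lemma suuEN_le_one (W : ℝ≥0∞) : suuEN W ≤ 1 := by
  unfold suuEN; split
  · norm_num
  · exact Real.rpow_le_one_of_one_le_of_nonpos one_le_two
      (neg_nonpos.2 ENNReal.toReal_nonneg)

lemma suuExp_le_one (W : ℝ≥0∞) : suuExp W ≤ 1 := by
  simpa [suuExp] using ENNReal.ofReal_le_one.2 (suuEN_le_one W)

lemma suuExp_ne_top (W : ℝ≥0∞) : suuExp W ≠ ⊤ := ENNReal.ofReal_ne_top

lemma suuExp_zero : suuExp 0 = 1 := by
  simp [suuExp, suuEN]

lemma suuExp_add (a b : ℝ≥0∞) : suuExp (a + b) = suuExp a * suuExp b := by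
  by_cases ha : a = ⊤
  · simp [suuExp, suuEN, ha]
  by_cases hb : b = ⊤
  · simp [suuExp, suuEN, hb]
  have hab : a + b ≠ ⊤ := by simp [ha, hb, ENNReal.add_ne_top]
  unfold suuExp suuEN
  rw [if_neg ha, if_neg hb, if_neg hab, ENNReal.toReal_add ha hb, neg_add,
    Real.rpow_add two_pos, ENNReal.ofReal_mul (by positivity)]

lemma suuTheta_set (W : ℝ≥0∞) :
    {x : ℝ | W < suuTheta x} ∩ Set.Ioo 0 1 = Set.Ioo 0 (suuEN W) := by
  by_cases hW : W = ⊤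
  · have h0 : suuEN W = 0 := by simp [suuEN, hW]
    rw [h0, hW]
    ext x
    simp only [Set.mem_inter_iff, Set.mem_setOf_eq, Set.mem_Ioo]
    constructor
    · rintro ⟨h, -⟩; exact absurd h (not_top_lt)
    · rintro ⟨h1, h2⟩; linarith
  · ext x
    simp only [Set.mem_inter_iff, Set.mem_setOf_eq, Set.mem_Ioo]
    have hEN : suuEN W = (2:ℝ) ^ (-W.toReal) := by simp [suuEN, hW]
    constructor
    · rintro ⟨hθ, hx0, hx1⟩
      rw [suuTheta, ENNReal.lt_ofReal_iff_toReal_lt hW] at hθ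
      have h2 : Real.logb 2 x < -W.toReal := by linarith
      rw [hEN]
      exact ⟨hx0, (Real.logb_lt_iff_lt_rpow one_lt_two hx0).1 h2⟩
    · rintro ⟨hx0, hx2⟩
      rw [hEN] at hx2
      have hx1 : x < 1 := lt_of_lt_of_le hx2
        (Real.rpow_le_one_of_one_le_of_nonpos one_le_two
          (neg_nonpos.2 ENNReal.toReal_nonneg))
      refine ⟨?_, hx0, hx1⟩
      rw [suuTheta, ENNReal.lt_ofReal_iff_toReal_lt hW]
      have := (Real.logb_lt_iff_lt_rpow one_lt_two hx0).2 hx2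
      linarith

lemma suuTheta_vol (W : ℝ≥0∞) :
    volume ({x : ℝ | W < suuTheta x} ∩ Set.Ioo 0 1) = suuExp W := by
  rw [suuTheta_set, Real.volume_Ioo, suuExp, sub_zero]

lemma suuExp_ell {J M : Type} [Fintype J] [Fintype M] (I : SUU J M) (i : M) (j : J) :
    suuExp (I.ell i j) = ENNReal.ofReal (I.q i j) := by
  unfold SUU.ell
  by_cases hq : I.q i j = 0
  · simp [hq, suuExp, suuEN]
  · have hq0 : 0 < I.q i j := lt_of_le_of_ne (I.q_nonneg i j) (Ne.symm hq)
    have hlb : Real.logb 2 (I.q i j) ≤ 0 :=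
      Real.logb_nonpos one_lt_two (I.q_nonneg i j) (I.q_le_one i j)
    rw [if_neg hq]
    unfold suuExp suuEN
    rw [if_neg ENNReal.ofReal_ne_top, ENNReal.toReal_ofReal (by linarith), neg_neg,
      Real.rpow_logb two_pos (by norm_num) hq0]

lemma suuExp_sum {α : Type*} (s : Finset α) (f : α → ℝ≥0∞) :
    suuExp (∑ i ∈ s, f i) = ∏ i ∈ s, suuExp (f i) := by
  classical
  induction s using Finset.induction_on with
  | empty => simpa using suuExp_zero
  | insert _ _ hx ih => rename_i a s'
                        rw [Finset.sum_insert hx, Finset.prod_insert hx, suuExp_add, ih]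

section Defs

variable {J M : Type} [Fintype J] [Fintype M]

open Classical in
noncomputable def suuWf (I : SUU J M) (S : Schedule J M) : List (Finset J) → J → ℝ≥0∞
  | [] => fun _ => 0
  | [_] => fun _ => 0
  | (_ :: cur :: h) => fun j =>
      suuWf I S (cur :: h) j + if j ∈ cur then ∑ i ∈ S (cur :: h) j, I.ell i j else 0

open Classical in
noncomputable def suuA (I : SUU J M) (S : Schedule J M) (j : J) : List (Finset J) → Set ℝ
  | [] => Set.univ
  | [_] => Set.univ
  | (S' :: cur :: h) => suuA I S j (cur :: h) ∩
      {x | j ∈ S' ↔ (j ∈ cur ∧ suuWf I S (S' :: cur :: h) j < suuTheta x)}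

open Classical in
noncomputable def suuPJ (I : SUU J M) (S : Schedule J M) (j : J) : List (Finset J) → ℝ≥0∞
  | [] => 1
  | [_] => 1
  | (S' :: cur :: h) =>
      (if j ∈ cur then
        (if j ∈ S' then ∏ i ∈ S (cur :: h) j, ENNReal.ofReal (I.q i j)
         else 1 - ∏ i ∈ S (cur :: h) j, ENNReal.ofReal (I.q i j))
       else if j ∈ S' then 0 else 1) * suuPJ I S j (cur :: h)

open Classical in
lemma suuProb_eq_prod (I : SUU J M) (S : Schedule J M) :
    ∀ L : List (Finset J), L.getLast? = some (Finset.univ : Finset J) →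
      I.suuProb S L = ∏ j : J, suuPJ I S j L
  | [], h => by simp at h
  | [S1], h => by
      have hS1 : S1 = (Finset.univ : Finset J) := by
        simpa using h
      simp [SUU.suuProb, suuPJ, hS1]
  | (S' :: cur :: h'), h => by
      have hlast : (cur :: h').getLast? = some (Finset.univ : Finset J) := by
        rwa [List.getLast?_cons_cons] at h
      rw [show I.suuProb S (S' :: cur :: h') = (∏ j : J,
        if j ∈ cur then
          (if j ∈ S' then ∏ i ∈ S (cur :: h') j, ENNReal.ofReal (I.q i j)
           else 1 - ∏ i ∈ S (cur :: h') j, ENNReal.ofReal (I.q i j))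
        else if j ∈ S' then 0 else 1) * I.suuProb S (cur :: h') from rfl,
        suuProb_eq_prod I S (cur :: h') hlast, ← Finset.prod_mul_distrib]
      exact Finset.prod_congr rfl fun j _ => rfl

end Defs

section Main

variable {J M : Type} [Fintype J] [Fintype M]

lemma suuEN_zero : suuEN 0 = 1 := by simp [suuEN]

open Classical in
lemma suuA_inv (I : SUU J M) (S : Schedule J M) (j : J) :
    ∀ L : List (Finset J), List.Chain' (· ⊆ ·) L →
      L.getLast? = some (Finset.univ : Finset J) →
      (∀ cur h', L = cur :: h' → j ∈ cur →
        suuA I S j L ∩ Set.Ioo 0 1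
          = {x : ℝ | suuWf I S L j < suuTheta x} ∩ Set.Ioo 0 1)
      ∧ volume (suuA I S j L ∩ Set.Ioo 0 1) = suuPJ I S j L
  | [], _, hl => by simp at hl
  | [S1], _, hl => by
      have hS1 : S1 = (Finset.univ : Finset J) := by simpa using hl
      have hset : suuA I S j [S1] ∩ Set.Ioo 0 1
          = {x : ℝ | suuWf I S [S1] j < suuTheta x} ∩ Set.Ioo 0 1 := by
        have h0 : suuWf I S [S1] j = 0 := rfl
        rw [h0, suuTheta_set, suuEN_zero]
        simp [suuA]
      refine ⟨fun _ _ _ _ => hset, ?_⟩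
      rw [hset, suuTheta_vol, show suuWf I S [S1] j = 0 from rfl, suuExp_zero]
      simp [suuPJ]
  | (S' :: cur :: h'), hch, hl => by
      have hsub : S' ⊆ cur := (List.isChain_cons_cons.mp hch).1
      have hch' : List.Chain' (· ⊆ ·) (cur :: h') := (List.isChain_cons_cons.mp hch).2
      have hl' : (cur :: h').getLast? = some (Finset.univ : Finset J) := by
        rwa [List.getLast?_cons_cons] at hl
      obtain ⟨IH1, IH2⟩ := suuA_inv I S j (cur :: h') hch' hl'
      have hprod : (∏ i ∈ S (cur :: h') j, ENNReal.ofReal (I.q i j))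
          = suuExp (∑ i ∈ S (cur :: h') j, I.ell i j) := by
        rw [suuExp_sum]
        exact Finset.prod_congr rfl fun i _ => (suuExp_ell I i j).symm
      by_cases hc : j ∈ cur
      · have hWL : suuWf I S (S' :: cur :: h') j
            = suuWf I S (cur :: h') j + ∑ i ∈ S (cur :: h') j, I.ell i j := by
          simp [suuWf, hc]
        have hA0 : suuA I S j (cur :: h') ∩ Set.Ioo 0 1
            = {x : ℝ | suuWf I S (cur :: h') j < suuTheta x} ∩ Set.Ioo 0 1 :=
          IH1 cur h' rfl hc
        have hμ0 : suuPJ I S j (cur :: h') = suuExp (suuWf I S (cur :: h') j) := by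
          rw [← IH2, hA0, suuTheta_vol]
        have hW0le : suuWf I S (cur :: h') j ≤ suuWf I S (S' :: cur :: h') j := by
          rw [hWL]; exact le_self_add
        by_cases hs : j ∈ S'
        · -- survive
          have hset : suuA I S j (S' :: cur :: h') ∩ Set.Ioo 0 1
              = {x : ℝ | suuWf I S (S' :: cur :: h') j < suuTheta x} ∩ Set.Ioo 0 1 := by
            ext x
            have hx0 := Set.ext_iff.mp hA0 x
            simp only [Set.mem_inter_iff, Set.mem_setOf_eq] at hx0 ⊢
            constructor
            · rintro ⟨⟨hA, hiff⟩, hI⟩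
              exact ⟨(hiff.mp hs).2, hI⟩
            · rintro ⟨hθ, hI⟩
              have hθ0 : suuWf I S (cur :: h') j < suuTheta x := lt_of_le_of_lt hW0le hθ
              exact ⟨⟨(hx0.mpr ⟨hθ0, hI⟩).1, ⟨fun _ => ⟨hc, hθ⟩, fun _ => hs⟩⟩, hI⟩
          refine ⟨fun _ _ _ _ => hset, ?_⟩
          rw [hset, suuTheta_vol, hWL, suuExp_add]
          simp only [suuPJ, hc, hs, if_true, hprod, hμ0]
          exact mul_comm _ _
        · -- death
          have hset : suuA I S j (S' :: cur :: h') ∩ Set.Ioo 0 1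
              = ({x : ℝ | suuWf I S (cur :: h') j < suuTheta x} ∩ Set.Ioo 0 1) \
                ({x : ℝ | suuWf I S (S' :: cur :: h') j < suuTheta x} ∩ Set.Ioo 0 1) := by
            ext x
            have hx0 := Set.ext_iff.mp hA0 x
            simp only [Set.mem_inter_iff, Set.mem_setOf_eq, Set.mem_diff] at hx0 ⊢
            constructor
            · rintro ⟨⟨hA, hiff⟩, hI⟩
              refine ⟨⟨(hx0.mp ⟨hA, hI⟩).1, hI⟩, ?_⟩
              rintro ⟨hθ, -⟩
              exact hs (hiff.mpr ⟨hc, hθ⟩)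
            · rintro ⟨⟨hθ0, hI⟩, hn⟩
              have hnθ : ¬ suuWf I S (S' :: cur :: h') j < suuTheta x :=
                fun hθ => hn ⟨hθ, hI⟩
              exact ⟨⟨(hx0.mpr ⟨hθ0, hI⟩).1,
                ⟨fun h => absurd h hs, fun h => absurd h.2 hnθ⟩⟩, hI⟩
          have hsub2 : ({x : ℝ | suuWf I S (S' :: cur :: h') j < suuTheta x} ∩ Set.Ioo 0 1)
              ⊆ ({x : ℝ | suuWf I S (cur :: h') j < suuTheta x} ∩ Set.Ioo 0 1) :=
            Set.inter_subset_inter_left _ fun x hx => lt_of_le_of_lt hW0le hx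
          have hnull : NullMeasurableSet
              ({x : ℝ | suuWf I S (S' :: cur :: h') j < suuTheta x} ∩ Set.Ioo 0 1) volume := by
            rw [suuTheta_set]; exact measurableSet_Ioo.nullMeasurableSet
          have hfin : volume ({x : ℝ | suuWf I S (S' :: cur :: h') j < suuTheta x}
              ∩ Set.Ioo 0 1) ≠ ⊤ := by
            rw [suuTheta_vol]; exact suuExp_ne_top _
          constructor
          · rintro cur'' h'' heq hmem
            injection heq with e1 e2
            subst e1
            exact absurd hmem hs
          · rw [hset, measure_diff hsub2 hnull hfin, suuTheta_vol, suuTheta_vol, hWL,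
              suuExp_add]
            simp only [suuPJ, hc, hs, if_true, if_false, hprod, hμ0]
            rw [ENNReal.sub_mul (fun _ _ => suuExp_ne_top _), one_mul, mul_comm]
      · -- j ∉ cur
        have hs' : j ∉ S' := fun h => hc (hsub h)
        have hAeq : suuA I S j (S' :: cur :: h') = suuA I S j (cur :: h') := by
          have : {x : ℝ | j ∈ S' ↔ (j ∈ cur ∧ suuWf I S (S' :: cur :: h') j < suuTheta x)}
              = Set.univ := by
            ext x; simp [hs', hc]
          show suuA I S j (cur :: h') ∩ _ = _
          rw [this, Set.inter_univ]
        constructor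
        · rintro cur'' h'' heq hmem
          injection heq with e1 e2
          subst e1
          exact absurd hmem hs'
        · rw [hAeq, IH2]
          simp [suuPJ, hc, hs']

end Main

section Exec

variable {J M : Type} [Fintype J] [Fintype M]

open Classical in
lemma suu_exec_props (I : SUU J M) (S : Schedule J M) (r : J → ℝ) :
    ∀ t : ℕ,
      (I.exec (fun _ _ => False) S r t).2.1
        = (I.exec (fun _ _ => False) S r t).1
            :: (I.exec (fun _ _ => False) S r t).2.1.tail
      ∧ (I.exec (fun _ _ => False) S r t).2.2
        = suuWf I S ((I.exec (fun _ _ => False) S r t).2.1)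
  | 0 => by
      constructor
      · simp only [SUU.exec, List.tail_cons]
      · funext j
        simp only [SUU.exec]
        rfl
  | (t + 1) => by
      obtain ⟨ih1, ih2⟩ := suu_exec_props I S r t
      constructor
      · simp only [SUU.exec, List.tail_cons]
      · funext j
        simp only [SUU.exec]
        rw [ih2, ih1]
        simp only [suuWf, false_implies, implies_true, and_true]

end Exec

section ExecPi

variable {J M : Type} [Fintype J] [Fintype M]

open Classical in
lemma suu_exec_eq_pi (I : SUU J M) (S : Schedule J M) :
    ∀ (t : ℕ) (L : List (Finset J)), L.length = t + 1 →
      L.getLast? = some (Finset.univ : Finset J) →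
      {r : J → ℝ | (I.exec (fun _ _ => False) S r t).2.1 = L}
        = Set.univ.pi (fun j => suuA I S j L)
  | 0, [], hlen, _ => by simp at hlen
  | 0, (a :: b :: l), hlen, _ => by simp at hlen
  | 0, [S1], _, hl => by
      have hS1 : S1 = (Finset.univ : Finset J) := by simpa using hl
      subst hS1
      ext r
      simp only [Set.mem_setOf_eq, Set.mem_pi, Set.mem_univ, true_implies]
      constructor
      · intro _ j
        show r j ∈ (Set.univ : Set ℝ)
        trivial
      · intro _
        rfl
  | (t + 1), [], hlen, _ => by simp at hlen
  | (t + 1), [S1], hlen, _ => by simp at hlen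
  | (t + 1), (S' :: cur :: h''), hlen, hl => by
      have hlen' : (cur :: h'').length = t + 1 := by simpa using hlen
      have hl' : (cur :: h'').getLast? = some (Finset.univ : Finset J) := by
        rwa [List.getLast?_cons_cons] at hl
      have IH := suu_exec_eq_pi I S t (cur :: h'') hlen' hl'
      ext r
      obtain ⟨hp1, hp2⟩ := suu_exec_props I S r t
      obtain ⟨hq1, hq2⟩ := suu_exec_props I S r (t + 1)
      have hIH : ((I.exec (fun _ _ => False) S r t).2.1 = cur :: h'')
          ↔ ∀ j, r j ∈ suuA I S j (cur :: h'') := by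
        have h := Set.ext_iff.mp IH r
        simpa only [Set.mem_setOf_eq, Set.mem_pi, Set.mem_univ, true_implies] using h
      have hcons : (I.exec (fun _ _ => False) S r (t + 1)).2.1
          = (I.exec (fun _ _ => False) S r (t + 1)).1
              :: (I.exec (fun _ _ => False) S r t).2.1 := by
        simp only [SUU.exec, List.tail_cons]
      have hcur' : (I.exec (fun _ _ => False) S r (t + 1)).1
          = (I.exec (fun _ _ => False) S r t).1.filter
              (fun j => (I.exec (fun _ _ => False) S r (t + 1)).2.2 j
                < ENNReal.ofReal (-Real.logb 2 (r j))) := by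
        simp only [SUU.exec]
      simp only [Set.mem_setOf_eq, Set.mem_pi, Set.mem_univ, true_implies]
      rw [hcons, List.cons.injEq]
      constructor
      · rintro ⟨hfil, hhist⟩
        -- derive facts under hhist
        have hc1 : (I.exec (fun _ _ => False) S r t).1 = cur := by
          rw [hhist] at hp1
          injection hp1 with e1 e2
          exact e1.symm
        have hw : ∀ j', (I.exec (fun _ _ => False) S r (t + 1)).2.2 j'
            = suuWf I S (S' :: cur :: h'') j' := by
          intro j'
          rw [hq2, hcons, hhist]
          show suuWf I S (_ :: cur :: h'') j' = _
          simp only [suuWf]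
        intro j
        have hmemtail : r j ∈ suuA I S j (cur :: h'') := hIH.mp hhist j
        have hiff : j ∈ S' ↔ j ∈ cur ∧ suuWf I S (S' :: cur :: h'') j < suuTheta (r j) := by
          rw [← hfil, hcur', hc1, Finset.mem_filter, hw j]
          exact Iff.rfl
        exact ⟨hmemtail, hiff⟩
      · intro hall
        have hall' : ∀ j, r j ∈ suuA I S j (cur :: h'') ∧
            (j ∈ S' ↔ j ∈ cur ∧ suuWf I S (S' :: cur :: h'') j < suuTheta (r j)) :=
          fun j => hall j
        have hhist : (I.exec (fun _ _ => False) S r t).2.1 = cur :: h'' :=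
          hIH.mpr fun j => (hall' j).1
        have hc1 : (I.exec (fun _ _ => False) S r t).1 = cur := by
          rw [hhist] at hp1
          injection hp1 with e1 e2
          exact e1.symm
        have hw : ∀ j', (I.exec (fun _ _ => False) S r (t + 1)).2.2 j'
            = suuWf I S (S' :: cur :: h'') j' := by
          intro j'
          rw [hq2, hcons, hhist]
          show suuWf I S (_ :: cur :: h'') j' = _
          simp only [suuWf]
        refine ⟨?_, hhist⟩
        rw [hcur', hc1]
        ext j
        rw [Finset.mem_filter, hw j]
        exact ((hall' j).2).symm
      
end ExecPi

/-- **equivalence of SUU and SUU*.** Fix a schedule `S` and a time; for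
every decreasing sequence of job subsets `⟨S_1, …, S_t⟩` starting at `J` (written here as
a list `L`, newest set first), the probability that the execution history equals this
sequence is the same under the SUU execution (computed by `suuProb`) and under the SUU*
execution (where each job has an independent uniform threshold `r j ∈ (0,1)`). -/
theorem suu_star_history_equiv {J M : Type} [Fintype J] [Fintype M]
    (I : SUU J M) (S : Schedule J M) (t : ℕ) (L : List (Finset J))
    (hlen : L.length = t + 1) (hchain : List.Chain' (· ⊆ ·) L)
    (hfirst : L.getLast? = some (Finset.univ : Finset J)) :
    unifCube J {r | (I.exec (fun _ _ => False) S r t).2.1 = L} = I.suuProb S L := by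
  rw [suu_exec_eq_pi I S t L hlen hfirst, unifCube, Measure.pi_pi,
    suuProb_eq_prod I S L hfirst]
  refine Finset.prod_congr rfl fun j _ => ?_
  rw [Measure.restrict_apply' measurableSet_Ioo]
  exact (suuA_inv I S j L hchain hfirst).2
end

section
/- For any schedule Σ, the expected makespan of Σ on an SUU instance equals the expected makespan of Σ on the corresponding SUU* instance: E[T_Σ] = E[T*_Σ]. Consequently, a schedule that is an α-approximation for SUU* is an α-approximation for SUU. -/
open MeasureTheory ENNReal

namespace SUU

variable {J M : Type} [Fintype J] [Fintype M]

open Classical in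
/-- The expected makespan of schedule `S` under the original (per-step coin-flipping) SUU
execution, computed as `∑_{t≥0} P(T > t)`, where `P(T > t)` sums `suuProb` over all
histories of length `t+1` whose current surviving set is nonempty. -/
noncomputable def suuExpMakespan (I : SUU J M) (S : Schedule J M) : ℝ≥0∞ :=
  ∑' t : ℕ, ∑' L : List (Finset J),
    if L.length = t + 1 ∧ L.headI ≠ ∅ then I.suuProb S L else 0

end SUU

namespace SUUProof

open MeasureTheory ENNReal

set_option linter.unusedSectionVars false

/-- `pw w = 2^{-w}` in `ℝ≥0∞`. -/
noncomputable def pw (w : ℝ≥0∞) : ℝ≥0∞ :=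
  if w = ⊤ then 0 else ENNReal.ofReal ((2:ℝ) ^ (-w.toReal))

lemma pw_zero : pw 0 = 1 := by simp [pw]

lemma pw_le_one (w : ℝ≥0∞) : pw w ≤ 1 := by
  unfold pw
  split
  · exact zero_le_one
  · rw [← ENNReal.ofReal_one]
    exact ENNReal.ofReal_le_ofReal
      (Real.rpow_le_one_of_one_le_of_nonpos one_le_two (neg_nonpos.2 ENNReal.toReal_nonneg))

lemma pw_ne_top (w : ℝ≥0∞) : pw w ≠ ⊤ := ((pw_le_one w).trans_lt one_lt_top).ne

lemma pw_top : pw ⊤ = 0 := by simp [pw]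

lemma pw_add (a b : ℝ≥0∞) : pw (a + b) = pw a * pw b := by
  rcases eq_or_ne a ⊤ with ha | ha
  · simp [ha, pw_top, pw]
  rcases eq_or_ne b ⊤ with hb | hb
  · simp [hb, pw_top, pw, ha]
  have hab : a + b ≠ ⊤ := by simp [ha, hb]
  simp only [pw, ha, hb, hab, if_false]
  rw [ENNReal.toReal_add ha hb, neg_add, Real.rpow_add (by norm_num),
    ENNReal.ofReal_mul (Real.rpow_nonneg (by norm_num) _)]

lemma pw_anti {a b : ℝ≥0∞} (h : a ≤ b) : pw b ≤ pw a := by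
  rcases eq_or_ne b ⊤ with hb | hb
  · simp [hb, pw_top]
  have ha : a ≠ ⊤ := (h.trans_lt (lt_top_iff_ne_top.2 hb)).ne
  simp only [pw, ha, hb, if_false]
  exact ENNReal.ofReal_le_ofReal <|
    (Real.rpow_le_rpow_left_iff one_lt_two).2 (neg_le_neg ((ENNReal.toReal_le_toReal ha hb).2 h))

/-- The threshold map. -/
noncomputable def Tm (x : ℝ) : ℝ≥0∞ := ENNReal.ofReal (-Real.logb 2 x)

lemma measurable_Tm : Measurable Tm := by
  unfold Tm Real.logb
  exact ENNReal.measurable_ofReal.comp ((Real.measurable_log.div_const _).neg)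

lemma measurableSet_Tm_gt (c : ℝ≥0∞) : MeasurableSet {x : ℝ | c < Tm x} :=
  measurable_Tm measurableSet_Ioi

/-- volume of the survival set. -/
lemma vol_surv (c : ℝ≥0∞) :
    volume ({x : ℝ | c < Tm x} ∩ Set.Ioo 0 1) = pw c := by
  rcases eq_or_ne c ⊤ with hc | hc
  · have : {x : ℝ | (⊤:ℝ≥0∞) < Tm x} = ∅ := by
      ext x; simp [Tm]
    simp [hc, this, pw_top]
  · have key : {x : ℝ | c < Tm x} ∩ Set.Ioo 0 1 = Set.Ioo 0 ((2:ℝ) ^ (-c.toReal)) := by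
      ext x
      simp only [Set.mem_inter_iff, Set.mem_setOf_eq, Set.mem_Ioo, Tm]
      constructor
      · rintro ⟨hlt, hx0, hx1⟩
        refine ⟨hx0, ?_⟩
        rw [ENNReal.lt_ofReal_iff_toReal_lt hc] at hlt
        exact (Real.logb_lt_iff_lt_rpow one_lt_two hx0).1
          (show Real.logb 2 x < -c.toReal by linarith)
      · rintro ⟨hx0, hxlt⟩
        have hle1 : (2:ℝ) ^ (-c.toReal) ≤ 1 :=
          Real.rpow_le_one_of_one_le_of_nonpos one_le_two (neg_nonpos.2 ENNReal.toReal_nonneg)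
        have hx1 : x < 1 := lt_of_lt_of_le hxlt hle1
        refine ⟨?_, hx0, hx1⟩
        rw [ENNReal.lt_ofReal_iff_toReal_lt hc]
        have := (Real.logb_lt_iff_lt_rpow one_lt_two hx0).2 hxlt
        linarith
    rw [key, Real.volume_Ioo, sub_zero]
    simp [pw, hc]

variable {J M : Type} [Fintype J] [Fintype M]

lemma ofReal_q_eq_pw_ell (I : SUU J M) (i : M) (j : J) :
    ENNReal.ofReal (I.q i j) = pw (I.ell i j) := by
  rcases eq_or_ne (I.q i j) 0 with h0 | h0
  · simp [h0, SUU.ell, pw_top]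
  · have hq0 : 0 < I.q i j := lt_of_le_of_ne (I.q_nonneg i j) (Ne.symm h0)
    have hq1 : I.q i j ≤ 1 := I.q_le_one i j
    have hlb : Real.logb 2 (I.q i j) ≤ 0 := Real.logb_nonpos one_lt_two hq0.le hq1
    have hnn : 0 ≤ -Real.logb 2 (I.q i j) := by linarith
    simp only [SUU.ell, h0, if_false, pw, ENNReal.ofReal_ne_top, if_false,
      ENNReal.toReal_ofReal hnn, neg_neg]
    rw [Real.rpow_logb (by norm_num) (by norm_num) hq0]

lemma prod_ofReal_q (I : SUU J M) (j : J) (A : Finset M) :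
    ∏ i ∈ A, ENNReal.ofReal (I.q i j) = pw (∑ i ∈ A, I.ell i j) := by
  classical
  induction A using Finset.cons_induction with
  | empty => simp [pw_zero]
  | cons a s ha ih => rw [Finset.prod_cons, Finset.sum_cons, pw_add, ih, ofReal_q_eq_pw_ell]

open Classical in
/-- Deterministic accumulated weight along a history. -/
noncomputable def Wt (I : SUU J M) (S : Schedule J M) : List (Finset J) → J → ℝ≥0∞
  | [], _ => 0
  | [_], _ => 0
  | _ :: cur :: h, j =>
      Wt I S (cur :: h) j + (if j ∈ cur then ∑ i ∈ S (cur :: h) j, I.ell i j else 0)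

open Classical in
/-- Per-job condition on the hidden value characterizing a given history. -/
def Cj (I : SUU J M) (S : Schedule J M) : List (Finset J) → J → ℝ → Prop
  | [], _, _ => True
  | [S1], _, _ => S1 = Finset.univ
  | S' :: cur :: h, j, x =>
      Cj I S (cur :: h) j x ∧
        (j ∈ S' ↔ (j ∈ cur ∧ Wt I S (S' :: cur :: h) j < Tm x))

open Classical in
/-- Per-job probability factor for a given history. -/
noncomputable def fj (I : SUU J M) (S : Schedule J M) : List (Finset J) → J → ℝ≥0∞
  | [], _ => 1
  | [S1], _ => if S1 = Finset.univ then 1 else 0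
  | S' :: cur :: h, j =>
      (if j ∈ cur then
        (if j ∈ S' then ∏ i ∈ S (cur :: h) j, ENNReal.ofReal (I.q i j)
         else 1 - ∏ i ∈ S (cur :: h) j, ENNReal.ofReal (I.q i j))
       else if j ∈ S' then 0 else 1) * fj I S (cur :: h) j

variable (I : SUU J M) (S : Schedule J M)

lemma Cj_last : ∀ (L : List (Finset J)) (j : J) (x : ℝ) (hne : L ≠ []),
    Cj I S L j x → L.getLast hne = Finset.univ
  | [S1], j, x, _, hc => hc
  | S' :: cur :: h, j, x, _, hc => by
      rw [List.getLast_cons (List.cons_ne_nil _ _)]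
      exact Cj_last (cur :: h) j x (List.cons_ne_nil _ _) hc.1

lemma fj_last (L : List (Finset J)) (j : J) (hne : L ≠ [])
    (hlast : L.getLast hne ≠ Finset.univ) : fj I S L j = 0 := by
  induction L with
  | nil => exact absurd rfl hne
  | cons S' tail ih =>
    cases tail with
    | nil =>
      simp only [List.getLast_singleton] at hlast
      simp [fj, hlast]
    | cons cur h =>
      rw [List.getLast_cons (List.cons_ne_nil _ _)] at hlast
      rw [fj, ih (List.cons_ne_nil _ _) hlast, mul_zero]

end SUUProof
namespace SUUProof

set_option linter.unusedSectionVars false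

variable {J M : Type} [Fintype J] [Fintype M] (I : SUU J M) (S : Schedule J M)

open MeasureTheory ENNReal

lemma fj_last' (L : List (Finset J)) (j : J) (hne : L ≠ [])
    (hlast : L.getLast? ≠ some Finset.univ) : fj I S L j = 0 := by
  refine fj_last I S L j hne ?_
  rw [List.getLast?_eq_getLast hne] at hlast
  exact fun hc => hlast (by rw [hc])

lemma Cj_set_empty (L : List (Finset J)) (j : J) (hne : L ≠ [])
    (hlast : L.getLast? ≠ some Finset.univ) : {x : ℝ | Cj I S L j x} = ∅ := by
  ext x
  simp only [Set.mem_setOf_eq, Set.mem_empty_iff_false, iff_false]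
  intro hc
  rw [List.getLast?_eq_getLast hne] at hlast
  exact hlast (by rw [Cj_last I S L j x hne hc])

lemma Tm_pos {x : ℝ} (hx0 : 0 < x) (hx1 : x < 1) : 0 < Tm x :=
  ENNReal.ofReal_pos.2 (by have := Real.logb_neg one_lt_two hx0 hx1; linarith)

lemma Wt_le_cons (S' cur : Finset J) (h : List (Finset J)) (j : J) :
    Wt I S (cur :: h) j ≤ Wt I S (S' :: cur :: h) j := by
  rw [Wt]; exact le_self_add

lemma master (j : J) (L : List (Finset J)) (hne : L ≠ []) :
    MeasurableSet {x : ℝ | Cj I S L j x} ∧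
    volume ({x : ℝ | Cj I S L j x} ∩ Set.Ioo 0 1) = fj I S L j ∧
    (L.getLast? = some Finset.univ → (∀ A ∈ L, j ∈ A) →
      ({x : ℝ | Cj I S L j x} ∩ Set.Ioo 0 1 = {x | Wt I S L j < Tm x} ∩ Set.Ioo 0 1 ∧
       fj I S L j = pw (Wt I S L j))) ∧
    (j ∈ L.headI → ¬(∀ A ∈ L, j ∈ A) → fj I S L j = 0) := by
  classical
  induction L with
  | nil => exact absurd rfl hne
  | cons S' tail ih =>
    cases tail with
    | nil =>
      by_cases hS : S' = Finset.univ
      · subst hS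
        have hset : {x : ℝ | Cj I S [Finset.univ] j x} = Set.univ := by
          ext x; simp [Cj]
        have hWt : Wt I S [(Finset.univ : Finset J)] j = 0 := rfl
        refine ⟨by rw [hset]; exact MeasurableSet.univ, ?_, ?_, ?_⟩
        · rw [hset, Set.univ_inter, Real.volume_Ioo]
          simp [fj]
        · intro _ _
          constructor
          · rw [hset, Set.univ_inter, hWt]
            ext x
            simp only [Set.mem_inter_iff, Set.mem_setOf_eq, Set.mem_Ioo]
            constructor
            · rintro ⟨hx0, hx1⟩
              exact ⟨Tm_pos hx0 hx1, hx0, hx1⟩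
            · rintro ⟨-, hx⟩
              exact hx
          · simp [fj, hWt, pw_zero]
        · intro _ hnall
          exact absurd (by simp) hnall
      · have hset : {x : ℝ | Cj I S [S'] j x} = ∅ := by
          ext x; simp [Cj, hS]
        refine ⟨by rw [hset]; exact MeasurableSet.empty, ?_, ?_, ?_⟩
        · rw [hset, Set.empty_inter, measure_empty]
          simp [fj, hS]
        · intro hv
          simp only [List.getLast?_singleton, Option.some.injEq] at hv
          exact absurd hv hS
        · intro _ _
          simp [fj, hS]

    | cons cur h =>
      obtain ⟨ihMeas, ihVol, ihAlive, ihDead⟩ := ih (List.cons_ne_nil _ _)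
      have hCL : {x : ℝ | Cj I S (S' :: cur :: h) j x} =
          {x | Cj I S (cur :: h) j x} ∩
          {x : ℝ | (j ∈ S' ↔ (j ∈ cur ∧ Wt I S (S' :: cur :: h) j < Tm x))} := by
        ext x; simp [Cj]
      have hCondMeas :
          MeasurableSet {x : ℝ | (j ∈ S' ↔ (j ∈ cur ∧ Wt I S (S' :: cur :: h) j < Tm x))} := by
        by_cases hS : j ∈ S' <;> by_cases hc : j ∈ cur
        · simpa [hS, hc] using measurableSet_Tm_gt (Wt I S (S' :: cur :: h) j)
        · simp [hS, hc]
        · have he : {x : ℝ | (j ∈ S' ↔ (j ∈ cur ∧ Wt I S (S' :: cur :: h) j < Tm x))}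
              = {x : ℝ | Wt I S (S' :: cur :: h) j < Tm x}ᶜ := by
            ext x; simp [hS, hc]
          rw [he]; exact (measurableSet_Tm_gt _).compl
        · simp [hS, hc]
      have hMeas : MeasurableSet {x : ℝ | Cj I S (S' :: cur :: h) j x} := by
        rw [hCL]; exact ihMeas.inter hCondMeas
      have hfL : fj I S (S' :: cur :: h) j = (if j ∈ cur then
            (if j ∈ S' then ∏ i ∈ S (cur :: h) j, ENNReal.ofReal (I.q i j)
             else 1 - ∏ i ∈ S (cur :: h) j, ENNReal.ofReal (I.q i j))
           else if j ∈ S' then 0 else 1) * fj I S (cur :: h) j := rfl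
      by_cases hv : (S' :: cur :: h).getLast? = some Finset.univ
      · have hvtail : (cur :: h).getLast? = some Finset.univ := by
          rwa [List.getLast?_cons_cons] at hv
        by_cases hcur : j ∈ cur
        · by_cases hall : ∀ A ∈ cur :: h, j ∈ A
          · obtain ⟨hsetEq, hfEq⟩ := ihAlive hvtail hall
            have hle : ∀ x : ℝ, Wt I S (S' :: cur :: h) j < Tm x →
                Wt I S (cur :: h) j < Tm x :=
              fun x hx => lt_of_le_of_lt (Wt_le_cons I S S' cur h j) hx
            have hWtL : Wt I S (S' :: cur :: h) j =
                ∑ i ∈ S (cur :: h) j, I.ell i j + Wt I S (cur :: h) j := by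
              rw [Wt, if_pos hcur, add_comm]
            by_cases hS : j ∈ S'
            · -- job survives this step
              have hCond :
                  {x : ℝ | (j ∈ S' ↔ (j ∈ cur ∧ Wt I S (S' :: cur :: h) j < Tm x))}
                  = {x : ℝ | Wt I S (S' :: cur :: h) j < Tm x} := by
                ext x; simp [hS, hcur]
              have hset2 : {x : ℝ | Cj I S (S' :: cur :: h) j x} ∩ Set.Ioo 0 1 =
                  {x : ℝ | Wt I S (S' :: cur :: h) j < Tm x} ∩ Set.Ioo 0 1 := by
                rw [hCL, hCond, Set.inter_right_comm, hsetEq]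
                ext x
                simp only [Set.mem_inter_iff, Set.mem_setOf_eq]
                constructor
                · rintro ⟨⟨-, hx⟩, hL⟩; exact ⟨hL, hx⟩
                · rintro ⟨hL, hx⟩; exact ⟨⟨hle x hL, hx⟩, hL⟩
              have hfeq2 : fj I S (S' :: cur :: h) j = pw (Wt I S (S' :: cur :: h) j) := by
                rw [hfL, if_pos hcur, if_pos hS, hfEq, prod_ofReal_q, hWtL, pw_add]
              refine ⟨hMeas, ?_, fun _ _ => ⟨hset2, hfeq2⟩, ?_⟩
              · rw [hset2, vol_surv, hfeq2]
              · intro _ hnall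
                refine absurd (fun A hA => ?_) hnall
                rcases List.mem_cons.1 hA with rfl | hA
                · exact hS
                · exact hall A hA
            · -- job dies this step
              have hCond :
                  {x : ℝ | (j ∈ S' ↔ (j ∈ cur ∧ Wt I S (S' :: cur :: h) j < Tm x))}
                  = {x : ℝ | Wt I S (S' :: cur :: h) j < Tm x}ᶜ := by
                ext x; simp [hS, hcur]
              have e1 : {x : ℝ | Cj I S (S' :: cur :: h) j x} ∩ Set.Ioo 0 1 =
                  ({x : ℝ | Wt I S (cur :: h) j < Tm x} ∩ Set.Ioo 0 1) \
                  ({x : ℝ | Wt I S (S' :: cur :: h) j < Tm x} ∩ Set.Ioo 0 1) := by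
                rw [hCL, hCond, Set.inter_right_comm, hsetEq]
                ext x
                simp only [Set.mem_inter_iff, Set.mem_setOf_eq, Set.mem_diff,
                  Set.mem_compl_iff]
                tauto
              have hsubB : {x : ℝ | Wt I S (S' :: cur :: h) j < Tm x} ∩ Set.Ioo 0 1 ⊆
                  {x : ℝ | Wt I S (cur :: h) j < Tm x} ∩ Set.Ioo 0 1 :=
                fun x hx => ⟨hle x hx.1, hx.2⟩
              have hmB : MeasurableSet
                  ({x : ℝ | Wt I S (S' :: cur :: h) j < Tm x} ∩ Set.Ioo 0 1) :=
                (measurableSet_Tm_gt _).inter measurableSet_Ioo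
              have hfinB :
                  volume ({x : ℝ | Wt I S (S' :: cur :: h) j < Tm x} ∩ Set.Ioo 0 1) ≠ ⊤ := by
                rw [vol_surv]; exact pw_ne_top _
              have hvol : volume ({x : ℝ | Cj I S (S' :: cur :: h) j x} ∩ Set.Ioo 0 1) =
                  pw (Wt I S (cur :: h) j) - pw (Wt I S (S' :: cur :: h) j) := by
                rw [e1, measure_diff hsubB hmB.nullMeasurableSet hfinB, vol_surv, vol_surv]
              have hfeq2 : fj I S (S' :: cur :: h) j =
                  pw (Wt I S (cur :: h) j) - pw (Wt I S (S' :: cur :: h) j) := by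
                rw [hfL, if_pos hcur, if_neg hS, hfEq, prod_ofReal_q,
                  ENNReal.sub_mul (fun _ _ => pw_ne_top _), one_mul, ← pw_add, ← hWtL]
              refine ⟨hMeas, ?_, ?_, ?_⟩
              · rw [hvol, hfeq2]
              · intro _ hall'
                exact absurd (hall' S' List.mem_cons_self) hS
              · intro hj _
                exact absurd hj hS
          · -- job invalid / already inconsistent in the tail
            have hdead : fj I S (cur :: h) j = 0 := ihDead hcur hall
            have hvt : volume ({x : ℝ | Cj I S (cur :: h) j x} ∩ Set.Ioo 0 1) = 0 := by
              rw [ihVol, hdead]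
            have hv0 : volume ({x : ℝ | Cj I S (S' :: cur :: h) j x} ∩ Set.Ioo 0 1) = 0 := by
              refine le_antisymm (le_trans (measure_mono ?_) hvt.le) zero_le
              rw [hCL]
              exact Set.inter_subset_inter_left _ Set.inter_subset_left
            refine ⟨hMeas, ?_, ?_, ?_⟩
            · rw [hv0, hfL, hdead, mul_zero]
            · intro _ hall'
              exact absurd (fun A hA => hall' A (List.mem_cons_of_mem _ hA)) hall
            · intro _ _
              rw [hfL, hdead, mul_zero]
        · by_cases hS : j ∈ S'
          · -- impossible: job reappears
            have hCond :
                {x : ℝ | (j ∈ S' ↔ (j ∈ cur ∧ Wt I S (S' :: cur :: h) j < Tm x))}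
                = (∅ : Set ℝ) := by
              ext x; simp [hS, hcur]
            have hsetE : {x : ℝ | Cj I S (S' :: cur :: h) j x} = ∅ := by
              rw [hCL, hCond, Set.inter_empty]
            have hf0 : fj I S (S' :: cur :: h) j = 0 := by
              rw [hfL, if_neg hcur, if_pos hS, zero_mul]
            refine ⟨hMeas, ?_, ?_, fun _ _ => hf0⟩
            · rw [hsetE, Set.empty_inter, measure_empty, hf0]
            · intro _ hall'
              exact absurd (hall' cur (List.mem_cons_of_mem _ List.mem_cons_self)) hcur
          · -- job stays dead
            have hCond :
                {x : ℝ | (j ∈ S' ↔ (j ∈ cur ∧ Wt I S (S' :: cur :: h) j < Tm x))}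
                = (Set.univ : Set ℝ) := by
              ext x; simp [hS, hcur]
            have hsetE : {x : ℝ | Cj I S (S' :: cur :: h) j x} =
                {x : ℝ | Cj I S (cur :: h) j x} := by
              rw [hCL, hCond, Set.inter_univ]
            have hf1 : fj I S (S' :: cur :: h) j = fj I S (cur :: h) j := by
              rw [hfL, if_neg hcur, if_neg hS, one_mul]
            refine ⟨hMeas, ?_, ?_, ?_⟩
            · rw [hsetE, ihVol, hf1]
            · intro _ hall'
              exact absurd (hall' cur (List.mem_cons_of_mem _ List.mem_cons_self)) hcur
            · intro hj _
              exact absurd hj hS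
      · have hsetE : {x : ℝ | Cj I S (S' :: cur :: h) j x} = ∅ :=
          Cj_set_empty I S _ j (List.cons_ne_nil _ _) hv
        have hf0 : fj I S (S' :: cur :: h) j = 0 :=
          fj_last' I S _ j (List.cons_ne_nil _ _) hv
        refine ⟨by rw [hsetE]; exact MeasurableSet.empty, ?_, fun hvv => absurd hvv hv,
          fun _ _ => hf0⟩
        rw [hsetE, Set.empty_inter, measure_empty, hf0]

end SUUProof
namespace SUUProof

set_option linter.unusedSectionVars false

variable {J M : Type} [Fintype J] [Fintype M] (I : SUU J M) (S : Schedule J M)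

open MeasureTheory ENNReal

lemma suuProb_eq_prod (L : List (Finset J)) (hne : L ≠ []) :
    I.suuProb S L = ∏ j : J, fj I S L j := by
  classical
  induction L with
  | nil => exact absurd rfl hne
  | cons S' tail ih =>
    cases tail with
    | nil =>
      by_cases hS : S' = Finset.univ
      · simp [SUU.suuProb, fj, hS]
      · have hJ : Nonempty J := by
          by_contra hJ
          exact hS (Finset.eq_univ_iff_forall.2 fun x => absurd ⟨x⟩ hJ)
        obtain ⟨x⟩ := hJ
        rw [Finset.prod_eq_zero (Finset.mem_univ x) (by simp [fj, hS])]
        simp [SUU.suuProb, hS]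
    | cons cur h =>
      have e : I.suuProb S (S' :: cur :: h) =
          (∏ j : J, (if j ∈ cur then
            (if j ∈ S' then ∏ i ∈ S (cur :: h) j, ENNReal.ofReal (I.q i j)
             else 1 - ∏ i ∈ S (cur :: h) j, ENNReal.ofReal (I.q i j))
           else if j ∈ S' then 0 else 1)) * I.suuProb S (cur :: h) := rfl
      rw [e, ih (List.cons_ne_nil _ _), ← Finset.prod_mul_distrib]
      exact Finset.prod_congr rfl fun j _ => rfl

/-- The SUU* execution with trivial precedence. -/
noncomputable def ex (r : J → ℝ) (t : ℕ) : Finset J × List (Finset J) × (J → ℝ≥0∞) :=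
  I.exec (fun _ _ => False) S r t

open Classical in
lemma ex_succ (r : J → ℝ) (t : ℕ) :
    ex I S r (t + 1) =
      ((ex I S r t).1.filter (fun j =>
        ((ex I S r t).2.2 j + (if j ∈ (ex I S r t).1 then
          ∑ i ∈ S ((ex I S r t).2.1) j, I.ell i j else 0)) < Tm (r j)),
       ((ex I S r t).1.filter (fun j =>
        ((ex I S r t).2.2 j + (if j ∈ (ex I S r t).1 then
          ∑ i ∈ S ((ex I S r t).2.1) j, I.ell i j else 0)) < Tm (r j))) ::
          (ex I S r t).2.1,
       fun j => (ex I S r t).2.2 j + (if j ∈ (ex I S r t).1 then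
          ∑ i ∈ S ((ex I S r t).2.1) j, I.ell i j else 0)) := by
  show I.exec (fun _ _ => False) S r (t + 1) = _
  rw [SUU.exec]
  simp only [false_implies, implies_true, and_true, Tm]
  rfl

lemma ex_spec (r : J → ℝ) (t : ℕ) :
    (ex I S r t).2.1.length = t + 1 ∧
    (ex I S r t).2.1.headI = (ex I S r t).1 ∧
    ∀ j, (ex I S r t).2.2 j = Wt I S ((ex I S r t).2.1) j := by
  classical
  induction t with
  | zero => exact ⟨rfl, rfl, fun j => rfl⟩
  | succ t ih =>
    obtain ⟨hlen, hhead, hw⟩ := ih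
    obtain ⟨a, l, hal⟩ : ∃ a l, (ex I S r t).2.1 = a :: l := by
      cases hE : (ex I S r t).2.1 with
      | nil => rw [hE] at hlen; simp at hlen
      | cons a l => exact ⟨a, l, rfl⟩
    have hcur : (ex I S r t).1 = a := by rw [← hhead, hal]; rfl
    refine ⟨?_, ?_, ?_⟩
    · rw [ex_succ]
      simpa using hlen
    · rw [ex_succ]
      rfl
    · intro j
      rw [ex_succ]
      simp only
      rw [hal, hw j, hal]
      rw [show Wt I S (Finset.filter _ (ex I S r t).1 :: a :: l) j =
        Wt I S (a :: l) j + (if j ∈ a then ∑ i ∈ S (a :: l) j, I.ell i j else 0) from rfl]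
      rw [hcur]

lemma hist_iff (r : J → ℝ) : ∀ (t : ℕ) (L : List (Finset J)), L.length = t + 1 →
    ((ex I S r t).2.1 = L ↔ ∀ j, Cj I S L j (r j)) := by
  classical
  intro t
  induction t with
  | zero =>
    intro L hL
    obtain ⟨S1, rfl⟩ : ∃ S1, L = [S1] := by
      cases L with
      | nil => simp at hL
      | cons a l =>
        cases l with
        | nil => exact ⟨a, rfl⟩
        | cons b l' => simp at hL
    constructor
    · intro hE j
      have : S1 = Finset.univ := by
        have : ([Finset.univ] : List (Finset J)) = [S1] := hE
        exact (List.cons_eq_cons.1 this).1.symm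
      exact this
    · intro hj
      have hS1 : S1 = Finset.univ := by
        rcases isEmpty_or_nonempty J with hJ | ⟨⟨j⟩⟩
        · exact Finset.eq_univ_iff_forall.2 fun x => (hJ.false x).elim
        · exact hj j
      rw [hS1]; rfl
  | succ t ih =>
    intro L hL
    obtain ⟨S', cur, h, rfl⟩ : ∃ S' cur h, L = S' :: cur :: h := by
      cases L with
      | nil => simp at hL
      | cons a l =>
        cases l with
        | nil => simp at hL
        | cons b l' => exact ⟨a, b, l', rfl⟩
    have hlen' : (cur :: h).length = t + 1 := by
      simp only [List.length_cons] at hL ⊢; omega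
    have ihL := ih (cur :: h) hlen'
    -- the key translation, given that the history at time t is cur :: h
    have key : ∀ (hhist : (ex I S r t).2.1 = cur :: h) (j : J),
        ((j ∈ (ex I S r t).1 ∧
          ((ex I S r t).2.2 j + (if j ∈ (ex I S r t).1 then
            ∑ i ∈ S ((ex I S r t).2.1) j, I.ell i j else 0)) < Tm (r j)) ↔
         (j ∈ cur ∧ Wt I S (S' :: cur :: h) j < Tm (r j))) := by
      intro hhist j
      obtain ⟨hlen, hhead, hw⟩ := ex_spec I S r t
      have hcur : (ex I S r t).1 = cur := by rw [← hhead, hhist]; rfl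
      rw [hcur, hw j, hhist]
      rw [show Wt I S (S' :: cur :: h) j =
        Wt I S (cur :: h) j + (if j ∈ cur then ∑ i ∈ S (cur :: h) j, I.ell i j else 0) from rfl]
    constructor
    · intro hE j
      rw [ex_succ] at hE
      simp only at hE
      obtain ⟨h1, h2⟩ := List.cons_eq_cons.1 hE
      refine ⟨(ihL.1 h2) j, ?_⟩
      rw [← (key h2 j), ← h1, Finset.mem_filter]
    · intro hC
      have hhist : (ex I S r t).2.1 = cur :: h := ihL.2 (fun j => (hC j).1)
      rw [ex_succ]
      simp only
      rw [List.cons_eq_cons]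
      refine ⟨?_, hhist⟩
      ext j
      rw [Finset.mem_filter, key hhist j]
      exact ((hC j).2).symm

end SUUProof
namespace SUUProof

set_option linter.unusedSectionVars false

variable {J M : Type} [Fintype J] [Fintype M] (I : SUU J M) (S : Schedule J M)

open MeasureTheory ENNReal

lemma hist_event (t : ℕ) (L : List (Finset J)) (hL : L.length = t + 1) :
    {r : J → ℝ | (ex I S r t).2.1 = L} =
      Set.univ.pi (fun j => {x : ℝ | Cj I S L j x}) := by
  ext r
  simp only [Set.mem_setOf_eq, Set.mem_univ_pi]
  exact hist_iff I S r t L hL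

lemma hist_event_measurable (t : ℕ) (L : List (Finset J)) :
    MeasurableSet {r : J → ℝ | (ex I S r t).2.1 = L} := by
  by_cases hL : L.length = t + 1
  · rw [hist_event I S t L hL]
    exact MeasurableSet.univ_pi fun j => (master I S j L (by intro h; rw [h] at hL; simp at hL)).1
  · have : {r : J → ℝ | (ex I S r t).2.1 = L} = ∅ := by
      ext r
      simp only [Set.mem_setOf_eq, Set.mem_empty_iff_false, iff_false]
      intro hE
      exact hL (by rw [← hE, (ex_spec I S r t).1])
    rw [this]; exact MeasurableSet.empty

lemma hist_event_measure (t : ℕ) (L : List (Finset J)) :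
    unifCube J {r : J → ℝ | (ex I S r t).2.1 = L} =
      if L.length = t + 1 then I.suuProb S L else 0 := by
  by_cases hL : L.length = t + 1
  · rw [if_pos hL, hist_event I S t L hL, unifCube, Measure.pi_pi,
      suuProb_eq_prod I S L (by intro h; rw [h] at hL; simp at hL)]
    refine Finset.prod_congr rfl fun j _ => ?_
    have hm := (master I S j L (by intro h; rw [h] at hL; simp at hL)).1
    rw [Measure.restrict_apply hm]
    exact (master I S j L (by intro h; rw [h] at hL; simp at hL)).2.1
  · rw [if_neg hL]
    have : {r : J → ℝ | (ex I S r t).2.1 = L} = ∅ := by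
      ext r
      simp only [Set.mem_setOf_eq, Set.mem_empty_iff_false, iff_false]
      intro hE
      exact hL (by rw [← hE, (ex_spec I S r t).1])
    rw [this, measure_empty]

open Classical in
lemma alive_eq_iUnion (t : ℕ) :
    {r : J → ℝ | (ex I S r t).1 ≠ ∅} =
      ⋃ L : List (Finset J),
        (if L.headI ≠ ∅ then {r : J → ℝ | (ex I S r t).2.1 = L} else ∅) := by
  ext r
  simp only [Set.mem_iUnion, Set.mem_setOf_eq]
  constructor
  · intro hne
    refine ⟨(ex I S r t).2.1, ?_⟩
    rw [if_pos (by rw [(ex_spec I S r t).2.1]; exact hne)]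
    exact rfl
  · rintro ⟨L, hL⟩
    by_cases hh : L.headI ≠ ∅
    · rw [if_pos hh] at hL
      have : (ex I S r t).1 = L.headI := by
        rw [← (ex_spec I S r t).2.1, hL]
      rw [this]; exact hh
    · rw [if_neg hh] at hL
      exact absurd hL (Set.notMem_empty r)

lemma alive_measurable (t : ℕ) :
    MeasurableSet {r : J → ℝ | (ex I S r t).1 ≠ ∅} := by
  classical
  rw [alive_eq_iUnion]
  refine MeasurableSet.iUnion fun L => ?_
  by_cases hh : L.headI ≠ ∅
  · rw [if_pos hh]; exact hist_event_measurable I S t L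
  · rw [if_neg hh]; exact MeasurableSet.empty

open Classical in
lemma alive_measure (t : ℕ) :
    unifCube J {r : J → ℝ | (ex I S r t).1 ≠ ∅} =
      ∑' L : List (Finset J),
        if L.length = t + 1 ∧ L.headI ≠ ∅ then I.suuProb S L else 0 := by
  classical
  rw [alive_eq_iUnion]
  rw [measure_iUnion ?_ ?_]
  · refine tsum_congr fun L => ?_
    by_cases hh : L.headI ≠ ∅
    · rw [if_pos hh, hist_event_measure]
      by_cases hL : L.length = t + 1
      · rw [if_pos hL, if_pos ⟨hL, hh⟩]
      · rw [if_neg hL, if_neg (fun hc => hL hc.1)]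
    · rw [if_neg hh, measure_empty, if_neg (fun hc => hh hc.2)]
  · intro L1 L2 hne
    simp only [Function.onFun]
    refine Set.disjoint_left.2 fun r hr1 hr2 => ?_
    by_cases h1 : L1.headI ≠ ∅
    · by_cases h2 : L2.headI ≠ ∅
      · rw [if_pos h1] at hr1
        rw [if_pos h2] at hr2
        exact hne (by rw [← hr1, ← hr2])
      · rw [if_neg h2] at hr2; exact hr2
    · rw [if_neg h1] at hr1; exact hr1
  · intro L
    by_cases hh : L.headI ≠ ∅
    · rw [if_pos hh]; exact hist_event_measurable I S t L
    · rw [if_neg hh]; exact MeasurableSet.empty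

lemma ex_empty_mono (r : J → ℝ) {t t' : ℕ} (h : t ≤ t')
    (he : (ex I S r t).1 = ∅) : (ex I S r t').1 = ∅ := by
  induction h with
  | refl => exact he
  | step h' ih =>
    rename_i t'' _
    rw [ex_succ]
    simp only
    rw [ih, Finset.filter_empty]

open Classical in
lemma makespan_eq_tsum (r : J → ℝ) :
    I.makespan (fun _ _ => False) S r =
      ∑' t : ℕ, if (ex I S r t).1 = ∅ then 0 else 1 := by
  classical
  rw [SUU.makespan]
  by_cases hex : ∃ t, (ex I S r t).1 = ∅
  · set N := Nat.find hex with hN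
    have hNe : (ex I S r N).1 = ∅ := Nat.find_spec hex
    have hiff : ∀ t, ((ex I S r t).1 = ∅) ↔ N ≤ t := by
      intro t
      constructor
      · intro h; exact Nat.find_le h
      · intro h; exact ex_empty_mono I S r h hNe
    have hL : ⨅ (t : ℕ) (_ : (I.exec (fun _ _ => False) S r t).1 = ∅), (t : ℝ≥0∞) = N := by
      apply le_antisymm
      · refine iInf_le_of_le N ?_
        rw [iInf_pos (show (I.exec (fun _ _ => False) S r N).1 = ∅ from hNe)]
      · refine le_iInf fun t => le_iInf fun h => ?_
        exact_mod_cast Nat.cast_le.2 ((hiff t).1 h)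
    rw [hL]
    have hterm : ∀ t : ℕ, (if (ex I S r t).1 = ∅ then (0:ℝ≥0∞) else 1) =
        if t ∈ Finset.range N then 1 else 0 := by
      intro t
      by_cases h : (ex I S r t).1 = ∅
      · have hnlt : ¬ t < N := by
          have := (hiff t).1 h; omega
        rw [if_pos h, if_neg (by simpa [Finset.mem_range] using hnlt)]
      · have hlt : t < N := by
          by_contra hc
          exact h ((hiff t).2 (by omega))
        rw [if_neg h, if_pos (by simpa [Finset.mem_range] using hlt)]
    rw [tsum_congr hterm, tsum_eq_sum (s := Finset.range N) (fun t ht => if_neg ht)]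
    rw [Finset.sum_congr rfl (fun t ht => if_pos ht), Finset.sum_const, Finset.card_range,
      nsmul_eq_mul, mul_one]
  · push_neg at hex
    have h1 : ∀ t : ℕ, ⨅ (_ : (I.exec (fun _ _ => False) S r t).1 = ∅), ((t : ℕ) : ℝ≥0∞) = ⊤ :=
      fun t => iInf_neg (hex t).ne_empty
    rw [iInf_congr h1, iInf_const]
    rw [tsum_congr (fun t => if_neg (hex t).ne_empty)]
    exact (ENNReal.tsum_const_eq_top_of_ne_zero one_ne_zero).symm

end SUUProof
/-- For any schedule `S`, the expected makespan of `S` on an SUU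
instance equals its expected makespan on the corresponding SUU* instance:
`E[T_Σ] = E[T*_Σ]`.  Consequently, a schedule that is an `α`-approximation for SUU* is an
`α`-approximation for SUU. -/
theorem suu_star_expected_makespan_eq {J M : Type} [Fintype J] [Fintype M]
    (I : SUU J M) :
    (∀ S : Schedule J M,
        I.suuExpMakespan S = I.expMakespan (fun _ _ => False) S) ∧
    (∀ (α : ℝ≥0∞) (S : Schedule J M),
        I.expMakespan (fun _ _ => False) S ≤
          α * ⨅ S' : Schedule J M, I.expMakespan (fun _ _ => False) S' →
        I.suuExpMakespan S ≤ α * ⨅ S' : Schedule J M, I.suuExpMakespan S') := by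
  classical
  have main : ∀ S : Schedule J M,
      I.suuExpMakespan S = I.expMakespan (fun _ _ => False) S := by
    intro S
    have step1 : I.expMakespan (fun _ _ => False) S =
        ∑' t : ℕ, unifCube J {r : J → ℝ | (SUUProof.ex I S r t).1 ≠ ∅} := by
      rw [SUU.expMakespan]
      rw [lintegral_congr (SUUProof.makespan_eq_tsum I S)]
      rw [lintegral_tsum (fun t => ?_)]
      · refine tsum_congr fun t => ?_
        have h2 : (fun r : J → ℝ =>
            if (SUUProof.ex I S r t).1 = ∅ then (0:ℝ≥0∞) else 1) =
            Set.indicator {r : J → ℝ | (SUUProof.ex I S r t).1 ≠ ∅} (fun _ => 1) := by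
          funext r
          by_cases h : (SUUProof.ex I S r t).1 = ∅ <;> simp [Set.indicator, h]
        rw [lintegral_congr (fun r => congrFun h2 r),
          lintegral_indicator (SUUProof.alive_measurable I S t), setLIntegral_one]
      · -- AEMeasurable
        have h2 : (fun r : J → ℝ =>
            if (SUUProof.ex I S r t).1 = ∅ then (0:ℝ≥0∞) else 1) =
            Set.indicator {r : J → ℝ | (SUUProof.ex I S r t).1 ≠ ∅} (fun _ => 1) := by
          funext r
          by_cases h : (SUUProof.ex I S r t).1 = ∅ <;> simp [Set.indicator, h]
        rw [h2]
        exact ((measurable_const).indicator (SUUProof.alive_measurable I S t)).aemeasurable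
    have step2 : ∀ t : ℕ, unifCube J {r : J → ℝ | (SUUProof.ex I S r t).1 ≠ ∅} =
        ∑' L : List (Finset J),
          if L.length = t + 1 ∧ L.headI ≠ ∅ then I.suuProb S L else 0 :=
      SUUProof.alive_measure I S
    rw [step1, tsum_congr step2, SUU.suuExpMakespan]
  refine ⟨main, fun α S h => ?_⟩
  rw [main S, iInf_congr main]
  exact h
end
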